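/- arXiv:math/0701332 — 12 statements merged into one kernel-verified Lean document; each statement's English description precedes it below -/
import Mathlib

section
/- For every Boolean function f : {0,1}^n → {0,1} with at least 2 essential variables, there exist distinct indices i, j ∈ {1, …, n} such that the i-th and j-th variables are essential in f and the function f_{i←j} obtained from f by identifying the i-th variable with the j-th variable satisfies ess f_{i←j} ≥ ess f − 2. -/
/-- The `i`-th variable is essential in `f`. -/
def Essential {A B : Type*} {n : ℕ} (f : (Fin n → A) → B) (i : Fin n) : Prop :=
  ∃ (a : Fin n → A) (b : A), f a ≠ f (Function.update a i b)

/-- The essential arity of `f`: the number of essential variables. -/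
noncomputable def essArity {A B : Type*} {n : ℕ} (f : (Fin n → A) → B) : ℕ :=
  Set.ncard {i : Fin n | Essential f i}

/-- The variable identification minor `f_{i←j}`, substituting `x j` for `x i`. -/
def idMinor {A B : Type*} {n : ℕ} (f : (Fin n → A) → B) (i j : Fin n) :
    (Fin n → A) → B :=
  fun x => f (Function.update x i (x j))

/-- The arity gap of `f`:
`ess f − max { ess f_{i←j} : i ≠ j, x_i and x_j essential in f }`. -/
noncomputable def arityGap {A B : Type*} {n : ℕ} (f : (Fin n → A) → B) : ℕ :=
  essArity f -
    sSup {m : ℕ | ∃ i j : Fin n, i ≠ j ∧ Essential f i ∧ Essential f j ∧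
      m = essArity (idMinor f i j)}

namespace SalomaaAux

open Function

variable {n : ℕ}

lemma zmod2_cases : ∀ a : ZMod 2, a = 0 ∨ a = 1 := by decide

lemma update_cancel {x : Fin n → ZMod 2} {t : Fin n} {v : ZMod 2} (h : x t = v) :
    Function.update x t v = x := by
  subst h; exact Function.update_eq_self t x

/-- Essentiality of a Boolean variable via the 0/1 flip. -/
lemma essential_iff_01 (f : (Fin n → ZMod 2) → ZMod 2) (r : Fin n) :
    Essential f r ↔ ∃ x, f (Function.update x r 0) ≠ f (Function.update x r 1) := by
  constructor
  · rintro ⟨a, b, hab⟩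
    rcases zmod2_cases (a r) with h0 | h1
    · rcases zmod2_cases b with hb | hb
      · exact absurd (by rw [hb, update_cancel h0]) hab
      · refine ⟨a, ?_⟩
        rw [update_cancel h0]
        rw [hb] at hab
        exact hab
    · rcases zmod2_cases b with hb | hb
      · refine ⟨a, ?_⟩
        rw [update_cancel h1]
        rw [hb] at hab
        exact hab.symm
      · exact absurd (by rw [hb, update_cancel h1]) hab
  · rintro ⟨x, hx⟩
    exact ⟨Function.update x r 0, 1, by rwa [Function.update_idem]⟩

lemma not_essential_of_invariant (f : (Fin n → ZMod 2) → ZMod 2) (t : Fin n)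
    (h : ∀ x w, f (Function.update x t w) = f x) : ¬ Essential f t := by
  rintro ⟨a, b, hab⟩
  exact hab (h a b).symm

/-- The corner function `x ↦ f (x[i:=a, j:=b, k:=c])`. -/
def corner (f : (Fin n → ZMod 2) → ZMod 2) (i j k : Fin n) (a b c : ZMod 2) :
    (Fin n → ZMod 2) → ZMod 2 :=
  fun x => f (Function.update (Function.update (Function.update x i a) j b) k c)

section Corner

variable (f : (Fin n → ZMod 2) → ZMod 2) {i j k : Fin n}

lemma corner_update_i (a b c : ZMod 2) (x : Fin n → ZMod 2) (w : ZMod 2) :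
    corner f i j k a b c (update x i w) = corner f i j k a b c x := by
  unfold corner
  rw [Function.update_idem]

lemma corner_update_j (hij : i ≠ j) (a b c : ZMod 2) (x : Fin n → ZMod 2) (w : ZMod 2) :
    corner f i j k a b c (update x j w) = corner f i j k a b c x := by
  unfold corner
  rw [Function.update_comm (Ne.symm hij), Function.update_idem]

lemma corner_update_k (hik : i ≠ k) (hjk : j ≠ k) (a b c : ZMod 2) (x : Fin n → ZMod 2) (w : ZMod 2) :
    corner f i j k a b c (update x k w) = corner f i j k a b c x := by
  unfold corner
  rw [Function.update_comm (Ne.symm hik), Function.update_comm (Ne.symm hjk),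
    Function.update_idem]

lemma corner_not_essential_i (a b c : ZMod 2) : ¬ Essential (corner f i j k a b c) i :=
  not_essential_of_invariant _ _ (fun x w => corner_update_i f a b c x w)

lemma corner_not_essential_j (hij : i ≠ j) (a b c : ZMod 2) : ¬ Essential (corner f i j k a b c) j :=
  not_essential_of_invariant _ _ (fun x w => corner_update_j f hij a b c x w)

lemma corner_not_essential_k (hik : i ≠ k) (hjk : j ≠ k) (a b c : ZMod 2) : ¬ Essential (corner f i j k a b c) k :=
  not_essential_of_invariant _ _ (fun x w => corner_update_k f hik hjk a b c x w)

lemma essential_corner_ne (hij : i ≠ j) (hik : i ≠ k) (hjk : j ≠ k) {a b c : ZMod 2} {r : Fin n}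
    (h : Essential (corner f i j k a b c) r) : r ≠ i ∧ r ≠ j ∧ r ≠ k := by
  refine ⟨?_, ?_, ?_⟩
  · rintro rfl; exact corner_not_essential_i f a b c h
  · rintro rfl; exact corner_not_essential_j f hij a b c h
  · rintro rfl; exact corner_not_essential_k f hik hjk a b c h

lemma corner_eval_self (x : Fin n → ZMod 2) :
    f x = corner f i j k (x i) (x j) (x k) x := by
  unfold corner
  rw [Function.update_eq_self, Function.update_eq_self, Function.update_eq_self]

lemma idMinor_ij_eq (hij : i ≠ j) (hik : i ≠ k) (x : Fin n → ZMod 2) :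
    idMinor f i j x = corner f i j k (x j) (x j) (x k) x := by
  unfold idMinor corner
  rw [update_cancel (show (update x i (x j)) j = x j from Function.update_of_ne (Ne.symm hij) _ _),
    update_cancel (show (update x i (x j)) k = x k from Function.update_of_ne (Ne.symm hik) _ _)]

lemma idMinor_ik_eq (hij : i ≠ j) (hik : i ≠ k) (x : Fin n → ZMod 2) :
    idMinor f i k x = corner f i j k (x k) (x j) (x k) x := by
  unfold idMinor corner
  rw [update_cancel (show (update x i (x k)) j = x j from Function.update_of_ne (Ne.symm hij) _ _),
    update_cancel (show (update x i (x k)) k = x k from Function.update_of_ne (Ne.symm hik) _ _)]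

lemma idMinor_jk_eq (hjk : j ≠ k) (x : Fin n → ZMod 2) :
    idMinor f j k x = corner f i j k (x i) (x k) (x k) x := by
  unfold idMinor corner
  rw [Function.update_eq_self,
    update_cancel (show (update x j (x k)) k = x k from Function.update_of_ne (Ne.symm hjk) _ _)]

end Corner

/-- `idMinor f i j` never depends on `x i`. -/
lemma idMinor_not_essential_fst (f : (Fin n → ZMod 2) → ZMod 2) {i j : Fin n} (hij : i ≠ j) :
    ¬ Essential (idMinor f i j) i := by
  apply not_essential_of_invariant
  intro x w
  unfold idMinor
  rw [show (update x i w) j = x j from Function.update_of_ne (Ne.symm hij) _ _,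
    Function.update_idem]

section Sys

variable {i j k : Fin n}
variable {K : ZMod 2 → ZMod 2 → ZMod 2 → (Fin n → ZMod 2) → ZMod 2}
variable {G : (Fin n → ZMod 2) → ZMod 2}

lemma sys_i (hij : i ≠ j) (hik : i ≠ k) (hjk : j ≠ k)
    (hG : ∀ x, G x = K (x i) (x j) (x k) x)
    (hKi : ∀ a b c x w, K a b c (update x i w) = K a b c x)
    (hKj : ∀ a b c x w, K a b c (update x j w) = K a b c x)
    (hKk : ∀ a b c x w, K a b c (update x k w) = K a b c x) : Essential G i ↔ ∃ b c x, K 0 b c x ≠ K 1 b c x := by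
  rw [essential_iff_01]
  constructor
  · rintro ⟨x, hx⟩
    refine ⟨x j, x k, x, ?_⟩
    rw [hG, hG] at hx
    rw [Function.update_self, Function.update_self,
      Function.update_of_ne (Ne.symm hij), Function.update_of_ne (Ne.symm hij),
      Function.update_of_ne (Ne.symm hik), Function.update_of_ne (Ne.symm hik),
      hKi, hKi] at hx
    exact hx
  · rintro ⟨b, c, x, hbc⟩
    refine ⟨update (update x j b) k c, ?_⟩
    have ev : ∀ v, G (update (update (update x j b) k c) i v) = K v b c x := by
      intro v
      rw [hG, Function.update_self,
        Function.update_of_ne (Ne.symm hij), Function.update_of_ne hjk, Function.update_self,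
        Function.update_of_ne (Ne.symm hik), Function.update_self,
        hKi, hKk, hKj]
    rw [ev 0, ev 1]
    exact hbc

lemma sys_j (hij : i ≠ j) (hik : i ≠ k) (hjk : j ≠ k)
    (hG : ∀ x, G x = K (x i) (x j) (x k) x)
    (hKi : ∀ a b c x w, K a b c (update x i w) = K a b c x)
    (hKj : ∀ a b c x w, K a b c (update x j w) = K a b c x)
    (hKk : ∀ a b c x w, K a b c (update x k w) = K a b c x) : Essential G j ↔ ∃ a c x, K a 0 c x ≠ K a 1 c x := by
  rw [essential_iff_01]
  constructor
  · rintro ⟨x, hx⟩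
    refine ⟨x i, x k, x, ?_⟩
    rw [hG, hG] at hx
    rw [Function.update_self, Function.update_self,
      Function.update_of_ne hij, Function.update_of_ne hij,
      Function.update_of_ne (Ne.symm hjk), Function.update_of_ne (Ne.symm hjk),
      hKj, hKj] at hx
    exact hx
  · rintro ⟨a, c, x, hac⟩
    refine ⟨update (update x i a) k c, ?_⟩
    have ev : ∀ v, G (update (update (update x i a) k c) j v) = K a v c x := by
      intro v
      rw [hG, Function.update_self,
        Function.update_of_ne hij, Function.update_of_ne hik, Function.update_self,
        Function.update_of_ne (Ne.symm hjk), Function.update_self,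
        hKj, hKk, hKi]
    rw [ev 0, ev 1]
    exact hac

lemma sys_k (hij : i ≠ j) (hik : i ≠ k) (hjk : j ≠ k)
    (hG : ∀ x, G x = K (x i) (x j) (x k) x)
    (hKi : ∀ a b c x w, K a b c (update x i w) = K a b c x)
    (hKj : ∀ a b c x w, K a b c (update x j w) = K a b c x)
    (hKk : ∀ a b c x w, K a b c (update x k w) = K a b c x) : Essential G k ↔ ∃ a b x, K a b 0 x ≠ K a b 1 x := by
  rw [essential_iff_01]
  constructor
  · rintro ⟨x, hx⟩
    refine ⟨x i, x j, x, ?_⟩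
    rw [hG, hG] at hx
    rw [Function.update_self, Function.update_self,
      Function.update_of_ne hik, Function.update_of_ne hik,
      Function.update_of_ne hjk, Function.update_of_ne hjk,
      hKk, hKk] at hx
    exact hx
  · rintro ⟨a, b, x, hab⟩
    refine ⟨update (update x i a) j b, ?_⟩
    have ev : ∀ v, G (update (update (update x i a) j b) k v) = K a b v x := by
      intro v
      rw [hG, Function.update_self,
        Function.update_of_ne hik, Function.update_of_ne hij, Function.update_self,
        Function.update_of_ne hjk, Function.update_self,
        hKk, hKj, hKi]
    rw [ev 0, ev 1]
    exact hab

lemma sys_out (hij : i ≠ j) (hik : i ≠ k) (hjk : j ≠ k)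
    (hG : ∀ x, G x = K (x i) (x j) (x k) x)
    (hKi : ∀ a b c x w, K a b c (update x i w) = K a b c x)
    (hKj : ∀ a b c x w, K a b c (update x j w) = K a b c x)
    (hKk : ∀ a b c x w, K a b c (update x k w) = K a b c x) (r : Fin n) (hri : r ≠ i) (hrj : r ≠ j) (hrk : r ≠ k) :
    Essential G r ↔ ∃ a b c, Essential (K a b c) r := by
  constructor
  · intro h
    rw [essential_iff_01] at h
    obtain ⟨x, hx⟩ := h
    rw [hG, hG] at hx
    rw [Function.update_of_ne (Ne.symm hri), Function.update_of_ne (Ne.symm hri),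
      Function.update_of_ne (Ne.symm hrj), Function.update_of_ne (Ne.symm hrj),
      Function.update_of_ne (Ne.symm hrk), Function.update_of_ne (Ne.symm hrk)] at hx
    exact ⟨x i, x j, x k, (essential_iff_01 _ _).mpr ⟨x, hx⟩⟩
  · rintro ⟨a, b, c, h⟩
    rw [essential_iff_01] at h
    obtain ⟨x, hx⟩ := h
    rw [essential_iff_01]
    refine ⟨update (update (update x i a) j b) k c, ?_⟩
    have ev : ∀ v, G (update (update (update (update x i a) j b) k c) r v)
        = K a b c (update x r v) := by
      intro v
      rw [hG]
      rw [Function.update_of_ne (Ne.symm hri), Function.update_of_ne (Ne.symm hrj),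
        Function.update_of_ne (Ne.symm hrk)]
      rw [Function.update_of_ne hik, Function.update_of_ne hij, Function.update_self,
        Function.update_of_ne hjk, Function.update_self, Function.update_self]
      rw [Function.update_comm (Ne.symm hrk), Function.update_comm (Ne.symm hrj),
        Function.update_comm (Ne.symm hri), hKk, hKj, hKi]
    rw [ev 0, ev 1]
    exact hx

end Sys


section Key

variable (f : (Fin n → ZMod 2) → ZMod 2)

/-- The key improvement lemma: if identifying `i ← j` kills the essential variable `k`
and moreover causes a second loss (either `j` itself or some other essential `l`),
then one of the minors over `(i,k)` or `(j,k)` has strictly more essential variables. -/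
lemma key {i j k : Fin n} (hij : i ≠ j) (hik : i ≠ k) (hjk : j ≠ k)
    (hkE : Essential f k)
    (hkdead : ¬ Essential (idMinor f i j) k)
    (hsecond : ¬ Essential (idMinor f i j) j ∨
      ∃ l, Essential f l ∧ ¬ Essential (idMinor f i j) l ∧ l ≠ i ∧ l ≠ j ∧ l ≠ k) :
    essArity (idMinor f i j) < essArity (idMinor f i k) ∨
      essArity (idMinor f i j) < essArity (idMinor f j k) := by
  -- systems set-up
  have hGf : ∀ x, f x = corner f i j k (x i) (x j) (x k) x := fun x => corner_eval_self f x
  have hG0 : ∀ x, idMinor f i j x =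
      (fun a b c : ZMod 2 => corner f i j k b b c) (x i) (x j) (x k) x :=
    fun x => idMinor_ij_eq f hij hik x
  have hG1 : ∀ x, idMinor f i k x =
      (fun a b c : ZMod 2 => corner f i j k c b c) (x i) (x j) (x k) x :=
    fun x => idMinor_ik_eq f hij hik x
  have hG2 : ∀ x, idMinor f j k x =
      (fun a b c : ZMod 2 => corner f i j k a c c) (x i) (x j) (x k) x :=
    fun x => idMinor_jk_eq f hjk x
  have hKic : ∀ (a b c : ZMod 2) x w,
      corner f i j k a b c (Function.update x i w) = corner f i j k a b c x :=
    fun a b c x w => corner_update_i f a b c x w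
  have hKjc : ∀ (a b c : ZMod 2) x w,
      corner f i j k a b c (Function.update x j w) = corner f i j k a b c x :=
    fun a b c x w => corner_update_j f hij a b c x w
  have hKkc : ∀ (a b c : ZMod 2) x w,
      corner f i j k a b c (Function.update x k w) = corner f i j k a b c x :=
    fun a b c x w => corner_update_k f hik hjk a b c x w
  -- instantiated system lemmas
  have sysk_f := sys_k hij hik hjk hGf hKic hKjc hKkc
  have sysout_0 := sys_out hij hik hjk hG0 (fun a b c => hKic b b c) (fun a b c => hKjc b b c)
    (fun a b c => hKkc b b c)
  have sysj_0 := sys_j hij hik hjk hG0 (fun a b c => hKic b b c) (fun a b c => hKjc b b c)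
    (fun a b c => hKkc b b c)
  have sysk_0 := sys_k hij hik hjk hG0 (fun a b c => hKic b b c) (fun a b c => hKjc b b c)
    (fun a b c => hKkc b b c)
  have sysout_1 := sys_out hij hik hjk hG1 (fun a b c => hKic c b c) (fun a b c => hKjc c b c)
    (fun a b c => hKkc c b c)
  have sysj_1 := sys_j hij hik hjk hG1 (fun a b c => hKic c b c) (fun a b c => hKjc c b c)
    (fun a b c => hKkc c b c)
  have sysk_1 := sys_k hij hik hjk hG1 (fun a b c => hKic c b c) (fun a b c => hKjc c b c)
    (fun a b c => hKkc c b c)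
  have sysout_2 := sys_out hij hik hjk hG2 (fun a b c => hKic a c c) (fun a b c => hKjc a c c)
    (fun a b c => hKkc a c c)
  have sysi_2 := sys_i hij hik hjk hG2 (fun a b c => hKic a c c) (fun a b c => hKjc a c c)
    (fun a b c => hKkc a c c)
  have sysk_2 := sys_k hij hik hjk hG2 (fun a b c => hKic a c c) (fun a b c => hKjc a c c)
    (fun a b c => hKkc a c c)
  have sysout_f := sys_out hij hik hjk hGf hKic hKjc hKkc
  -- from the death of k in the (i,j)-minor
  have hall0 : ∀ (b : ZMod 2) x, corner f i j k b b 0 x = corner f i j k b b 1 x := by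
    intro b x
    by_contra hne
    exact hkdead (sysk_0.mpr ⟨0, b, x, hne⟩)
  have hc001 : corner f i j k 0 0 1 = corner f i j k 0 0 0 := funext fun x => (hall0 0 x).symm
  have hc111 : corner f i j k 1 1 1 = corner f i j k 1 1 0 := funext fun x => (hall0 1 x).symm
  -- the two relevant corner essential-variable sets
  set sAB : Set (Fin n) := {r : Fin n | Essential (corner f i j k 0 0 0) r} ∪
    {r : Fin n | Essential (corner f i j k 1 1 0) r} with hsAB
  have hiAB : i ∉ sAB := by
    rintro (h | h) <;> exact corner_not_essential_i f _ _ _ h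
  have hjAB : j ∉ sAB := by
    rintro (h | h) <;> exact corner_not_essential_j f hij _ _ _ h
  have hkAB : k ∉ sAB := by
    rintro (h | h) <;> exact corner_not_essential_k f hik hjk _ _ _ h
  -- upper bound for the (i,j)-minor
  have hsub0 : {r : Fin n | Essential (idMinor f i j) r} ⊆ insert j sAB := by
    intro r hr
    have hr' : Essential (idMinor f i j) r := hr
    by_cases hri : r = i
    · subst hri; exact absurd hr' (idMinor_not_essential_fst f hij)
    by_cases hrj : r = j
    · exact Set.mem_insert_iff.mpr (Or.inl hrj)
    by_cases hrk : r = k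
    · subst hrk; exact absurd hr' hkdead
    · obtain ⟨a, b, c, hEss⟩ := (sysout_0 r hri hrj hrk).mp hr'
      refine Set.mem_insert_iff.mpr (Or.inr ?_)
      rcases zmod2_cases b with rfl | rfl <;> rcases zmod2_cases c with rfl | rfl
      · exact Or.inl hEss
      · rw [hc001] at hEss; exact Or.inl hEss
      · exact Or.inr hEss
      · rw [hc111] at hEss; exact Or.inr hEss
  -- lower bounds: `sAB` survives in both other minors (and in the (i,j)-minor)
  have hsubAB0 : sAB ⊆ {r : Fin n | Essential (idMinor f i j) r} := by
    rintro r (hr | hr)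
    · obtain ⟨hri, hrj, hrk⟩ := essential_corner_ne f hij hik hjk hr
      exact (sysout_0 r hri hrj hrk).mpr ⟨0, 0, 0, hr⟩
    · obtain ⟨hri, hrj, hrk⟩ := essential_corner_ne f hij hik hjk hr
      exact (sysout_0 r hri hrj hrk).mpr ⟨0, 1, 0, hr⟩
  have hsubAB1 : sAB ⊆ {r : Fin n | Essential (idMinor f i k) r} := by
    rintro r (hr | hr)
    · obtain ⟨hri, hrj, hrk⟩ := essential_corner_ne f hij hik hjk hr
      exact (sysout_1 r hri hrj hrk).mpr ⟨0, 0, 0, hr⟩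
    · obtain ⟨hri, hrj, hrk⟩ := essential_corner_ne f hij hik hjk hr
      exact (sysout_1 r hri hrj hrk).mpr ⟨0, 1, 1, by rw [hc111]; exact hr⟩
  have hsubAB2 : sAB ⊆ {r : Fin n | Essential (idMinor f j k) r} := by
    rintro r (hr | hr)
    · obtain ⟨hri, hrj, hrk⟩ := essential_corner_ne f hij hik hjk hr
      exact (sysout_2 r hri hrj hrk).mpr ⟨0, 0, 0, hr⟩
    · obtain ⟨hri, hrj, hrk⟩ := essential_corner_ne f hij hik hjk hr
      exact (sysout_2 r hri hrj hrk).mpr ⟨1, 0, 1, by rw [hc111]; exact hr⟩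
  have hfinAB : sAB.Finite := Set.toFinite _
  have e0eq : essArity (idMinor f i j) = Set.ncard {r : Fin n | Essential (idMinor f i j) r} := rfl
  have e1eq : essArity (idMinor f i k) = Set.ncard {r : Fin n | Essential (idMinor f i k) r} := rfl
  have e2eq : essArity (idMinor f j k) = Set.ncard {r : Fin n | Essential (idMinor f j k) r} := rfl
  rcases hsecond with hjdead | ⟨l, hlE, hldead, hli, hlj, hlk⟩
  · -- Case 1 : `j` is also dead in the (i,j)-minor, so `F₀₀₀ = F₁₁₀`.
    have hsub0' : {r : Fin n | Essential (idMinor f i j) r} ⊆ sAB := by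
      intro r hr
      rcases hsub0 hr with rfl | h
      · exact absurd hr hjdead
      · exact h
    have he0 : essArity (idMinor f i j) ≤ sAB.ncard := by
      rw [e0eq]; exact Set.ncard_le_ncard hsub0' hfinAB
    have hbonus : Essential (idMinor f i k) j ∨ Essential (idMinor f i k) k ∨
        Essential (idMinor f j k) i ∨ Essential (idMinor f j k) k := by
      by_contra hno
      push_neg at hno
      obtain ⟨n1, n2, n3, n4⟩ := hno
      have e1 : ∀ (c : ZMod 2) x, corner f i j k c 0 c x = corner f i j k c 1 c x := by
        intro c x; by_contra hne; exact n1 (sysj_1.mpr ⟨0, c, x, hne⟩)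
      have e3 : ∀ (b : ZMod 2) x, corner f i j k 0 b 0 x = corner f i j k 1 b 1 x := by
        intro b x; by_contra hne; exact n2 (sysk_1.mpr ⟨0, b, x, hne⟩)
      have e5 : ∀ (c : ZMod 2) x, corner f i j k 0 c c x = corner f i j k 1 c c x := by
        intro c x; by_contra hne; exact n3 (sysi_2.mpr ⟨0, c, x, hne⟩)
      have e7 : ∀ (a : ZMod 2) x, corner f i j k a 0 0 x = corner f i j k a 1 1 x := by
        intro a x; by_contra hne; exact n4 (sysk_2.mpr ⟨a, 0, x, hne⟩)
      obtain ⟨a, b, x, hx⟩ := sysk_f.mp hkE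
      rcases zmod2_cases a with rfl | rfl <;> rcases zmod2_cases b with rfl | rfl
      · exact hx (hall0 0 x)
      · exact hx ((e1 0 x).symm.trans (e7 0 x))
      · exact hx ((e5 0 x).symm.trans (e3 0 x))
      · exact hx (hall0 1 x)
    have hstep : ∀ (g : (Fin n → ZMod 2) → ZMod 2) (t : Fin n), t ∉ sAB →
        Essential g t → sAB ⊆ {r : Fin n | Essential g r} →
        sAB.ncard < Set.ncard {r : Fin n | Essential g r} := by
      intro g t ht hgt hsub
      have hins : insert t sAB ⊆ {r : Fin n | Essential g r} := Set.insert_subset hgt hsub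
      have := Set.ncard_le_ncard hins (Set.toFinite _)
      rw [Set.ncard_insert_of_notMem ht hfinAB] at this
      omega
    rcases hbonus with hb | hb | hb | hb
    · left; rw [e1eq]; exact lt_of_le_of_lt he0 (hstep _ j hjAB hb hsubAB1)
    · left; rw [e1eq]; exact lt_of_le_of_lt he0 (hstep _ k hkAB hb hsubAB1)
    · right; rw [e2eq]; exact lt_of_le_of_lt he0 (hstep _ i hiAB hb hsubAB2)
    · right; rw [e2eq]; exact lt_of_le_of_lt he0 (hstep _ k hkAB hb hsubAB2)
  · -- Case 2 : some other essential variable `l` is dead in the (i,j)-minor.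
    have hlAB : l ∉ sAB := fun h => hldead (hsubAB0 h)
    have he0 : essArity (idMinor f i j) ≤ sAB.ncard + 1 := by
      rw [e0eq]
      calc Set.ncard {r : Fin n | Essential (idMinor f i j) r}
          ≤ (insert j sAB).ncard := Set.ncard_le_ncard hsub0 (Set.toFinite _)
        _ ≤ sAB.ncard + 1 := Set.ncard_insert_le j sAB
    have hstep2 : ∀ (g : (Fin n → ZMod 2) → ZMod 2) (t : Fin n), t ∉ sAB → t ≠ l →
        Essential g t → Essential g l → sAB ⊆ {r : Fin n | Essential g r} →
        sAB.ncard + 1 < Set.ncard {r : Fin n | Essential g r} := by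
      intro g t ht htl hgt hgl hsub
      have hins : insert t (insert l sAB) ⊆ {r : Fin n | Essential g r} :=
        Set.insert_subset hgt (Set.insert_subset hgl hsub)
      have hle := Set.ncard_le_ncard hins (Set.toFinite _)
      rw [Set.ncard_insert_of_notMem (by
          simp only [Set.mem_insert_iff, not_or]; exact ⟨htl, ht⟩)
        (hfinAB.insert l), Set.ncard_insert_of_notMem hlAB hfinAB] at hle
      omega
    -- which corner keeps `l` essential?
    obtain ⟨a, b, c, hEss⟩ := (sysout_f l hli hlj hlk).mp hlE
    rcases zmod2_cases a with rfl | rfl <;> rcases zmod2_cases b with rfl | rfl <;>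
      rcases zmod2_cases c with rfl | rfl
    · -- F000 : contradiction with l ∉ sAB
      exact absurd (Or.inl hEss) hlAB
    · -- F001 = F000 : contradiction
      rw [hc001] at hEss; exact absurd (Or.inl hEss) hlAB
    · -- F010 : go left via the (i,k)-minor
      left
      have hgl : Essential (idMinor f i k) l := (sysout_1 l hli hlj hlk).mpr ⟨0, 1, 0, hEss⟩
      have hbon : Essential (idMinor f i k) j ∨ Essential (idMinor f i k) k := by
        by_contra hno
        push_neg at hno
        have e1 : ∀ x, corner f i j k 0 0 0 x = corner f i j k 0 1 0 x := by
          intro x; by_contra hne; exact hno.1 (sysj_1.mpr ⟨0, 0, x, hne⟩)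
        have : Essential (corner f i j k 0 0 0) l := by
          rw [show corner f i j k 0 0 0 = corner f i j k 0 1 0 from funext e1]; exact hEss
        exact hlAB (Or.inl this)
      rw [e1eq]
      rcases hbon with hb | hb
      · exact lt_of_le_of_lt he0 (hstep2 _ j hjAB (Ne.symm hlj) hb hgl hsubAB1)
      · exact lt_of_le_of_lt he0 (hstep2 _ k hkAB (Ne.symm hlk) hb hgl hsubAB1)
    · -- F011 : go right via the (j,k)-minor
      right
      have hgl : Essential (idMinor f j k) l := (sysout_2 l hli hlj hlk).mpr ⟨0, 0, 1, hEss⟩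
      have hbon : Essential (idMinor f j k) i ∨ Essential (idMinor f j k) k := by
        by_contra hno
        push_neg at hno
        have e7 : ∀ x, corner f i j k 0 0 0 x = corner f i j k 0 1 1 x := by
          intro x; by_contra hne; exact hno.2 (sysk_2.mpr ⟨0, 0, x, hne⟩)
        have : Essential (corner f i j k 0 0 0) l := by
          rw [show corner f i j k 0 0 0 = corner f i j k 0 1 1 from funext e7]; exact hEss
        exact hlAB (Or.inl this)
      rw [e2eq]
      rcases hbon with hb | hb
      · exact lt_of_le_of_lt he0 (hstep2 _ i hiAB (Ne.symm hli) hb hgl hsubAB2)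
      · exact lt_of_le_of_lt he0 (hstep2 _ k hkAB (Ne.symm hlk) hb hgl hsubAB2)
    · -- F100 : go right via the (j,k)-minor
      right
      have hgl : Essential (idMinor f j k) l := (sysout_2 l hli hlj hlk).mpr ⟨1, 0, 0, hEss⟩
      have hbon : Essential (idMinor f j k) i ∨ Essential (idMinor f j k) k := by
        by_contra hno
        push_neg at hno
        have e5 : ∀ x, corner f i j k 0 0 0 x = corner f i j k 1 0 0 x := by
          intro x; by_contra hne; exact hno.1 (sysi_2.mpr ⟨0, 0, x, hne⟩)
        have : Essential (corner f i j k 0 0 0) l := by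
          rw [show corner f i j k 0 0 0 = corner f i j k 1 0 0 from funext e5]; exact hEss
        exact hlAB (Or.inl this)
      rw [e2eq]
      rcases hbon with hb | hb
      · exact lt_of_le_of_lt he0 (hstep2 _ i hiAB (Ne.symm hli) hb hgl hsubAB2)
      · exact lt_of_le_of_lt he0 (hstep2 _ k hkAB (Ne.symm hlk) hb hgl hsubAB2)
    · -- F101 : go left via the (i,k)-minor
      left
      have hgl : Essential (idMinor f i k) l := (sysout_1 l hli hlj hlk).mpr ⟨0, 0, 1, hEss⟩
      have hbon : Essential (idMinor f i k) j ∨ Essential (idMinor f i k) k := by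
        by_contra hno
        push_neg at hno
        have e2 : ∀ x, corner f i j k 1 0 1 x = corner f i j k 1 1 1 x := by
          intro x; by_contra hne; exact hno.1 (sysj_1.mpr ⟨0, 1, x, hne⟩)
        have : Essential (corner f i j k 1 1 0) l := by
          rw [← hc111, show corner f i j k 1 1 1 = corner f i j k 1 0 1 from
            funext fun x => (e2 x).symm]
          exact hEss
        exact hlAB (Or.inr this)
      rw [e1eq]
      rcases hbon with hb | hb
      · exact lt_of_le_of_lt he0 (hstep2 _ j hjAB (Ne.symm hlj) hb hgl hsubAB1)
      · exact lt_of_le_of_lt he0 (hstep2 _ k hkAB (Ne.symm hlk) hb hgl hsubAB1)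
    · -- F110 : contradiction with l ∉ sAB
      exact absurd (Or.inr hEss) hlAB
    · -- F111 = F110 : contradiction
      rw [hc111] at hEss; exact absurd (Or.inr hEss) hlAB

end Key

end SalomaaAux

/-- Salomaa's theorem: every Boolean function with at least two essential variables has a
variable identification minor with at least `ess f − 2` essential variables. -/
theorem stmt_1 {n : ℕ} (f : (Fin n → ZMod 2) → ZMod 2) (hf : 2 ≤ essArity f) :
    ∃ i j : Fin n, i ≠ j ∧ Essential f i ∧ Essential f j ∧
      essArity f - 2 ≤ essArity (idMinor f i j) := by
  classical
  open SalomaaAux in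
  have hEeq : essArity f = Set.ncard {r : Fin n | Essential f r} := rfl
  have hfin : ({r : Fin n | Essential f r}).Finite := Set.toFinite _
  have h2 : 1 < ({r : Fin n | Essential f r}).ncard := by omega
  obtain ⟨i0, j0, hi0, hj0, hne0⟩ := (Set.one_lt_ncard_iff hfin).mp h2
  set P : Finset (Fin n × Fin n) :=
    Finset.univ.filter (fun p => p.1 ≠ p.2 ∧ Essential f p.1 ∧ Essential f p.2) with hP
  have hPne : P.Nonempty := by
    refine ⟨(i0, j0), ?_⟩
    simp only [hP, Finset.mem_filter, Finset.mem_univ, true_and]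
    exact ⟨hne0, hi0, hj0⟩
  obtain ⟨p, hpP, hmax⟩ := P.exists_max_image (fun p => essArity (idMinor f p.1 p.2)) hPne
  obtain ⟨i, j⟩ := p
  simp only [hP, Finset.mem_filter, Finset.mem_univ, true_and] at hpP
  obtain ⟨hij, hEi, hEj⟩ := hpP
  refine ⟨i, j, hij, hEi, hEj, ?_⟩
  by_contra hnot
  push_neg at hnot
  -- a generic counting fact
  have hcount : ∀ (u v : Fin n), u ≠ v → Essential f u → Essential f v →
      ({r : Fin n | Essential f r} \ {u, v} ⊆ {r : Fin n | Essential (idMinor f i j) r}) →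
      essArity f - 2 ≤ essArity (idMinor f i j) := by
    intro u v huv hEu hEv hsub
    have huvsub : ({u, v} : Set (Fin n)) ⊆ {r : Fin n | Essential f r} := by
      rintro r (rfl | rfl)
      · exact hEu
      · exact hEv
    have hd : ({r : Fin n | Essential f r} \ {u, v}).ncard
        = ({r : Fin n | Essential f r}).ncard - 2 := by
      rw [Set.ncard_diff huvsub, Set.ncard_pair huv]
    have hle := Set.ncard_le_ncard hsub (Set.toFinite _)
    have e0eq : essArity (idMinor f i j)
        = Set.ncard {r : Fin n | Essential (idMinor f i j) r} := rfl
    omega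
  -- there is an essential variable k killed by the identification
  have hesc : ∃ k, Essential f k ∧ k ≠ i ∧ k ≠ j ∧ ¬ Essential (idMinor f i j) k := by
    by_contra h
    push_neg at h
    refine absurd (hcount i j hij hEi hEj ?_) (by omega)
    rintro r ⟨hrE, hrij⟩
    simp only [Set.mem_insert_iff, Set.mem_singleton_iff, not_or] at hrij
    exact h r hrE hrij.1 hrij.2
  obtain ⟨k, hkE, hki, hkj, hkdead⟩ := hesc
  -- there is a second loss
  have hsecond : ¬ Essential (idMinor f i j) j ∨
      ∃ l, Essential f l ∧ ¬ Essential (idMinor f i j) l ∧ l ≠ i ∧ l ≠ j ∧ l ≠ k := by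
    by_contra h
    push_neg at h
    obtain ⟨hjE, hl⟩ := h
    refine absurd (hcount i k (Ne.symm hki) hEi hkE ?_) (by omega)
    rintro r ⟨hrE, hrik⟩
    simp only [Set.mem_insert_iff, Set.mem_singleton_iff, not_or] at hrik
    by_cases hrj : r = j
    · subst hrj; exact hjE
    · by_contra hrdead
      exact hrik.2 (hl r hrE hrdead hrik.1 hrj)
  have hmain := SalomaaAux.key f hij (Ne.symm hki) (Ne.symm hkj) hkE hkdead hsecond
  rcases hmain with h | h
  · have hmem : (i, k) ∈ P := by
      simp only [hP, Finset.mem_filter, Finset.mem_univ, true_and]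
      exact ⟨Ne.symm hki, hEi, hkE⟩
    have := hmax (i, k) hmem
    simp only at this
    omega
  · have hmem : (j, k) ∈ P := by
      simp only [hP, Finset.mem_filter, Finset.mem_univ, true_and]
      exact ⟨Ne.symm hkj, hEj, hkE⟩
    have := hmax (j, k) hmem
    simp only at this
    omega
end

section
/- Let A be a finite set with exactly k ≥ 2 elements and let B be a set with at least two elements. If f : A^n → B has more than k essential variables, i.e. ess f = m with m > k (after discarding inessential variables one may assume all n variables of f are essential and n > k), then there exist distinct indices i, j ∈ {1, …, n} such that the i-th and j-th variables are essential in f and the variable identification minor f_{i←j} has at least ess f − k essential variables. -/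
namespace Stmt2Aux

variable {A B : Type*} {n : ℕ}

/-- `v` is alive on the diagonal `x i = x j` (single-coordinate change). -/
def M1 (f : (Fin n → A) → B) (i j v : Fin n) : Prop :=
  ∃ (y : Fin n → A) (c : A), y i = y j ∧ f y ≠ f (Function.update y v c)

/-- the pair `{i,j}` is jointly alive on the diagonal `x i = x j`. -/
def PA (f : (Fin n → A) → B) (i j : Fin n) : Prop :=
  ∃ (y : Fin n → A) (c : A), y i = y j ∧
    f y ≠ f (Function.update (Function.update y i c) j c)

lemma M1.symm {f : (Fin n → A) → B} {i j v : Fin n} (h : M1 f i j v) : M1 f j i v := by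
  obtain ⟨y, c, hy, hne⟩ := h
  exact ⟨y, c, hy.symm, hne⟩

/-- dead single-coordinate move. -/
lemma D1 {f : (Fin n → A) → B} {i j v : Fin n} (hdead : ¬ M1 f i j v)
    {y : Fin n → A} (c : A) (hy : y i = y j) :
    f (Function.update y v c) = f y := by
  by_contra h
  exact hdead ⟨y, c, hy, fun h' => h h'.symm⟩

/-- dead pair move. -/
lemma D2 {f : (Fin n → A) → B} {i j : Fin n} (hdead : ¬ PA f i j)
    {y : Fin n → A} (c : A) (hy : y i = y j) :
    f (Function.update (Function.update y i c) j c) = f y := by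
  by_contra h
  exact hdead ⟨y, c, hy, fun h' => h h'.symm⟩

lemma K1 {f : (Fin n → A) → B} {i j v : Fin n} (hij : i ≠ j) (hvi : v ≠ i) (hvj : v ≠ j) :
    Essential (idMinor f i j) v ↔ M1 f i j v := by
  constructor
  · rintro ⟨a, b, hne⟩
    refine ⟨Function.update a i (a j), b, ?_, ?_⟩
    · rw [Function.update_self, Function.update_of_ne (Ne.symm hij)]
    · have h2 : Function.update (Function.update a i (a j)) v b
          = Function.update (Function.update a v b) i ((Function.update a v b) j) := by
        rw [Function.update_of_ne (Ne.symm hvj), Function.update_comm hvi]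
      rw [h2]
      exact hne
  · rintro ⟨y, c, hy, hne⟩
    refine ⟨y, c, ?_⟩
    have h1 : Function.update y i (y j) = y := by
      rw [← hy, Function.update_eq_self]
    have h2 : Function.update (Function.update y v c) i ((Function.update y v c) j)
        = Function.update y v c := by
      rw [Function.update_of_ne (Ne.symm hvj), Function.update_comm hvi, h1]
    show f (Function.update y i (y j)) ≠ f (Function.update (Function.update y v c) i _)
    rw [h1, h2]
    exact hne

lemma K2 {f : (Fin n → A) → B} {i j : Fin n} (hij : i ≠ j) (h : PA f i j) :
    Essential (idMinor f i j) j := by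
  obtain ⟨y, c, hy, hne⟩ := h
  refine ⟨y, c, ?_⟩
  have h1 : Function.update y i (y j) = y := by
    rw [← hy, Function.update_eq_self]
  have h2 : Function.update (Function.update y j c) i ((Function.update y j c) j)
      = Function.update (Function.update y i c) j c := by
    rw [Function.update_self, Function.update_comm (Ne.symm hij)]
  show f (Function.update y i (y j)) ≠ f (Function.update (Function.update y j c) i _)
  rw [h1, h2]
  exact hne

/-- Push lemma: a variable `v` alive on the diagonal `(i,j)` is alive on diagonal
`(α, β)` provided `α` is dead on `(i,j)`. -/
lemma push {f : (Fin n → A) → B} {i j v α β : Fin n}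
    (hdead : ¬ M1 f i j α)
    (hv : M1 f i j v) (hvi : v ≠ i) (hvj : v ≠ j) (hvα : v ≠ α) (hvβ : v ≠ β)
    (hαβ : α ≠ β) : M1 f α β v := by
  obtain ⟨y, c, hy, hne⟩ := hv
  refine ⟨Function.update y α (y β), c, ?_, ?_⟩
  · rw [Function.update_self, Function.update_of_ne (Ne.symm hαβ)]
  · have h1 : f (Function.update y α (y β)) = f y := D1 hdead (y β) hy
    have hy2 : (Function.update y v c) i = (Function.update y v c) j := by
      rw [Function.update_of_ne (Ne.symm hvi), Function.update_of_ne (Ne.symm hvj)]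
      exact hy
    have h2 : f (Function.update (Function.update y v c) α ((Function.update y v c) β))
        = f (Function.update y v c) := D1 hdead _ hy2
    have h3 : Function.update (Function.update y α (y β)) v c
        = Function.update (Function.update y v c) α ((Function.update y v c) β) := by
      rw [Function.update_of_ne (Ne.symm hvβ), Function.update_comm hvα]
    rw [h3, h2, h1]
    exact hne

/-- counting helper -/
lemma card_le_essArity {g : (Fin n → A) → B} (S : Finset (Fin n))
    (hS : ∀ v ∈ S, Essential g v) : S.card ≤ essArity g := by
  have h1 : (S : Set (Fin n)) ⊆ {v | Essential g v} := fun v hv => hS v (by simpa using hv)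
  have := Set.ncard_le_ncard h1 (Set.toFinite _)
  simpa [essArity, Set.ncard_coe_finset] using this

/-- the set of variables (other than `i`, `j`) alive on the diagonal `(i,j)`. -/
noncomputable def M1set (f : (Fin n → A) → B) (i j : Fin n) : Finset (Fin n) :=
  @Finset.filter _ (fun v => v ≠ i ∧ v ≠ j ∧ M1 f i j v) (Classical.decPred _) Finset.univ

lemma mem_M1set {f : (Fin n → A) → B} {i j v : Fin n} :
    v ∈ M1set f i j ↔ v ≠ i ∧ v ≠ j ∧ M1 f i j v := by
  classical
  simp [M1set]

/-- commuting two disjoint double updates -/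
lemma upd4 {ι : Type*} [DecidableEq ι] {β : Type*} (g : ι → β) {a b c d : ι}
    (hab : a ≠ b) (hac : a ≠ c) (had : a ≠ d) (hbc : b ≠ c) (hbd : b ≠ d) (hcd : c ≠ d)
    (va vb vc vd : β) :
    Function.update (Function.update (Function.update (Function.update g a va) b vb) c vc) d vd
    = Function.update (Function.update (Function.update (Function.update g c vc) d vd) a va) b vb := by
  funext x
  simp only [Function.update_apply]
  split_ifs <;> simp_all

end Stmt2Aux

open Stmt2Aux

/-- Generalization of Salomaa's theorem: every `B`-valued function on a `k`-element set
all of whose `n > k` variables are essential has a variable identification minor with at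
least `ess f − k` essential variables. -/
theorem stmt_2 {k n : ℕ} (A B : Type*) [Fintype A] (hA : Fintype.card A = k)
    (hk : 2 ≤ k) (hB : ∃ b₁ b₂ : B, b₁ ≠ b₂)
    (f : (Fin n → A) → B) (hess : ∀ i : Fin n, Essential f i) (hnk : k < n) :
    ∃ i j : Fin n, i ≠ j ∧ Essential f i ∧ Essential f j ∧
      essArity f - k ≤ essArity (idMinor f i j) := by
  classical
  by_contra hcon
  push_neg at hcon
  have hessf : essArity f = n := by
    have h1 : {i : Fin n | Essential f i} = Set.univ := Set.eq_univ_of_forall hess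
    rw [essArity, h1, Set.ncard_univ, Nat.card_eq_fintype_card, Fintype.card_fin]
  have hcon' : ∀ i j : Fin n, i ≠ j → essArity (idMinor f i j) < n - k := by
    intro i j hij
    have := hcon i j hij (hess i) (hess j)
    rwa [hessf] at this
  -- choose a pair maximizing the number of alive variables
  have hn3 : 3 ≤ n := by omega
  have hPSne : (Finset.univ.filter (fun p : Fin n × Fin n => p.1 ≠ p.2)).Nonempty := by
    refine ⟨(⟨0, by omega⟩, ⟨1, by omega⟩), ?_⟩
    simp [Finset.mem_filter, Fin.ext_iff]
  obtain ⟨p₀, hp₀PS, hp₀max⟩ :=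
    Finset.exists_max_image (Finset.univ.filter (fun p : Fin n × Fin n => p.1 ≠ p.2))
      (fun p => (M1set f p.1 p.2).card) hPSne
  set i := p₀.1 with hi
  set j := p₀.2 with hj
  have hij : i ≠ j := by
    have := (Finset.mem_filter.mp hp₀PS).2
    exact this
  set ALF := M1set f i j with hALFdef
  set t := ALF.card with htdef
  have hmax : ∀ a b : Fin n, a ≠ b → (M1set f a b).card ≤ t := by
    intro a b hab
    exact hp₀max (a, b) (by simp [Finset.mem_filter, hab])
  -- basic facts
  have hALF_ess : ∀ v ∈ ALF, Essential (idMinor f i j) v := by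
    intro v hv
    obtain ⟨h1, h2, h3⟩ := mem_M1set.mp hv
    exact (K1 hij h1 h2).mpr h3
  have ht : t < n - k :=
    lt_of_le_of_lt (card_le_essArity ALF hALF_ess) (hcon' i j hij)
  set W := Finset.univ \ ALF with hWdef
  have hWcard : W.card = n - t := by
    rw [hWdef, Finset.card_sdiff_of_subset (Finset.subset_univ _), Finset.card_univ, Fintype.card_fin]
  have hWALF : ∀ x ∈ W, x ∉ ALF := by
    intro x hx
    exact (Finset.mem_sdiff.mp hx).2
  have hneWA : ∀ v ∈ ALF, ∀ x ∈ W, v ≠ x := by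
    intro v hv x hx h
    exact hWALF x hx (h ▸ hv)
  have hiW : ∀ x : Fin n, x ≠ i → x ≠ j → ¬ M1 f i j x → x ∈ W := by
    intro x h1 h2 h3
    refine Finset.mem_sdiff.mpr ⟨Finset.mem_univ x, ?_⟩
    intro hx
    exact h3 (mem_M1set.mp hx).2.2
  have hWdead : ∀ x ∈ W, x ≠ i → x ≠ j → ¬ M1 f i j x := by
    intro x hx h1 h2 h3
    exact hWALF x hx (mem_M1set.mpr ⟨h1, h2, h3⟩)
  -- the "beats the maximum" contradiction
  have hbig : ∀ γ δ : Fin n, γ ≠ δ → ∀ x, x ∉ ALF → x ∈ M1set f γ δ →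
      (∀ v ∈ ALF, v ∈ M1set f γ δ) → False := by
    intro γ δ hγδ x hx hxm hsub
    have h1 : insert x ALF ⊆ M1set f γ δ := by
      intro v hv
      rcases Finset.mem_insert.mp hv with rfl | hv
      · exact hxm
      · exact hsub v hv
    have h2 := Finset.card_le_card h1
    rw [Finset.card_insert_of_notMem hx] at h2
    have h3 := hmax γ δ hγδ
    omega
  -- pushing the alive set to another diagonal
  have hpushALF : ∀ γ δ : Fin n, γ ∈ W → δ ∈ W → γ ≠ i → γ ≠ j → γ ≠ δ →
      ∀ v ∈ ALF, v ∈ M1set f γ δ := by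
    intro γ δ hγW hδW hγi hγj hγδ v hv
    obtain ⟨hvi, hvj, hvM⟩ := mem_M1set.mp hv
    have hγdead : ¬ M1 f i j γ := hWdead γ hγW hγi hγj
    have hvγ : v ≠ γ := hneWA v hv γ hγW
    have hvδ : v ≠ δ := hneWA v hv δ hδW
    exact mem_M1set.mpr ⟨hvγ, hvδ, push hγdead hvM hvi hvj hvγ hvδ hγδ⟩
  -- choose w
  have hw1 : 1 ≤ (W \ {i, j}).card := by
    have h5 := Finset.card_le_card_sdiff_add_card (s := W) (t := ({i, j} : Finset (Fin n)))
    have h6 : ({i, j} : Finset (Fin n)).card ≤ 2 := by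
      have := Finset.card_insert_le i ({j} : Finset (Fin n))
      simpa using this
    omega
  obtain ⟨w, hw⟩ := Finset.card_pos.mp (by omega : 0 < (W \ {i, j}).card)
  have hwW : w ∈ W := (Finset.mem_sdiff.mp hw).1
  have hwij : w ≠ i ∧ w ≠ j := by
    have := (Finset.mem_sdiff.mp hw).2
    simp only [Finset.mem_insert, Finset.mem_singleton] at this
    exact ⟨fun h => this (Or.inl h), fun h => this (Or.inr h)⟩
  obtain ⟨hwi, hwj⟩ := hwij
  have hwALF : w ∉ ALF := hWALF w hwW
  have hwdead : ¬ M1 f i j w := hWdead w hwW hwi hwj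
  -- a witness for the essentiality of w
  obtain ⟨z, b, hzb⟩ := hess w
  have hbz : b ≠ z w := by
    intro hb
    apply hzb
    rw [hb, Function.update_eq_self]
  by_cases hrep : ∃ α ∈ W.erase w, ∃ β ∈ W.erase w, α ≠ β ∧ z α = z β
  · -- Case 1 : a repetition within the dead variables
    obtain ⟨α, hα, β, hβ, hαβ, hzαβ⟩ := hrep
    have hcase1 : ∀ γ δ : Fin n, γ ∈ W.erase w → δ ∈ W.erase w → γ ≠ δ → γ ≠ i → γ ≠ j →
        z γ = z δ → False := by
      intro γ δ hγ hδ hγδ hγi hγj hzγδ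
      have hγW : γ ∈ W := Finset.mem_of_mem_erase hγ
      have hδW : δ ∈ W := Finset.mem_of_mem_erase hδ
      have hγw : γ ≠ w := Finset.ne_of_mem_erase hγ
      have hδw : δ ≠ w := Finset.ne_of_mem_erase hδ
      refine hbig γ δ hγδ w hwALF ?_ (hpushALF γ δ hγW hδW hγi hγj hγδ)
      exact mem_M1set.mpr ⟨Ne.symm hγw, Ne.symm hδw, ⟨z, b, hzγδ, hzb⟩⟩
    by_cases hαij : α ≠ i ∧ α ≠ j
    · exact hcase1 α β hα hβ hαβ hαij.1 hαij.2 hzαβ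
    · by_cases hβij : β ≠ i ∧ β ≠ j
      · exact hcase1 β α hβ hα (Ne.symm hαβ) hβij.1 hβij.2 hzαβ.symm
      · -- both α and β are among {i, j}; since α ≠ β we get z i = z j
        have hα2 : α = i ∨ α = j := by
          by_contra h
          push_neg at h
          exact hαij ⟨h.1, h.2⟩
        have hβ2 : β = i ∨ β = j := by
          by_contra h
          push_neg at h
          exact hβij ⟨h.1, h.2⟩
        have hzij : z i = z j := by
          rcases hα2 with rfl | rfl <;> rcases hβ2 with rfl | rfl
          · exact absurd rfl hαβ
          · exact hzαβ
          · exact hzαβ.symm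
          · exact absurd rfl hαβ
        exact hwdead ⟨z, b, hzij, hzb⟩
  · -- Case 2 : z is injective on W \ {w}
    have hinj : Set.InjOn z (W.erase w) := by
      intro a ha b' hb' hzab
      by_contra hne
      exact hrep ⟨a, Finset.mem_coe.mp ha, b', Finset.mem_coe.mp hb', hne, hzab⟩
    have hle : (W.erase w).card ≤ k := by
      have := Finset.card_le_card_of_injOn z (fun a _ => Finset.mem_univ (z a)) hinj
      rwa [Finset.card_univ, hA] at this
    have herase : (W.erase w).card = W.card - 1 := Finset.card_erase_of_mem hwW
    have himg : (W.erase w).image z = Finset.univ := by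
      apply Finset.eq_univ_of_card
      rw [Finset.card_image_of_injOn hinj, hA]
      omega
    obtain ⟨u1, hu1mem, hzu1⟩ := Finset.mem_image.mp (himg ▸ Finset.mem_univ (z w))
    obtain ⟨u2, hu2mem, hzu2⟩ := Finset.mem_image.mp (himg ▸ Finset.mem_univ b)
    have hu1w : u1 ≠ w := Finset.ne_of_mem_erase hu1mem
    have hu2w : u2 ≠ w := Finset.ne_of_mem_erase hu2mem
    have hu1W : u1 ∈ W := Finset.mem_of_mem_erase hu1mem
    have hu2W : u2 ∈ W := Finset.mem_of_mem_erase hu2mem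
    have hu12 : u1 ≠ u2 := by
      intro h
      apply hbz
      rw [← hzu2, ← h, hzu1]
    set z' := Function.update z w b with hz'def
    have hz'w : z' w = b := Function.update_self _ _ _
    have hz'u2 : z' u2 = b := by rw [hz'def, Function.update_of_ne hu2w]; exact hzu2
    have hz'u1 : z' u1 = z w := by rw [hz'def, Function.update_of_ne hu1w]; exact hzu1
    by_cases hPA : PA f u1 w
    · -- the pair {u1, w} is jointly alive: Lemma B
      have hsubQ : ∀ v ∈ ALF, v ∈ M1set f u1 w := by
        intro v hv
        obtain ⟨hvi, hvj, hvM⟩ := mem_M1set.mp hv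
        have hvw : v ≠ w := hneWA v hv w hwW
        have hvu1 : v ≠ u1 := hneWA v hv u1 hu1W
        have h1 : M1 f w u1 v := push hwdead hvM hvi hvj hvw hvu1 (Ne.symm hu1w)
        exact mem_M1set.mpr ⟨hvu1, hvw, h1.symm⟩
      have hESS : t + 1 ≤ essArity (idMinor f u1 w) := by
        have hsub2 : ∀ v ∈ insert w ALF, Essential (idMinor f u1 w) v := by
          intro v hv
          rcases Finset.mem_insert.mp hv with rfl | hv
          · exact K2 hu1w hPA
          · obtain ⟨h1, h2, h3⟩ := mem_M1set.mp (hsubQ v hv)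
            exact (K1 hu1w h1 h2).mpr h3
        have := card_le_essArity (insert w ALF) hsub2
        rwa [Finset.card_insert_of_notMem hwALF] at this
      have ht2 : t + 1 < n - k := lt_of_le_of_lt hESS (hcon' u1 w hu1w)
      -- two spare dead variables
      have hsp : 1 < (W \ {u1, w}).card := by
        have h5 := Finset.card_le_card_sdiff_add_card (s := W) (t := ({u1, w} : Finset (Fin n)))
        have h6 : ({u1, w} : Finset (Fin n)).card ≤ 2 := by
          have := Finset.card_insert_le u1 ({w} : Finset (Fin n))
          simpa using this
        omega
      obtain ⟨b2, hb2, m2, hm2, hbm⟩ := Finset.one_lt_card.mp hsp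
      have hb2W : b2 ∈ W := (Finset.mem_sdiff.mp hb2).1
      have hm2W : m2 ∈ W := (Finset.mem_sdiff.mp hm2).1
      have hb2u1w : b2 ≠ u1 ∧ b2 ≠ w := by
        have := (Finset.mem_sdiff.mp hb2).2
        simp only [Finset.mem_insert, Finset.mem_singleton] at this
        exact ⟨fun h => this (Or.inl h), fun h => this (Or.inr h)⟩
      have hm2u1w : m2 ≠ u1 ∧ m2 ≠ w := by
        have := (Finset.mem_sdiff.mp hm2).2
        simp only [Finset.mem_insert, Finset.mem_singleton] at this
        exact ⟨fun h => this (Or.inl h), fun h => this (Or.inr h)⟩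
      obtain ⟨hb2u1, hb2w⟩ := hb2u1w
      obtain ⟨hm2u1, hm2w⟩ := hm2u1w
      have hdb2 : ¬ M1 f u1 w b2 := by
        intro h
        exact hbig u1 w hu1w b2 (hWALF b2 hb2W) (mem_M1set.mpr ⟨hb2u1, hb2w, h⟩) hsubQ
      have hdm2 : ¬ M1 f u1 w m2 := by
        intro h
        exact hbig u1 w hu1w m2 (hWALF m2 hm2W) (mem_M1set.mpr ⟨hm2u1, hm2w, h⟩) hsubQ
      have hsubBM : ∀ v ∈ ALF, v ∈ M1set f b2 m2 := by
        intro v hv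
        obtain ⟨hvu1, hvw, hvM⟩ := mem_M1set.mp (hsubQ v hv)
        have hvb2 : v ≠ b2 := hneWA v hv b2 hb2W
        have hvm2 : v ≠ m2 := hneWA v hv m2 hm2W
        exact mem_M1set.mpr ⟨hvb2, hvm2, push hdb2 hvM hvu1 hvw hvb2 hvm2 hbm⟩
      have hdu1 : ¬ M1 f b2 m2 u1 := by
        intro h
        exact hbig b2 m2 hbm u1 (hWALF u1 hu1W)
          (mem_M1set.mpr ⟨Ne.symm hb2u1, Ne.symm hm2u1, h⟩) hsubBM
      have hdw : ¬ M1 f b2 m2 w := by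
        intro h
        exact hbig b2 m2 hbm w hwALF
          (mem_M1set.mpr ⟨Ne.symm hb2w, Ne.symm hm2w, h⟩) hsubBM
      -- the final chain of moves
      obtain ⟨h0, c, hdiag, hne⟩ := hPA
      set e0 := h0 u1 with he0
      set h2t := Function.update (Function.update h0 b2 e0) m2 e0 with hh2t
      have hdiag1 : (Function.update h0 b2 e0) u1 = (Function.update h0 b2 e0) w := by
        rw [Function.update_of_ne (Ne.symm hb2u1), Function.update_of_ne (Ne.symm hb2w)]
        exact hdiag
      have hch1 : f h2t = f h0 := by
        have s1 : f (Function.update h0 b2 e0) = f h0 := D1 hdb2 e0 hdiag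
        have s2 : f h2t = f (Function.update h0 b2 e0) := D1 hdm2 e0 hdiag1
        rw [s2, s1]
      set h0' := Function.update (Function.update h0 u1 c) w c with hh0'
      have hdiag' : h0' u1 = h0' w := by
        rw [hh0', Function.update_self, Function.update_of_ne hu1w, Function.update_self]
      set h2t' := Function.update (Function.update h0' b2 e0) m2 e0 with hh2t'
      have hdiag1' : (Function.update h0' b2 e0) u1 = (Function.update h0' b2 e0) w := by
        rw [Function.update_of_ne (Ne.symm hb2u1), Function.update_of_ne (Ne.symm hb2w)]
        exact hdiag'
      have hch2 : f h2t' = f h0' := by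
        have s1 : f (Function.update h0' b2 e0) = f h0' := D1 hdb2 e0 hdiag'
        have s2 : f h2t' = f (Function.update h0' b2 e0) := D1 hdm2 e0 hdiag1'
        rw [s2, s1]
      have hd3 : h2t b2 = h2t m2 := by
        rw [hh2t, Function.update_self, Function.update_of_ne hbm, Function.update_self]
      set h3t := Function.update h2t u1 c with hh3t
      have hch3 : f h3t = f h2t := D1 hdu1 c hd3
      have hd4 : h3t b2 = h3t m2 := by
        rw [hh3t, Function.update_of_ne hb2u1, Function.update_of_ne hm2u1]
        exact hd3
      have hch4 : f (Function.update h3t w c) = f h3t := D1 hdw c hd4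
      have hid : Function.update h3t w c = h2t' := by
        rw [hh3t, hh2t, hh2t', hh0']
        exact upd4 h0 hbm hb2u1 hb2w hm2u1 hm2w hu1w e0 e0 c c
      have hfin : f h0' = f h0 := by
        rw [← hch2, ← hid, hch4, hch3, hch1]
      exact hne hfin.symm
    · -- the pair {u1, w} is jointly dead
      have hT0 : f (Function.update (Function.update z u1 b) w b) = f z := D2 hPA b hzu1
      by_cases hu : M1 f w u2 u1
      · have hsubR : ∀ v ∈ ALF, v ∈ M1set f w u2 := by
          intro v hv
          obtain ⟨hvi, hvj, hvM⟩ := mem_M1set.mp hv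
          have hvw : v ≠ w := hneWA v hv w hwW
          have hvu2 : v ≠ u2 := hneWA v hv u2 hu2W
          exact mem_M1set.mpr ⟨hvw, hvu2, push hwdead hvM hvi hvj hvw hvu2 (Ne.symm hu2w)⟩
        exact hbig w u2 (Ne.symm hu2w) u1 (hWALF u1 hu1W)
          (mem_M1set.mpr ⟨hu1w, hu12, hu⟩) hsubR
      · have hz'wu2 : z' w = z' u2 := by rw [hz'w, hz'u2]
        have hT1 : f (Function.update z' u1 b) = f z' := D1 hu b hz'wu2
        have hid2 : Function.update z' u1 b
            = Function.update (Function.update z u1 b) w b := by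
          rw [hz'def]
          exact (Function.update_comm hu1w b b z).symm
        have : f z' = f z := by rw [← hT1, hid2, hT0]
        exact hzb this.symm
end

section
/- Let M_1, …, M_n, N be nonempty sets with n ≥ 2, and let f : M_1 × ⋯ × M_n → N depend essentially on all of its n variables. Then there exist an index j ∈ {1, …, n} and an element c ∈ M_j such that the (n−1)-variable function (x_1, …, x_{j-1}, x_{j+1}, …, x_n) ↦ f(x_1, …, x_{j-1}, c, x_{j+1}, …, x_n) depends essentially on all of its n − 1 variables. -/
/-- Salomaa's auxiliary theorem: if `f : M₁ × ⋯ × Mₙ → N` (`n ≥ 2`) depends essentially on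
all of its variables, then some variable `x j` can be fixed to a constant `c` so that the
resulting `(n−1)`-variable function depends essentially on all of its remaining variables. -/
theorem stmt_3 {n : ℕ} (hn : 2 ≤ n) (M : Fin n → Type*) [∀ i, Nonempty (M i)]
    (N : Type*) (f : (∀ i, M i) → N)
    (hf : ∀ i : Fin n, ∃ (a : ∀ l, M l) (b : M i), f a ≠ f (Function.update a i b)) :
    ∃ (j : Fin n) (c : M j), ∀ i : Fin n, i ≠ j →
      ∃ (a : ∀ l, M l) (b : M i), a j = c ∧ f a ≠ f (Function.update a i b) := by
  classical
  by_contra hcon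
  push_neg at hcon
  -- hcon : ∀ j c, ∃ i, i ≠ j ∧ ∀ a b, a j = c → f a = f (update a i b)
  -- the set of variables essential in the restriction x_{p.1} = p.2
  set ess : (Σ j : Fin n, M j) → Finset (Fin n) := fun p =>
    Finset.univ.filter (fun i => i ≠ p.1 ∧
      ∃ (a : ∀ l, M l) (b : M i), a p.1 = p.2 ∧ f a ≠ f (Function.update a i b)) with hess
  have hbdd : BddAbove (Set.range fun p => (ess p).card) := by
    refine ⟨n, ?_⟩
    rintro m ⟨p, rfl⟩
    calc (ess p).card ≤ (Finset.univ : Finset (Fin n)).card := Finset.card_filter_le _ _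
      _ = n := by simp
  have hne : (Set.range fun p => (ess p).card).Nonempty := by
    have j0 : Fin n := ⟨0, by omega⟩
    exact ⟨(ess ⟨j0, Classical.arbitrary (M j0)⟩).card, ⟨_, rfl⟩⟩
  obtain ⟨p, hp⟩ := Nat.sSup_mem hne hbdd
  have hmax : ∀ q, (ess q).card ≤ (ess p).card := by
    intro q
    exact (le_csSup hbdd ⟨q, rfl⟩).trans_eq hp.symm
  obtain ⟨j, c⟩ := p
  obtain ⟨i, hij, hA⟩ := hcon j c
  -- hA : ∀ a b, a j = c → f a = f (update a i b)
  obtain ⟨a, b, hab⟩ := hf i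
  -- find c' : M i such that j is essential in the restriction x_i = c'
  have key : ∃ (c' : M i) (u : ∀ l, M l) (w : M j),
      u i = c' ∧ f u ≠ f (Function.update u j w) := by
    by_cases h1 : f a = f (Function.update a j c)
    · refine ⟨b, Function.update a i b, c, Function.update_self .., ?_⟩
      intro h
      apply hab
      have hcomm : Function.update (Function.update a i b) j c
          = Function.update (Function.update a j c) i b :=
        Function.update_comm hij _ _ _
      have h2 : f (Function.update a j c)
          = f (Function.update (Function.update a j c) i b) :=
        hA _ b (Function.update_self ..)
      rw [h, hcomm, ← h2, ← h1]
    · exact ⟨a i, a, c, rfl, h1⟩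
  obtain ⟨c', u, w, hui, huw⟩ := key
  -- the essential set for (i, c') strictly contains that for (j, c)
  have hsub : ess ⟨j, c⟩ ⊂ ess ⟨i, c'⟩ := by
    constructor
    · intro k hk
      rw [hess, Finset.mem_filter] at hk ⊢
      obtain ⟨-, hkj, x, v, hxj, hxv⟩ := hk
      have hki : k ≠ i := by
        rintro rfl
        exact hxv (hA x v hxj)
      refine ⟨Finset.mem_univ _, hki, Function.update x i c', v, Function.update_self .., ?_⟩
      have e1 : f x = f (Function.update x i c') := hA x c' hxj
      have e2 : f (Function.update x k v)
          = f (Function.update (Function.update x k v) i c') := by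
        refine hA _ c' ?_
        rw [Function.update_of_ne hkj.symm]
        exact hxj
      have hcomm : Function.update (Function.update x k v) i c'
          = Function.update (Function.update x i c') k v :=
        Function.update_comm hki _ _ _
      rw [← e1, ← hcomm, ← e2]
      exact hxv
    · intro hle
      have hjmem : j ∈ ess ⟨i, c'⟩ := by
        rw [hess, Finset.mem_filter]
        exact ⟨Finset.mem_univ _, hij.symm, u, w, hui, huw⟩
      have := hle hjmem
      rw [hess, Finset.mem_filter] at this
      exact this.2.1 rfl
  exact absurd (hmax ⟨i, c'⟩) (not_le.mpr (Finset.card_lt_card hsub))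
end

section
/- Let A be a finite set with exactly k elements and let B be a set, and let f : A^n → B be a function all of whose n variables are essential, where n > k. Then there exist indices i, j with 1 ≤ i < j ≤ k+1 such that at least one of the variables x_1, …, x_{k+1} is essential in the function f_{i←j} obtained from f by identifying the i-th variable with the j-th variable. -/
/-- Lemma: if all `n > k` variables of `f` on a `k`-element set are essential, then for
some pair of indices among the first `k+1` variables (0-based: `i.val < j.val ≤ k`), at
least one of the first `k+1` variables (`l.val ≤ k`) is essential in the minor `f_{i←j}`. -/
theorem stmt_4 {k n : ℕ} (A B : Type*) [Fintype A] (hA : Fintype.card A = k)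
    (f : (Fin n → A) → B) (hess : ∀ i : Fin n, Essential f i) (hnk : k < n) :
    ∃ i j : Fin n, i.val < j.val ∧ j.val ≤ k ∧
      ∃ l : Fin n, l.val ≤ k ∧ Essential (idMinor f i j) l := by
  classical
  set K : Fin n := ⟨k, hnk⟩ with hK
  have hKval : K.val = k := rfl
  obtain ⟨a, b, hab⟩ := hess K
  set a' := Function.update a K b with ha'
  -- pigeonhole on the first k+1 coordinates
  have pigeon : ∀ (v : Fin n → A), ∃ i j : Fin n, i.val < j.val ∧ j.val ≤ k ∧ v i = v j := by
    intro v
    obtain ⟨x, y, hxy, hvv⟩ := Fintype.exists_ne_map_eq_of_card_lt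
      (fun m : Fin (k + 1) => v ⟨m.val, lt_of_lt_of_le m.isLt hnk⟩) (by simp [hA])
    rcases lt_or_gt_of_ne hxy with h | h
    · exact ⟨⟨x.val, lt_of_lt_of_le x.isLt hnk⟩, ⟨y.val, lt_of_lt_of_le y.isLt hnk⟩,
        h, Nat.lt_succ_iff.mp y.isLt, hvv⟩
    · exact ⟨⟨y.val, lt_of_lt_of_le y.isLt hnk⟩, ⟨x.val, lt_of_lt_of_le x.isLt hnk⟩,
        h, Nat.lt_succ_iff.mp x.isLt, hvv.symm⟩
  -- the case where the identified pair avoids index K: variable K stays essential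
  have case_small : ∀ i j : Fin n, i.val < j.val → j.val < k → a i = a j →
      ∃ i j : Fin n, i.val < j.val ∧ j.val ≤ k ∧
        ∃ l : Fin n, l.val ≤ k ∧ Essential (idMinor f i j) l := by
    intro i j hij hjk heq
    have hiK : i ≠ K := Fin.ne_of_val_ne (by omega)
    have hjK : j ≠ K := Fin.ne_of_val_ne (by omega)
    refine ⟨i, j, hij, le_of_lt hjk, K, le_of_eq hKval, a, b, ?_⟩
    have h1 : idMinor f i j a = f a := by
      unfold idMinor
      rw [← heq, Function.update_eq_self]
    have h2 : idMinor f i j a' = f a' := by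
      unfold idMinor
      have hj : a' j = a' i := by
        rw [ha', Function.update_of_ne hjK, Function.update_of_ne hiK, heq]
      rw [hj, Function.update_eq_self]
    rw [h1, h2]
    exact hab
  obtain ⟨i, j, hij, hjk, heq⟩ := pigeon a
  by_cases hjlt : j.val < k
  · exact case_small i j hij hjlt heq
  · have hjK : j = K := Fin.ext (by omega)
    rw [hjK] at heq hij
    -- heq : a i = a K, hij : i.val < K.val = k
    obtain ⟨i', j', hij', hjk', heq'⟩ := pigeon a'
    by_cases hj'lt : j'.val < k
    · have hi'K : i' ≠ K := Fin.ne_of_val_ne (by omega)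
      have hj'K : j' ≠ K := Fin.ne_of_val_ne (by omega)
      have heq'' : a i' = a j' := by
        rwa [ha', Function.update_of_ne hi'K, Function.update_of_ne hj'K] at heq'
      exact case_small i' j' hij' hj'lt heq''
    · have hj'K : j' = K := Fin.ext (by omega)
      rw [hj'K] at heq' hij'
      have hi'K : i' ≠ K := Fin.ne_of_val_ne (by omega)
      have hai' : a i' = b := by
        rwa [ha', Function.update_of_ne hi'K, Function.update_self] at heq'
      have hii' : i ≠ i' := by
        intro h
        apply hab
        have hb : b = a K := by rw [← hai', ← h, heq]
        rw [ha', hb, Function.update_eq_self]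
      set c := Function.update a i' (a K) with hc
      by_cases hfc : f c = f a'
      · -- variable i' is essential in idMinor f i K
        refine ⟨i, K, by omega, le_of_eq hKval, i', by omega, a, a K, ?_⟩
        have h1 : idMinor f i K a = f a := by
          unfold idMinor
          rw [← heq, Function.update_eq_self]
        have h2 : idMinor f i K (Function.update a i' (a K)) = f c := by
          unfold idMinor
          rw [← hc]
          have hcK : c K = a K := by rw [hc, Function.update_of_ne (Ne.symm hi'K)]
          have hci : c i = a i := by rw [hc, Function.update_of_ne hii']
          rw [hcK, ← heq, ← hci, Function.update_eq_self]
        rw [h1, h2, hfc]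
        exact hab
      · -- variable K is essential in idMinor f i' K
        refine ⟨i', K, hij', le_of_eq hKval, K, le_of_eq hKval, a, b, ?_⟩
        have h1 : idMinor f i' K a = f c := rfl
        have h2 : idMinor f i' K a' = f a' := by
          unfold idMinor
          have : a' K = a' i' := by rw [ha', Function.update_self, ← hai',
            Function.update_of_ne hi'K]
          rw [this, Function.update_eq_self]
        rw [← ha', h1, h2]
        exact hfc
end

section
/- Let f : (ZMod 2)^n → ZMod 2 be a Boolean function with at least four essential variables whose Zhegalkin polynomial has degree two, i.e. f(x_1, …, x_n) = Σ_{1 ≤ i < j ≤ n} a_{ij} x_i x_j + Σ_{1 ≤ i ≤ n} a_i x_i + c over the two-element field, with a_{ij} ≠ 0 for at least one pair i < j. Then the arity gap of f is one: there exist distinct indices i, j with x_i, x_j essential in f such that ess f_{i←j} = ess f − 1. -/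
/-!
Let `A` be the symmetric, zero-diagonal coefficient matrix of the quadratic part of `f` (a graph
on the variables) and `b` its linear part. Over `ZMod 2` the derivative
`f (x[k ↦ 1]) + f (x[k ↦ 0])` is the affine function `b k + ∑ l, A k l * x l`, so `x k` is
essential iff `b k ≠ 0` or `k` has a neighbour. The derivatives of `f_{i←j}` are read off from
those of `f`: identifying `x i` with `x j` loses `x j` exactly when `i`, `j` are twins
(`b i + b j + A i j = 0` and equal neighbourhoods outside `{i, j}`), and loses another `x k`
exactly when `b k = 0` and the neighbourhood of `k` is `{i, j}`. A short case analysis on the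
graph, starting from an edge and using a fourth essential vertex, finds a pair avoiding both.
-/

open Function Matrix

lemma Matrix.dotProduct_update {ι R : Type*} [Fintype ι] [DecidableEq ι] [CommRing R]
    (v x : ι → R) (i : ι) (t : R) : v ⬝ᵥ update x i t = v ⬝ᵥ x + v i * (t - x i) := by
  have : update x i t = x + Pi.single i (t - x i) := by
    ext l; by_cases h : l = i <;> simp [h]
  rw [this, dotProduct_add, dotProduct_single]

namespace BooleanQuadratic

lemma exists_add_dotProduct_ne_zero_iff {ι R : Type*} [Fintype ι] [DecidableEq ι] [Semiring R]
    (c : R) (v : ι → R) : (∃ x, c + v ⬝ᵥ x ≠ 0) ↔ c ≠ 0 ∨ ∃ l, v l ≠ 0 := by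
  constructor
  · rintro ⟨x, hx⟩
    by_contra! h
    obtain ⟨rfl, hv⟩ := h
    exact hx (by simp [dotProduct, hv])
  · rintro (hc | ⟨l, hl⟩)
    · exact ⟨0, by simpa using hc⟩
    · by_cases hc : c = 0
      · exact ⟨Pi.single l 1, by simpa [hc] using hl⟩
      · exact ⟨0, by simpa using hc⟩

section Combinatorics

variable {ι : Type*} (A : ι → ι → ZMod 2) (b : ι → ZMod 2)

def IsEssVertex (k : ι) : Prop := b k ≠ 0 ∨ ∃ l, A k l ≠ 0

def Twin (i j : ι) : Prop := b i + b j + A i j = 0 ∧ ∀ l, l ≠ i → l ≠ j → A i l = A j l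

def Blocks (i j k : ι) : Prop :=
  b k = 0 ∧ A k i ≠ 0 ∧ A k j ≠ 0 ∧ ∀ l, l ≠ i → l ≠ j → A k l = 0

def GoodPair (i j : ι) : Prop :=
  i ≠ j ∧ IsEssVertex A b i ∧ IsEssVertex A b j ∧ ¬ Twin A b i j ∧ ∀ k, ¬ Blocks A b i j k

variable {A b}

lemma Blocks.symm {i j k : ι} (h : Blocks A b i j k) : Blocks A b j i k :=
  ⟨h.1, h.2.2.1, h.2.1, fun l hlj hli => h.2.2.2 l hli hlj⟩

lemma Blocks.eq_or_eq_of_adj {i j k m : ι} (h : Blocks A b i j k) (hm : A k m ≠ 0) :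
    m = i ∨ m = j := by
  by_contra! hmij
  exact hm (h.2.2.2 m hmij.1 hmij.2)

lemma exists_isEssVertex_ne (hE : 4 ≤ {k | IsEssVertex A b k}.ncard) (i j k : ι) :
    ∃ s, IsEssVertex A b s ∧ s ≠ i ∧ s ≠ j ∧ s ≠ k := by
  classical
  have hlt : (({i, j, k} : Finset ι) : Set ι).ncard < {k | IsEssVertex A b k}.ncard := by
    rw [Set.ncard_coe_finset]; exact (Finset.card_le_three).trans_lt hE
  obtain ⟨s, hs, hsijk⟩ := Set.exists_mem_notMem_of_ncard_lt_ncard hlt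
  simp only [Finset.coe_insert, Finset.coe_singleton, Set.mem_insert_iff,
    Set.mem_singleton_iff, not_or] at hsijk
  exact ⟨s, hs, hsijk⟩

variable (hsymm : ∀ k l, A k l = A l k) (hdiag : ∀ k, A k k = 0)
include hsymm hdiag

lemma exists_not_twin {p q : ι} (hpq : A p q ≠ 0) (hE : 4 ≤ {k | IsEssVertex A b k}.ncard) :
    ∃ i j, i ≠ j ∧ IsEssVertex A b i ∧ IsEssVertex A b j ∧ ¬ Twin A b i j := by
  have hEp : IsEssVertex A b p := Or.inr ⟨q, hpq⟩
  have hEq : IsEssVertex A b q := Or.inr ⟨p, hsymm p q ▸ hpq⟩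
  have hne : p ≠ q := by rintro rfl; exact hpq (hdiag p)
  by_cases hTpq : Twin A b p q
  swap; · exact ⟨p, q, hne, hEp, hEq, hTpq⟩
  obtain ⟨r, hEr, hrp, hrq, -⟩ := exists_isEssVertex_ne hE p q q
  by_cases hTpr : Twin A b p r
  swap; · exact ⟨p, r, hrp.symm, hEp, hEr, hTpr⟩
  refine ⟨q, r, hrq.symm, hEq, hEr, fun hTqr => ?_⟩
  -- three pairwise twins are impossible: adding the three parity conditions gives `A p q = 0`
  have key : ∀ bp bq br apr apq : ZMod 2, bp + br + apr = 0 → bq + br + apr = 0 →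
      bp + bq + apq = 0 → apq ≠ 0 → False := by decide
  exact key _ _ _ _ _ hTpr.1 (hTpq.2 r hrp hrq ▸ hTqr.1) hTpq.1 hpq

lemma goodPair_of_forall_adj_eq_zero {t s l : ι} (hts : t ≠ s) (hs : IsEssVertex A b s)
    (htl : A t l ≠ 0) (hls : l ≠ s) (hcommon : ∀ m, A t m ≠ 0 → A s m = 0) :
    GoodPair A b t s := by
  have hlt : l ≠ t := by rintro rfl; exact htl (hdiag l)
  refine ⟨hts, Or.inr ⟨l, htl⟩, hs, fun hT => htl ?_, fun k hk => ?_⟩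
  · rw [hT.2 l hlt hls, hcommon l htl]
  · exact hk.2.2.1 (by rw [hsymm, hcommon k (by rw [hsymm]; exact hk.2.1)])

lemma Blocks.of_not_goodPair {i j k : ι} (hB : Blocks A b i j k) (hEi : IsEssVertex A b i)
    (hbad : ¬ GoodPair A b i k) :
    (b i = 1 ∧ ∀ l, l ≠ j → l ≠ k → A i l = 0) ∨ (b j = 0 ∧ ∀ l, l ≠ i → l ≠ k → A j l = 0) := by
  have ⟨hbk, hki, _, hkout⟩ := hB
  have hik : i ≠ k := by rintro rfl; exact hki (hdiag i)
  have hEk : IsEssVertex A b k := Or.inr ⟨i, hki⟩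
  simp only [GoodPair, hik, hEi, hEk, ne_eq, not_false_eq_true, true_and,
    not_and, not_forall, not_not] at hbad
  by_cases hT : Twin A b i k
  · left
    refine ⟨?_, fun l hlj hlk => ?_⟩
    · have key : ∀ u v : ZMod 2, u + 0 + v = 0 → v ≠ 0 → u = 1 := by decide
      exact key _ _ (hbk ▸ hT.1) (by rw [hsymm]; exact hki)
    · by_cases hli : l = i
      · rw [hli, hdiag]
      · rw [hT.2 l hli hlk, hkout l hli hlj]
  · obtain ⟨m, hbm, hmi, hmk, hmout⟩ := hbad hT
    have hmj : m = j := by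
      refine (hB.eq_or_eq_of_adj (by rw [hsymm]; exact hmk)).resolve_left ?_
      rintro rfl; exact hmi (hdiag m)
    subst hmj
    exact Or.inr ⟨hbm, hmout⟩

lemma exists_goodPair {p q : ι} (hpq : A p q ≠ 0) (hE : 4 ≤ {k | IsEssVertex A b k}.ncard) :
    ∃ i j, GoodPair A b i j := by
  obtain ⟨i, j, hij, hEi, hEj, hT⟩ := exists_not_twin hsymm hdiag hpq hE
  by_cases hblock : ∃ k, Blocks A b i j k
  swap; · exact ⟨i, j, hij, hEi, hEj, hT, not_exists.1 hblock⟩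
  obtain ⟨k, hB⟩ := hblock
  by_cases hik : GoodPair A b i k; · exact ⟨i, k, hik⟩
  by_cases hjk : GoodPair A b j k; · exact ⟨j, k, hjk⟩
  -- otherwise `{i, j, k}` is a triangle with no edges leaving it
  have hi := hB.of_not_goodPair hsymm hdiag hEi hik
  have hj := hB.symm.of_not_goodPair hsymm hdiag hEj hjk
  have hout : (∀ l, l ≠ j → l ≠ k → A i l = 0) ∧ (∀ l, l ≠ i → l ≠ k → A j l = 0) := by
    rcases hi with ⟨hbi, hi⟩ | ⟨hbj, hj'⟩ <;> rcases hj with ⟨hbj', hj⟩ | ⟨hbi', hi'⟩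
    · exact ⟨hi, hj⟩
    · exact absurd (hbi.symm.trans hbi') one_ne_zero
    · exact absurd (hbj'.symm.trans hbj) one_ne_zero
    · exact ⟨hi', hj'⟩
  obtain ⟨s, hEs, hsi, hsj, hsk⟩ := exists_isEssVertex_ne hE i j k
  refine ⟨k, s, goodPair_of_forall_adj_eq_zero hsymm hdiag hsk.symm hEs hB.2.1 hsi.symm
    fun m hm => ?_⟩
  obtain rfl | rfl := hB.eq_or_eq_of_adj hm
  · rw [hsymm]; exact hout.1 s hsj hsk
  · rw [hsymm]; exact hout.2 s hsi hsk

end Combinatorics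

section Derivative

variable {n : ℕ}

def boolDeriv (f : (Fin n → ZMod 2) → ZMod 2) (k : Fin n) (x : Fin n → ZMod 2) : ZMod 2 :=
  f (update x k 1) + f (update x k 0)

lemma essential_iff_exists_boolDeriv_ne_zero (f : (Fin n → ZMod 2) → ZMod 2) (k : Fin n) :
    Essential f k ↔ ∃ x, boolDeriv f k x ≠ 0 := by
  simp only [boolDeriv, ne_eq, CharTwo.add_eq_zero]
  constructor
  · rintro ⟨x, t, hx⟩
    by_contra! h
    have hconst : ∀ t, f (update x k t) = f (update x k 0) := Fin.forall_fin_two.2 ⟨rfl, h x⟩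
    have := (hconst (x k)).trans (hconst t).symm
    rw [update_eq_self] at this
    exact hx this
  · rintro ⟨x, hx⟩
    exact ⟨update x k 0, 1, by rw [update_idem]; exact Ne.symm hx⟩

lemma not_essential_idMinor_left {A B : Type*} (f : (Fin n → A) → B) {i j : Fin n}
    (hij : i ≠ j) : ¬ Essential (idMinor f i j) i := by
  rintro ⟨x, t, hx⟩
  simp [idMinor, update_of_ne hij.symm] at hx

lemma essential_of_essential_idMinor {A B : Type*} (f : (Fin n → A) → B) {i j k : Fin n}
    (hki : k ≠ i) (hkj : k ≠ j) (hk : Essential (idMinor f i j) k) : Essential f k := by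
  obtain ⟨x, t, hx⟩ := hk
  refine ⟨update x i (x j), t, ?_⟩
  simpa [idMinor, update_of_ne hkj.symm, update_comm hki] using hx

lemma boolDeriv_idMinor_of_ne (f : (Fin n → ZMod 2) → ZMod 2) {i j k : Fin n}
    (hki : k ≠ i) (hkj : k ≠ j) (x : Fin n → ZMod 2) :
    boolDeriv (idMinor f i j) k x = boolDeriv f k (update x i (x j)) := by
  simp [boolDeriv, idMinor, update_of_ne hkj.symm, update_comm hki]

lemma boolDeriv_idMinor_right (f : (Fin n → ZMod 2) → ZMod 2) {i j : Fin n} (hij : i ≠ j)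
    (x : Fin n → ZMod 2) :
    boolDeriv (idMinor f i j) j x =
      boolDeriv f i (update x j 1) + boolDeriv f j (update x i 0) := by
  simp only [boolDeriv, idMinor, update_self, update_comm hij]
  rw [add_assoc (f _), ← add_assoc (f (update (update x j 1) i 0)), CharTwo.add_self_eq_zero,
    zero_add]

end Derivative

section Quadratic

variable {n : ℕ}

def zhegalkinQuadratic (a : Fin n → Fin n → ZMod 2) (b : Fin n → ZMod 2) (c : ZMod 2)
    (x : Fin n → ZMod 2) : ZMod 2 :=
  (∑ p ∈ Finset.univ.filter (fun p : Fin n × Fin n => p.1 < p.2), a p.1 p.2 * x p.1 * x p.2) +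
    (∑ i, b i * x i) + c

def symmCoeff (a : Fin n → Fin n → ZMod 2) (k l : Fin n) : ZMod 2 :=
  (if k < l then a k l else 0) + (if l < k then a l k else 0)

lemma symmCoeff_comm (a : Fin n → Fin n → ZMod 2) (k l : Fin n) :
    symmCoeff a k l = symmCoeff a l k := by
  simp only [symmCoeff, add_comm]

lemma symmCoeff_self (a : Fin n → Fin n → ZMod 2) (k : Fin n) : symmCoeff a k k = 0 := by
  simp [symmCoeff]

lemma symmCoeff_of_lt (a : Fin n → Fin n → ZMod 2) {k l : Fin n} (hkl : k < l) :
    symmCoeff a k l = a k l := by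
  simp [symmCoeff, hkl, hkl.not_gt]

lemma update_one_mul_add_update_zero_mul {p q : Fin n} (hpq : p ≠ q) (k : Fin n)
    (x : Fin n → ZMod 2) :
    update x k 1 p * update x k 1 q + update x k 0 p * update x k 0 q =
      (if p = k then x q else 0) + (if q = k then x p else 0) := by
  by_cases hp : p = k
  · subst hp; simp [hpq.symm]
  · by_cases hq : q = k
    · subst hq; simp [hpq]
    · simp [hp, hq, CharTwo.add_self_eq_zero]

lemma sum_lt_update_one_mul_add_update_zero_mul (a : Fin n → Fin n → ZMod 2) (k : Fin n)
    (x : Fin n → ZMod 2) :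
    ∑ p ∈ Finset.univ.filter (fun p : Fin n × Fin n => p.1 < p.2),
      (a p.1 p.2 * update x k 1 p.1 * update x k 1 p.2 +
        a p.1 p.2 * update x k 0 p.1 * update x k 0 p.2) = symmCoeff a k ⬝ᵥ x := by
  rw [Finset.sum_congr rfl fun p hp => by
    rw [mul_assoc, mul_assoc, ← mul_add,
      update_one_mul_add_update_zero_mul (Finset.mem_filter.1 hp).2.ne]]
  simp only [dotProduct, symmCoeff, Finset.sum_filter, Fintype.sum_prod_type, mul_add, add_mul,
    Finset.sum_add_distrib, mul_ite, ite_mul, mul_zero, zero_mul]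
  rw [Finset.sum_comm (f := fun p q => if p < q then if q = k then _ else _ else _)]
  congr 1 <;> rw [Fintype.sum_eq_single k (fun p hp => by simp [hp])] <;> simp

lemma boolDeriv_zhegalkinQuadratic (a : Fin n → Fin n → ZMod 2) (b : Fin n → ZMod 2) (c : ZMod 2)
    (k : Fin n) (x : Fin n → ZMod 2) :
    boolDeriv (zhegalkinQuadratic a b c) k x = b k + symmCoeff a k ⬝ᵥ x := by
  have hquad := sum_lt_update_one_mul_add_update_zero_mul a k x
  rw [Finset.sum_add_distrib] at hquad
  have hlin := dotProduct_update b x k 1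
  have hlin' := dotProduct_update b x k 0
  simp only [dotProduct] at hlin hlin'
  simp only [boolDeriv, zhegalkinQuadratic]
  linear_combination hquad + hlin + hlin' +
    (c + ∑ i, b i * x i - b k * x k) * CharTwo.two_eq_zero (R := ZMod 2)

end Quadratic

section Minor

variable {n : ℕ} {f : (Fin n → ZMod 2) → ZMod 2} {A : Fin n → Fin n → ZMod 2} {b : Fin n → ZMod 2}
  (hD : ∀ k x, boolDeriv f k x = b k + A k ⬝ᵥ x)
include hD

lemma essential_iff_isEssVertex (k : Fin n) : Essential f k ↔ IsEssVertex A b k := by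
  simp only [essential_iff_exists_boolDeriv_ne_zero, hD]
  exact exists_add_dotProduct_ne_zero_iff _ _

lemma essential_idMinor_right {i j : Fin n} (hij : i ≠ j) (hT : ¬ Twin A b i j) :
    Essential (idMinor f i j) j := by
  rw [essential_iff_exists_boolDeriv_ne_zero]
  by_contra! h
  simp only [boolDeriv_idMinor_right f hij, hD, dotProduct_update] at h
  have h0 : b i + b j + A i j = 0 := by simpa [Ne.symm hij, add_right_comm] using h 0
  refine hT ⟨h0, fun l hli hlj => ?_⟩
  have hl := h (Pi.single l 1)
  simp only [dotProduct_single, Pi.single_apply, hli.symm, hlj.symm, if_false, mul_one, sub_zero,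
    mul_zero] at hl
  rw [← CharTwo.add_eq_zero]
  linear_combination hl - h0

lemma essential_idMinor_of_ne {i j k : Fin n} (hij : i ≠ j) (hki : k ≠ i) (hkj : k ≠ j)
    (hk : IsEssVertex A b k) (hB : ¬ Blocks A b i j k) : Essential (idMinor f i j) k := by
  rw [essential_iff_exists_boolDeriv_ne_zero]
  by_contra! h
  simp only [boolDeriv_idMinor_of_ne f hki hkj, hD, dotProduct_update] at h
  have hbk : b k = 0 := by simpa using h 0
  have hout : ∀ l, l ≠ i → l ≠ j → A k l = 0 := fun l hli hlj => by
    simpa [hli, hlj, hbk] using h (Pi.single l 1)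
  have hkij : A k i = A k j := by
    rw [← CharTwo.add_eq_zero, add_comm]
    simpa [hbk, Pi.single_apply, hij] using h (Pi.single j 1)
  obtain hbk' | ⟨l, hl⟩ := hk
  · exact hbk' hbk
  have hki' : A k i ≠ 0 := by
    by_cases hli : l = i
    · rwa [← hli]
    by_cases hlj : l = j
    · rwa [hkij, ← hlj]
    exact absurd (hout l hli hlj) hl
  exact hB ⟨hbk, hki', hkij ▸ hki', hout⟩

lemma setOf_essential_idMinor {i j : Fin n} (hgood : GoodPair A b i j) :
    {k | Essential (idMinor f i j) k} = {k | Essential f k} \ {i} := by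
  obtain ⟨hij, -, hEj, hT, hB⟩ := hgood
  ext k
  simp only [Set.mem_ofPred_eq, Set.mem_sdiff, Set.mem_singleton_iff,
    essential_iff_isEssVertex hD k]
  by_cases hki : k = i
  · subst hki
    simp [not_essential_idMinor_left f hij]
  by_cases hkj : k = j
  · subst hkj
    exact iff_of_true (essential_idMinor_right hD hij hT) ⟨hEj, hki⟩
  refine ⟨fun hk => ⟨?_, hki⟩, fun hk => essential_idMinor_of_ne hD hij hki hkj hk.1 (hB k)⟩
  exact (essential_iff_isEssVertex hD k).1 (essential_of_essential_idMinor f hki hkj hk)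

end Minor

end BooleanQuadratic

open BooleanQuadratic

/-- If a Boolean function with at least four essential variables has Zhegalkin polynomial
of degree two, then its arity gap is one. -/
theorem stmt_5 {n : ℕ} (f : (Fin n → ZMod 2) → ZMod 2)
    (a : Fin n → Fin n → ZMod 2) (b : Fin n → ZMod 2) (c : ZMod 2)
    (hrep : ∀ x : Fin n → ZMod 2,
      f x = (∑ p ∈ Finset.univ.filter (fun p : Fin n × Fin n => p.1 < p.2),
              a p.1 p.2 * x p.1 * x p.2) + (∑ i, b i * x i) + c)
    (hdeg : ∃ i j : Fin n, i < j ∧ a i j ≠ 0)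
    (hess : 4 ≤ essArity f) :
    ∃ i j : Fin n, i ≠ j ∧ Essential f i ∧ Essential f j ∧
      essArity (idMinor f i j) = essArity f - 1 := by
  have hf : f = zhegalkinQuadratic a b c := funext hrep
  have hD : ∀ k x, boolDeriv f k x = b k + symmCoeff a k ⬝ᵥ x :=
    hf ▸ boolDeriv_zhegalkinQuadratic a b c
  have hess_iff := essential_iff_isEssVertex hD
  obtain ⟨p, q, hpq, hapq⟩ := hdeg
  have hE : 4 ≤ {k | IsEssVertex (symmCoeff a) b k}.ncard := by
    simpa only [essArity, hess_iff] using hess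
  obtain ⟨i, j, hgood⟩ := exists_goodPair (symmCoeff_comm a) (symmCoeff_self a)
    (symmCoeff_of_lt a hpq ▸ hapq) hE
  have hEi : Essential f i := (hess_iff i).2 hgood.2.1
  refine ⟨i, j, hgood.1, hEi, (hess_iff j).2 hgood.2.2.1, ?_⟩
  rw [essArity, setOf_essential_idMinor hD hgood,
    Set.ncard_sdiff_singleton_of_mem (s := {k | Essential f k}) hEi]
  rfl
end

section
/- Let f : (ZMod 2)^n → ZMod 2 be a Boolean function with at least 2 essential variables. If f is not of any of the special forms x_{i_1} + ⋯ + x_{i_m} + c, x_i x_j + x_i + c, x_i x_j + x_i x_k + x_j x_k + c, or x_i x_j + x_i x_k + x_j x_k + x_i + x_j + c (over the two-element field, c ∈ {0,1}), then the arity gap of f is 1, i.e. there exist distinct indices i, j with x_i, x_j essential in f such that ess f_{i←j} = ess f − 1. -/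
open Function

namespace ArityGap

section General

variable {α β : Type*} {n : ℕ}

def fixVar (f : (Fin n → α) → β) (i : Fin n) (a : α) : (Fin n → α) → β :=
  fun x => f (update x i a)

def diag (f : (Fin n → α) → β) (i j : Fin n) (a : α) : (Fin n → α) → β :=
  fixVar (fixVar f i a) j a

def coverSet (f : (Fin n → α) → β) (i j : Fin n) : Set (Fin n) :=
  {k | ∃ a, Essential (diag f i j a) k}

def fixVar₃ (f : (Fin n → α) → β) (i j k : Fin n) (a b c : α) : (Fin n → α) → β :=
  fixVar (fixVar (fixVar f i a) j b) k c

structure IsGoodPair (f : (Fin n → α) → β) (i j : Fin n) : Prop where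
  ne : i ≠ j
  essential_left : Essential f i
  essential_right : Essential f j
  essential_idMinor : ∀ k, Essential f k → k ≠ i → Essential (idMinor f i j) k

variable {f g : (Fin n → α) → β} {i j k : Fin n}

lemma fixVar_apply_self (f : (Fin n → α) → β) (i : Fin n) (x : Fin n → α) :
    fixVar f i (x i) x = f x := by
  simp [fixVar]

lemma fixVar_fixVar_self (a b : α) : fixVar (fixVar f i a) i b = fixVar f i a := by
  funext x
  simp [fixVar]

lemma fixVar_comm (hij : i ≠ j) (a b : α) :
    fixVar (fixVar f i a) j b = fixVar (fixVar f j b) i a := by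
  funext x
  simp [fixVar, update_comm hij]

lemma eq_of_forall_fixVar_eq (i : Fin n) (h : ∀ a, fixVar f i a = fixVar g i a) : f = g := by
  funext x
  rw [← fixVar_apply_self f i x, ← fixVar_apply_self g i x, h]

lemma essential_iff_exists_fixVar_ne : Essential f i ↔ ∃ a b, fixVar f i a ≠ fixVar f i b := by
  constructor
  · rintro ⟨x, b, hx⟩
    refine ⟨x i, b, fun h => hx ?_⟩
    simpa [fixVar] using congrFun h x
  · rintro ⟨a, b, hab⟩
    obtain ⟨x, hx⟩ := Function.ne_iff.1 hab
    exact ⟨update x i a, b, by simpa [fixVar] using hx⟩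

lemma not_essential_iff_fixVar_eq : ¬ Essential f i ↔ ∀ a, fixVar f i a = f := by
  refine ⟨fun h a => ?_, fun h => ?_⟩
  · refine eq_of_forall_fixVar_eq i fun b => ?_
    rw [fixVar_fixVar_self]
    by_contra hne
    exact h (essential_iff_exists_fixVar_ne.2 ⟨a, b, hne⟩)
  · simp [essential_iff_exists_fixVar_ne, h]

lemma apply_update_of_not_essential (h : ¬ Essential f i) (x : Fin n → α) (a : α) :
    f (update x i a) = f x :=
  congrFun (not_essential_iff_fixVar_eq.1 h a) x

lemma not_essential_fixVar_self (a : α) : ¬ Essential (fixVar f i a) i :=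
  not_essential_iff_fixVar_eq.2 fun _ => fixVar_fixVar_self _ _

lemma essential_of_essential_fixVar (hki : k ≠ i) {a : α} (h : Essential (fixVar f i a) k) :
    Essential f k := by
  obtain ⟨x, b, hx⟩ := h
  exact ⟨update x i a, b, by simpa [fixVar, update_comm hki] using hx⟩

lemma not_essential_fixVar (h : ¬ Essential f k) (i : Fin n) (a : α) :
    ¬ Essential (fixVar f i a) k := by
  rcases eq_or_ne k i with rfl | hki
  · exact not_essential_fixVar_self a
  · exact fun h' => h (essential_of_essential_fixVar hki h')

lemma exists_essential_fixVar (hki : k ≠ i) (h : Essential f k) :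
    ∃ a, Essential (fixVar f i a) k := by
  obtain ⟨x, b, hx⟩ := h
  exact ⟨x i, x, b, by simpa [fixVar, update_comm hki, update_of_ne hki.symm] using hx⟩

lemma not_essential_add [Add β] (hf : ¬ Essential f k) (hg : ¬ Essential g k) :
    ¬ Essential (f + g) k := by
  rw [not_essential_iff_fixVar_eq] at hf hg ⊢
  intro a
  funext x
  exact congrArg₂ (· + ·) (congrFun (hf a) x) (congrFun (hg a) x)

lemma dependsOn_essential (f : (Fin n → α) → β) : DependsOn f {i | Essential f i} := by
  classical
  intro x y hxy
  suffices h : ∀ t : Finset (Fin n), f (t.piecewise y x) = f x by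
    simpa using (h Finset.univ).symm
  intro t
  induction t using Finset.induction_on with
  | empty => simp
  | insert a t ha ih =>
    rw [Finset.piecewise_insert, ← ih]
    by_cases hess : Essential f a
    · rw [← hxy a hess, show x a = t.piecewise y x a by simp [ha], update_eq_self]
    · exact apply_update_of_not_essential hess _ _

lemma exists_essential_ne_ne (h : 3 ≤ essArity f) (a b : Fin n) :
    ∃ c, Essential f c ∧ c ≠ a ∧ c ≠ b := by
  by_contra! hne
  have hsub : {c | Essential f c} ⊆ {a, b} := fun c hc => by
    by_cases hca : c = a
    · exact Or.inl hca
    · exact Or.inr (hne c hc hca)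
  have := (Set.ncard_le_ncard hsub).trans (Set.ncard_insert_le a {b})
  rw [Set.ncard_singleton] at this
  exact absurd (h.trans this) (by simp)

lemma fixVar₃_apply_self (f : (Fin n → α) → β) (i j k : Fin n) (x : Fin n → α) :
    fixVar₃ f i j k (x i) (x j) (x k) x = f x := by
  simp [fixVar₃, fixVar]

lemma fixVar₃_swap (hij : i ≠ j) (a b c : α) :
    fixVar₃ f j i k b a c = fixVar₃ f i j k a b c := by
  rw [fixVar₃, fixVar_comm hij.symm]
  rfl

lemma diag_comm (hij : i ≠ j) : diag f i j = diag f j i :=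
  funext fun a => fixVar_comm hij a a

lemma coverSet_comm (hij : i ≠ j) : coverSet f i j = coverSet f j i := by
  simp only [coverSet, diag_comm hij]

lemma not_essential_diag_left (a : α) : ¬ Essential (diag f i j a) i :=
  not_essential_fixVar (not_essential_fixVar_self a) j a

lemma not_essential_diag_right (a : α) : ¬ Essential (diag f i j a) j :=
  not_essential_fixVar_self a

lemma left_notMem_coverSet : i ∉ coverSet f i j :=
  fun ⟨a, h⟩ => not_essential_diag_left a h

lemma fixVar₃_self_of_notMem_coverSet (hk : k ∉ coverSet f i j) (a : α) (c : α) :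
    fixVar₃ f i j k a a c = diag f i j a :=
  not_essential_iff_fixVar_eq.1 (fun h => hk ⟨a, h⟩) c

lemma essential_of_essential_diag {a : α} (h : Essential (diag f i j a) k) : Essential f k := by
  have hki : k ≠ i := by rintro rfl; exact not_essential_diag_left a h
  have hkj : k ≠ j := by rintro rfl; exact not_essential_diag_right a h
  exact essential_of_essential_fixVar hki (essential_of_essential_fixVar hkj h)

lemma fixVar_idMinor_right (a : α) : fixVar (idMinor f i j) j a = diag f i j a := by
  funext x
  simp [idMinor, diag, fixVar]

lemma not_essential_idMinor_left (hij : i ≠ j) : ¬ Essential (idMinor f i j) i :=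
  not_essential_iff_fixVar_eq.2 fun a => by
    funext x
    simp [idMinor, fixVar, update_of_ne hij.symm]

lemma essential_idMinor_right_iff :
    Essential (idMinor f i j) j ↔ ∃ a b, diag f i j a ≠ diag f i j b := by
  simp only [essential_iff_exists_fixVar_ne, fixVar_idMinor_right]

lemma essential_idMinor_iff_mem_coverSet (hkj : k ≠ j) :
    Essential (idMinor f i j) k ↔ k ∈ coverSet f i j := by
  simp only [coverSet, ← fixVar_idMinor_right]
  exact ⟨exists_essential_fixVar hkj, fun ⟨_, h⟩ => essential_of_essential_fixVar hkj h⟩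

lemma setOf_essential_idMinor_subset (hij : i ≠ j) (hj : Essential f j) :
    {k | Essential (idMinor f i j) k} ⊆ {k | Essential f k} \ {i} := by
  intro k hk
  refine ⟨?_, fun hki => not_essential_idMinor_left hij (hki ▸ hk)⟩
  rcases eq_or_ne k j with rfl | hkj
  · exact hj
  · obtain ⟨a, ha⟩ := (essential_idMinor_iff_mem_coverSet hkj).1 hk
    exact essential_of_essential_diag ha

lemma IsGoodPair.setOf_essential_idMinor (h : IsGoodPair f i j) :
    {k | Essential (idMinor f i j) k} = {k | Essential f k} \ {i} :=
  (setOf_essential_idMinor_subset h.ne h.essential_right).antisymm fun k hk =>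
    h.essential_idMinor k hk.1 hk.2

lemma essArity_idMinor_le (hij : i ≠ j) (hi : Essential f i) (hj : Essential f j) :
    essArity (idMinor f i j) ≤ essArity f - 1 :=
  (Set.ncard_le_ncard (setOf_essential_idMinor_subset hij hj)).trans_eq
    (Set.ncard_sdiff_singleton_of_mem (s := {k | Essential f k}) hi)

lemma IsGoodPair.essArity_idMinor (h : IsGoodPair f i j) :
    essArity (idMinor f i j) = essArity f - 1 := by
  change Set.ncard _ = Set.ncard _ - 1
  rw [h.setOf_essential_idMinor,
    Set.ncard_sdiff_singleton_of_mem (s := {k | Essential f k}) h.essential_left]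

lemma IsGoodPair.arityGap_eq_one (h : IsGoodPair f i j) : arityGap f = 1 := by
  have hsup : sSup {m | ∃ i j : Fin n, i ≠ j ∧ Essential f i ∧ Essential f j ∧
      m = essArity (idMinor f i j)} = essArity f - 1 := by
    refine IsGreatest.csSup_eq
      ⟨⟨i, j, h.ne, h.essential_left, h.essential_right, h.essArity_idMinor.symm⟩, ?_⟩
    rintro _ ⟨i', j', hij', hi', hj', rfl⟩
    exact essArity_idMinor_le hij' hi' hj'
  have hpos : 0 < essArity f := (Set.ncard_pos (Set.toFinite _)).2 ⟨i, h.essential_left⟩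
  rw [arityGap, hsup]
  omega

lemma IsGoodPair.of_mem_coverSet (hij : i ≠ j) (hi : Essential f i) (hj : Essential f j)
    (hdiag : ∃ a b, diag f i j a ≠ diag f i j b)
    (hcov : ∀ k, Essential f k → k ≠ i → k ≠ j → k ∈ coverSet f i j) : IsGoodPair f i j := by
  refine ⟨hij, hi, hj, fun k hk hki => ?_⟩
  rcases eq_or_ne k j with rfl | hkj
  · exact essential_idMinor_right_iff.2 hdiag
  · exact (essential_idMinor_iff_mem_coverSet hkj).2 (hcov k hk hki hkj)

end General

section Boolean

variable {n : ℕ} {f : (Fin n → ZMod 2) → ZMod 2} {i j k : Fin n}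

def IsSpecial (f : (Fin n → ZMod 2) → ZMod 2) : Prop :=
  (∃ (S : Finset (Fin n)) (c : ZMod 2), 2 ≤ S.card ∧
      ∀ x : Fin n → ZMod 2, f x = (∑ i ∈ S, x i) + c) ∨
    (∃ (i j : Fin n) (c : ZMod 2), i ≠ j ∧
      ∀ x : Fin n → ZMod 2, f x = x i * x j + x i + c) ∨
    (∃ (i j k : Fin n) (c : ZMod 2), i ≠ j ∧ i ≠ k ∧ j ≠ k ∧
      ∀ x : Fin n → ZMod 2, f x = x i * x j + x i * x k + x j * x k + c) ∨
    (∃ (i j k : Fin n) (c : ZMod 2), i ≠ j ∧ i ≠ k ∧ j ≠ k ∧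
      ∀ x : Fin n → ZMod 2, f x = x i * x j + x i * x k + x j * x k + x i + x j + c)

def boolDeriv (f : (Fin n → ZMod 2) → ZMod 2) (i : Fin n) : (Fin n → ZMod 2) → ZMod 2 :=
  fixVar f i 0 + fixVar f i 1

lemma zmod_two_cases (a : ZMod 2) : a = 0 ∨ a = 1 := by
  revert a
  decide

lemma exists_ne_iff_zero_ne_one {γ : Type*} (φ : ZMod 2 → γ) :
    (∃ a b, φ a ≠ φ b) ↔ φ 0 ≠ φ 1 := by
  refine ⟨fun ⟨a, b, h⟩ => ?_, fun h => ⟨0, 1, h⟩⟩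
  rcases zmod_two_cases a with rfl | rfl <;> rcases zmod_two_cases b with rfl | rfl
  exacts [absurd rfl h, h, Ne.symm h, absurd rfl h]

lemma essential_iff_fixVar_ne : Essential f i ↔ fixVar f i 0 ≠ fixVar f i 1 :=
  essential_iff_exists_fixVar_ne.trans (exists_ne_iff_zero_ne_one _)

lemma fixVar_one_zero_eq_fixVar_zero_one (hij : i ≠ j) (hik : i ≠ k) (hjk : j ≠ k)
    (hdiag_ik : diag f i k 0 = diag f i k 1) (hdiag_jk : diag f j k 0 = diag f j k 1) :
    fixVar (fixVar f i 1) j 0 = fixVar (fixVar f i 0) j 1 := by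
  set H := fun u v w => fixVar (fixVar (fixVar f i u) j v) k w with hH
  have hflip_jk : ∀ u v, H u v v = fixVar (diag f j k v) i u := fun u v => by
    rw [hH, diag, fixVar_comm hik.symm, fixVar_comm hij.symm]
  have hflip_ik : ∀ u v, H u v u = fixVar (diag f i k u) j v := fun u v => by
    rw [hH, diag, fixVar_comm hjk.symm]
  refine eq_of_forall_fixVar_eq k fun w => ?_
  rcases zmod_two_cases w with rfl | rfl
  · calc H 1 0 0 = H 1 1 1 := by rw [hflip_jk, hflip_jk, hdiag_jk]
      _ = H 0 1 0 := by rw [hflip_ik, hflip_ik, hdiag_ik]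
  · calc H 1 0 1 = H 0 0 0 := by rw [hflip_ik, hflip_ik, hdiag_ik]
      _ = H 0 1 1 := by rw [hflip_jk, hflip_jk, hdiag_jk]

lemma boolDeriv_eq_one (h3 : 3 ≤ essArity f)
    (hdiag : ∀ a b, a ≠ b → Essential f a → Essential f b → diag f a b 0 = diag f a b 1)
    (hi : Essential f i) (x : Fin n → ZMod 2) : boolDeriv f i x = 1 := by
  have hconst : ∀ j, ¬ Essential (boolDeriv f i) j := by
    intro j
    by_cases hj : Essential f j
    · rcases eq_or_ne j i with rfl | hji
      · exact not_essential_add (not_essential_fixVar_self 0) (not_essential_fixVar_self 1)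
      obtain ⟨k, hk, hki, hkj⟩ := exists_essential_ne_ne h3 i j
      have hswap := fixVar_one_zero_eq_fixVar_zero_one hji.symm hki.symm hkj.symm
        (hdiag i k hki.symm hi hk) (hdiag j k hkj.symm hj hk)
      have hsame : fixVar (fixVar f i 0) j 0 = fixVar (fixVar f i 1) j 1 :=
        hdiag i j hji.symm hi hj
      rw [essential_iff_fixVar_ne, not_not]
      change fixVar (fixVar f i 0) j 0 + fixVar (fixVar f i 1) j 0 =
        fixVar (fixVar f i 0) j 1 + fixVar (fixVar f i 1) j 1
      rw [hswap, hsame, add_comm]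
    · exact not_essential_add (not_essential_fixVar hj i 0) (not_essential_fixVar hj i 1)
  obtain ⟨y, hy⟩ := Function.ne_iff.1 (essential_iff_fixVar_ne.1 hi)
  rw [dependsOn_essential _ (x := x) (y := y) fun j hj => absurd hj (hconst j)]
  exact (by decide : ∀ u v : ZMod 2, u ≠ v → u + v = 1) _ _ hy

lemma eq_add_sum_of_fixVar_one (w : Fin n → ZMod 2)
    (hw : ∀ i x, fixVar f i 1 x = fixVar f i 0 x + w i) (x : Fin n → ZMod 2) :
    f x = f 0 + ∑ i, w i * x i := by
  classical
  suffices h : ∀ t : Finset (Fin n), f (t.piecewise x 0) = f 0 + ∑ i ∈ t, w i * x i by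
    simpa using h Finset.univ
  intro t
  induction t using Finset.induction_on with
  | empty => simp
  | insert a t ha ih =>
    set z := t.piecewise x 0
    have hz : update z a 0 = z := by simp [z, ha]
    have hstep : f (update z a (x a)) = f z + w a * x a := by
      rcases zmod_two_cases (x a) with h | h <;> rw [h]
      · simp [hz]
      · simpa [fixVar, hz] using hw a z
    rw [Finset.piecewise_insert, Finset.sum_insert ha, hstep, ih]
    ring

set_option synthInstance.maxSize 2000 in
lemma two_var_cases (F : ZMod 2 → ZMod 2 → ZMod 2) (hdiag : F 0 0 = F 1 1)
    (hi : ∃ b, F 0 b ≠ F 1 b) (hj : ∃ a, F a 0 ≠ F a 1) :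
    (∀ a b, F a b = a + b + F 0 0) ∨ (∀ a b, F a b = a * b + a + F 0 0) ∨
      (∀ a b, F a b = b * a + b + F 0 0) := by
  revert F
  decide

lemma isSpecial_of_forall_diag_eq_of_eq_two (h2 : essArity f = 2)
    (hdiag : ∀ a b, a ≠ b → Essential f a → Essential f b → diag f a b 0 = diag f a b 1) :
    IsSpecial f := by
  obtain ⟨i, j, hij, hE⟩ := Set.ncard_eq_two.1 h2
  have hmem : ∀ c, Essential f c ↔ c = i ∨ c = j := fun c => by
    simpa using Set.ext_iff.1 hE c
  have hi := (hmem i).2 (Or.inl rfl)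
  have hj := (hmem j).2 (Or.inr rfl)
  set F : ZMod 2 → ZMod 2 → ZMod 2 := fun a b => fixVar (fixVar f i a) j b 0 with hFdef
  have hF : ∀ x, f x = F (x i) (x j) := fun x => dependsOn_essential f fun c hc => by
    rcases (hmem c).1 hc with rfl | rfl <;> simp [hij.symm]
  have hFi : ∃ b, F 0 b ≠ F 1 b := by
    obtain ⟨x, hx⟩ := Function.ne_iff.1 (essential_iff_fixVar_ne.1 hi)
    exact ⟨x j, by simpa [fixVar, hF, hij.symm] using hx⟩
  have hFj : ∃ a, F a 0 ≠ F a 1 := by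
    obtain ⟨x, hx⟩ := Function.ne_iff.1 (essential_iff_fixVar_ne.1 hj)
    exact ⟨x i, by simpa [fixVar, hF, hij] using hx⟩
  rcases two_var_cases F (congrFun (hdiag i j hij hi hj) 0) hFi hFj with h | h | h
  · refine Or.inl ⟨{i, j}, F 0 0, by simp [hij], fun x => ?_⟩
    rw [hF, h, Finset.sum_pair hij]
  · exact Or.inr (Or.inl ⟨i, j, F 0 0, hij, fun x => by rw [hF, h]⟩)
  · exact Or.inr (Or.inl ⟨j, i, F 0 0, hij.symm, fun x => by rw [hF, h]⟩)

lemma isSpecial_of_forall_diag_eq_of_three_le (h3 : 3 ≤ essArity f)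
    (hdiag : ∀ a b, a ≠ b → Essential f a → Essential f b → diag f a b 0 = diag f a b 1) :
    IsSpecial f := by
  classical
  have hcard : essArity f = (Finset.univ.filter (Essential f)).card := by
    rw [essArity, ← Set.ncard_coe_finset]
    simp
  have hw : ∀ i x, fixVar f i 1 x = fixVar f i 0 x + if Essential f i then 1 else 0 := by
    intro i x
    by_cases hi : Essential f i
    · have := boolDeriv_eq_one h3 hdiag hi x
      simp only [boolDeriv, Pi.add_apply] at this
      simp only [hi, if_true]
      grind
    · simp [hi, not_essential_iff_fixVar_eq.1 hi]
  refine Or.inl ⟨Finset.univ.filter (Essential f), f 0, by omega, fun x => ?_⟩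
  rw [eq_add_sum_of_fixVar_one _ hw x, Finset.sum_filter, add_comm]
  simp [ite_mul]

lemma isSpecial_of_forall_diag_eq (h2 : 2 ≤ essArity f)
    (hdiag : ∀ a b, a ≠ b → Essential f a → Essential f b → diag f a b 0 = diag f a b 1) :
    IsSpecial f := by
  rcases h2.eq_or_lt with h | h
  · exact isSpecial_of_forall_diag_eq_of_eq_two h.symm hdiag
  · exact isSpecial_of_forall_diag_eq_of_three_le h hdiag

lemma fixVar_diag_eq_fixVar₃ (hij : i ≠ j) (hik : i ≠ k) (a b : ZMod 2) :
    fixVar (diag f j k b) i a = fixVar₃ f i j k a b b := by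
  rw [diag, fixVar_comm hik.symm, fixVar_comm hij.symm]
  rfl

lemma fixVar₃_mixed_eq_diag (hij : i ≠ j) (hik : i ≠ k) (hk : k ∉ coverSet f i j)
    (hmax : ¬ (diag f j k 0 ≠ diag f j k 1 ∧ coverSet f i j ⊂ coverSet f j k)) :
    (fixVar₃ f i j k 1 0 0 = diag f i j 1 ∧ fixVar₃ f i j k 0 1 1 = diag f i j 0) ∨
      (fixVar₃ f i j k 1 0 0 = diag f i j 0 ∧ fixVar₃ f i j k 0 1 1 = diag f i j 1) := by
  have hdiag := fixVar₃_self_of_notMem_coverSet hk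
  have hfix := fixVar_diag_eq_fixVar₃ (f := f) hij hik
  have hsub : coverSet f i j ⊆ coverSet f j k := by
    rintro c ⟨a, hc⟩
    have hci : c ≠ i := fun hci => not_essential_diag_left a (hci ▸ hc)
    refine ⟨a, essential_of_essential_fixVar hci (a := a) ?_⟩
    rwa [hfix, hdiag a a]
  by_cases hdiag_jk : diag f j k 0 = diag f j k 1
  · left
    constructor
    · rw [← hfix, hdiag_jk, hfix, hdiag]
    · rw [← hfix, ← hdiag_jk, hfix, hdiag]
  · have hi : i ∉ coverSet f j k := fun hi =>
      hmax ⟨hdiag_jk, hsub, fun h => left_notMem_coverSet (h hi)⟩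
    have hflat : ∀ b, fixVar₃ f i j k 0 b b = fixVar₃ f i j k 1 b b := fun b => by
      rw [← hfix, ← hfix, not_essential_iff_fixVar_eq.1 (fun h => hi ⟨b, h⟩),
        not_essential_iff_fixVar_eq.1 (fun h => hi ⟨b, h⟩)]
    right
    constructor
    · rw [← hflat, hdiag]
    · rw [hflat, hdiag]

def maj (t a b c : ZMod 2) : ZMod 2 := a * b + a * c + b * c + t * (a + b)

lemma maj_self (t a c : ZMod 2) : maj t a a c = a := by
  revert t a c
  decide

lemma maj_comm (t a b c : ZMod 2) : maj t a b c = maj t b a c := by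
  unfold maj
  ring

structure MajorityDecomposition (g : (Fin n → ZMod 2) → ZMod 2) (i j c : Fin n) (t : ZMod 2)
    (A D : (Fin n → ZMod 2) → ZMod 2) : Prop where
  not_essential_left : ¬ Essential A i ∧ ¬ Essential D i
  not_essential_right : ¬ Essential A j ∧ ¬ Essential D j
  ne_zero : D ≠ 0
  eq : ∀ x, g x = A x + maj t (x i) (x j) (x c) * D x

lemma exists_fixVar₃_eq_ite_maj (hik : i ≠ k) (hjk : j ≠ k) (hk : Essential f k)
    (hkc : k ∉ coverSet f i j)
    (h₁ : (fixVar₃ f i j k 1 0 0 = diag f i j 1 ∧ fixVar₃ f i j k 0 1 1 = diag f i j 0) ∨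
      (fixVar₃ f i j k 1 0 0 = diag f i j 0 ∧ fixVar₃ f i j k 0 1 1 = diag f i j 1))
    (h₂ : (fixVar₃ f i j k 0 1 0 = diag f i j 1 ∧ fixVar₃ f i j k 1 0 1 = diag f i j 0) ∨
      (fixVar₃ f i j k 0 1 0 = diag f i j 0 ∧ fixVar₃ f i j k 1 0 1 = diag f i j 1)) :
    ∃ t, ∀ a b c, fixVar₃ f i j k a b c =
      if maj t a b c = 0 then diag f i j 0 else diag f i j 1 := by
  have hdiag := fixVar₃_self_of_notMem_coverSet hkc
  have hdep : fixVar₃ f i j k 1 0 0 ≠ fixVar₃ f i j k 1 0 1 ∨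
      fixVar₃ f i j k 0 1 0 ≠ fixVar₃ f i j k 0 1 1 := by
    obtain ⟨a, ha⟩ := exists_essential_fixVar hik.symm hk
    obtain ⟨b, hb⟩ := exists_essential_fixVar hjk.symm ha
    have hab := essential_iff_fixVar_ne.1 hb
    rcases zmod_two_cases a with rfl | rfl <;> rcases zmod_two_cases b with rfl | rfl
    · exact absurd ((hdiag _ 0).trans (hdiag _ 1).symm) hab
    · exact Or.inr hab
    · exact Or.inl hab
    · exact absurd ((hdiag _ 0).trans (hdiag _ 1).symm) hab
  have h2 : (1 : ZMod 2) + 1 = 0 := by decide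
  rcases h₁ with ⟨h100, h011⟩ | ⟨h100, h011⟩ <;> rcases h₂ with ⟨h010, h101⟩ | ⟨h010, h101⟩
  · refine ⟨1, fun a b c => ?_⟩
    rcases zmod_two_cases a with rfl | rfl <;> rcases zmod_two_cases b with rfl | rfl <;>
      rcases zmod_two_cases c with rfl | rfl <;> simp [maj, hdiag, h100, h011, h010, h101, h2]
  · exact absurd hdep (by simp [h100, h011, h010, h101])
  · exact absurd hdep (by simp [h100, h011, h010, h101])
  · refine ⟨0, fun a b c => ?_⟩
    rcases zmod_two_cases a with rfl | rfl <;> rcases zmod_two_cases b with rfl | rfl <;>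
      rcases zmod_two_cases c with rfl | rfl <;> simp [maj, hdiag, h100, h011, h010, h101, h2]

lemma majorityDecomposition_of_fixVar₃_eq_ite {t : ZMod 2} (hij : diag f i j 0 ≠ diag f i j 1)
    (ht : ∀ a b c, fixVar₃ f i j k a b c =
      if maj t a b c = 0 then diag f i j 0 else diag f i j 1) :
    MajorityDecomposition f i j k t (diag f i j 0) (diag f i j 0 + diag f i j 1) := by
  refine ⟨⟨not_essential_diag_left 0, ?_⟩, ⟨not_essential_diag_right 0, ?_⟩, ?_, fun x => ?_⟩
  · exact not_essential_add (not_essential_diag_left 0) (not_essential_diag_left 1)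
  · exact not_essential_add (not_essential_diag_right 0) (not_essential_diag_right 1)
  · refine fun h => hij (funext fun x => ?_)
    have := congrFun h x
    simp only [Pi.add_apply, Pi.zero_apply] at this
    grind
  · conv_lhs => rw [← fixVar₃_apply_self f i j k x, ht]
    rcases zmod_two_cases (maj t (x i) (x j) (x k)) with h | h
    · simp [h]
    · simp [h]
      grind

namespace MajorityDecomposition

variable {g A D : (Fin n → ZMod 2) → ZMod 2} {i j c l : Fin n} {t : ZMod 2}

lemma symm (h : MajorityDecomposition g i j c t A D) : MajorityDecomposition g j i c t A D :=
  ⟨h.not_essential_right, h.not_essential_left, h.ne_zero, fun x => by rw [h.eq, maj_comm]⟩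

lemma apply_update_update (h : MajorityDecomposition g i j c t A D) (hij : i ≠ j) (hic : i ≠ c)
    (hjc : j ≠ c) (x : Fin n → ZMod 2) (a b : ZMod 2) :
    g (update (update x i a) j b) = A x + maj t a b (x c) * D x := by
  rw [h.eq, apply_update_of_not_essential h.not_essential_right.1,
    apply_update_of_not_essential h.not_essential_left.1,
    apply_update_of_not_essential h.not_essential_right.2,
    apply_update_of_not_essential h.not_essential_left.2]
  simp [hij, hic.symm, hjc.symm]

lemma diag_eq (h : MajorityDecomposition g i j c t A D) (a : ZMod 2) :
    diag g i j a = A + a • D := by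
  funext x
  rw [diag, fixVar, fixVar, h.eq, apply_update_of_not_essential h.not_essential_left.1,
    apply_update_of_not_essential h.not_essential_right.1,
    apply_update_of_not_essential h.not_essential_left.2,
    apply_update_of_not_essential h.not_essential_right.2]
  simp [update_apply, maj_self]

lemma exists_eq_one (h : MajorityDecomposition g i j c t A D) : ∃ y, D y = 1 := by
  by_contra! hy
  exact h.ne_zero (funext fun y => (zmod_two_cases (D y)).resolve_right (hy y))

lemma essential_left (h : MajorityDecomposition g i j c t A D) (hij : i ≠ j) (hic : i ≠ c)
    (hjc : j ≠ c) : Essential g i := by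
  obtain ⟨y, hy⟩ := h.exists_eq_one
  rw [essential_iff_fixVar_ne]
  intro heq
  have := congrFun heq (update y j (y c + t + 1))
  rw [fixVar, fixVar, update_comm hij.symm, update_comm hij.symm,
    h.apply_update_update hij hic hjc, h.apply_update_update hij hic hjc, hy, mul_one, mul_one,
    add_left_cancel_iff] at this
  exact (by decide : ∀ t v : ZMod 2, maj t 0 (v + t + 1) v ≠ maj t 1 (v + t + 1) v) t (y c) this

lemma essential_third (h : MajorityDecomposition g i j c t A D) (hij : i ≠ j) (hic : i ≠ c)
    (hjc : j ≠ c) : Essential g c := by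
  obtain ⟨y, hy⟩ := h.exists_eq_one
  by_contra hg
  have key : ∀ a b, A (update y c 0) + maj t a b 0 * D (update y c 0) =
      A (update y c 1) + maj t a b 1 * D (update y c 1) := by
    intro a b
    have hv : ∀ v, A (update y c v) + maj t a b v * D (update y c v) =
        g (update (update y i a) j b) := fun v => by
      rw [← apply_update_of_not_essential hg _ v, ← update_comm hjc.symm,
        ← update_comm hic.symm, h.apply_update_update hij hic hjc, update_self]
    rw [hv, hv]
  obtain ⟨h0, h1⟩ := (by decide : ∀ t α₀ α₁ δ₀ δ₁ : ZMod 2,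
    (∀ a b, α₀ + maj t a b 0 * δ₀ = α₁ + maj t a b 1 * δ₁) → δ₀ = 0 ∧ δ₁ = 0) t _ _ _ _ key
  rw [← update_eq_self c y] at hy
  rcases zmod_two_cases (y c) with hc | hc <;> rw [hc] at hy <;> simp_all

lemma essential_iff (h : MajorityDecomposition g i j c t A D) (hij : i ≠ j) (hic : i ≠ c)
    (hjc : j ≠ c) :
    Essential g l ↔ (l = i ∨ l = j ∨ l = c) ∨ Essential A l ∨ Essential D l := by
  refine ⟨fun hl => ?_, ?_⟩
  · by_contra! hne
    obtain ⟨⟨hli, hlj, hlc⟩, hA, hD⟩ := hne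
    refine absurd hl (not_essential_iff_fixVar_eq.2 fun v => funext fun x => ?_)
    simp only [fixVar, h.eq, apply_update_of_not_essential hA, apply_update_of_not_essential hD,
      update_of_ne hli.symm, update_of_ne hlj.symm, update_of_ne hlc.symm]
  · rintro ((rfl | rfl | rfl) | hA | hD)
    · exact h.essential_left hij hic hjc
    · exact h.symm.essential_left hij.symm hjc hic
    · exact h.essential_third hij hic hjc
    · exact essential_of_essential_diag (a := 0) (by rwa [h.diag_eq, zero_smul, add_zero])
    · by_contra hl
      have hA : ¬ Essential A l := fun hA =>
        hl (essential_of_essential_diag (a := 0) (by rwa [h.diag_eq, zero_smul, add_zero]))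
      have hAD : ¬ Essential (A + D) l := fun hAD =>
        hl (essential_of_essential_diag (a := 1) (by rwa [h.diag_eq, one_smul]))
      have hDeq : D = A + (A + D) := by
        funext x
        simp only [Pi.add_apply]
        grind
      exact not_essential_add hA hAD (hDeq ▸ hD)

lemma idMinor (h : MajorityDecomposition g i j c t A D) (hA : ¬ Essential A c)
    (hD : ¬ Essential D c) (hci : c ≠ i) (hcj : c ≠ j) (m : Fin n) :
    MajorityDecomposition (idMinor g c m) i j m t A D := by
  refine ⟨h.not_essential_left, h.not_essential_right, h.ne_zero, fun x => ?_⟩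
  rw [_root_.idMinor, h.eq, apply_update_of_not_essential hA, apply_update_of_not_essential hD,
    update_of_ne hci.symm, update_of_ne hcj.symm, update_self]

lemma isGoodPair (h : MajorityDecomposition f i j k t A D) (hij : i ≠ j) (hik : i ≠ k)
    (hjk : j ≠ k) (hAk : ¬ Essential A k) (hDk : ¬ Essential D k) {c : Fin n}
    (hc : Essential f c) (hci : c ≠ i) (hcj : c ≠ j) (hck : c ≠ k) : IsGoodPair f k c := by
  have hm := h.idMinor hAk hDk hik.symm hjk.symm c
  refine ⟨hck.symm, (h.essential_iff hij hik hjk).2 (Or.inl (Or.inr (Or.inr rfl))), hc,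
    fun l hl hlk => (hm.essential_iff hij hci.symm hcj.symm).2 ?_⟩
  rcases (h.essential_iff hij hik hjk).1 hl with (hli | hlj | hlk') | hAD
  exacts [Or.inl (Or.inl hli), Or.inl (Or.inr (Or.inl hlj)), absurd hlk' hlk, Or.inr hAD]

lemma isSpecial (h : MajorityDecomposition f i j k t A D) (hij : i ≠ j) (hik : i ≠ k)
    (hjk : j ≠ k) (hAk : ¬ Essential A k) (hDk : ¬ Essential D k)
    (hE : ∀ l, Essential f l → l = i ∨ l = j ∨ l = k) : IsSpecial f := by
  have hconst : ∀ B : (Fin n → ZMod 2) → ZMod 2, ¬ Essential B i → ¬ Essential B j →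
      ¬ Essential B k → (∀ l, Essential B l → Essential f l) → ∀ x, B x = B 0 := by
    refine fun B hi hj hk hB x => dependsOn_essential B fun l hl => ?_
    rcases hE l (hB l hl) with rfl | rfl | rfl
    exacts [absurd hl hi, absurd hl hj, absurd hl hk]
  have hess := fun l => (h.essential_iff (l := l) hij hik hjk).2
  have hA := hconst A h.not_essential_left.1 h.not_essential_right.1 hAk
    fun l hl => hess l (Or.inr (Or.inl hl))
  have hD := hconst D h.not_essential_left.2 h.not_essential_right.2 hDk
    fun l hl => hess l (Or.inr (Or.inr hl))
  have hD1 : D 0 = 1 := (zmod_two_cases (D 0)).resolve_left fun hD0 =>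
    h.ne_zero (funext fun x => by rw [hD x, hD0, Pi.zero_apply])
  rcases zmod_two_cases t with rfl | rfl
  · refine Or.inr (Or.inr (Or.inl ⟨i, j, k, A 0, hij, hik, hjk, fun x => ?_⟩))
    rw [h.eq, hA x, hD x, hD1, maj]
    ring
  · refine Or.inr (Or.inr (Or.inr ⟨i, j, k, A 0, hij, hik, hjk, fun x => ?_⟩))
    rw [h.eq, hA x, hD x, hD1, maj]
    ring

end MajorityDecomposition

lemma exists_isGoodPair_or_isSpecial_of_diag_ne
    (hne : ∃ i j, i ≠ j ∧ Essential f i ∧ Essential f j ∧ diag f i j 0 ≠ diag f i j 1) :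
    (∃ i j, IsGoodPair f i j) ∨ IsSpecial f := by
  obtain ⟨⟨i, j⟩, ⟨hij, hi, hj, hdiag_ij⟩, hmax⟩ := Set.exists_max_image
    {p : Fin n × Fin n | p.1 ≠ p.2 ∧ Essential f p.1 ∧ Essential f p.2 ∧
      diag f p.1 p.2 0 ≠ diag f p.1 p.2 1}
    (fun p => (coverSet f p.1 p.2).ncard) (Set.toFinite _)
    (by obtain ⟨i, j, h⟩ := hne; exact ⟨(i, j), h⟩)
  have hmax' : ∀ a b, a ≠ b → Essential f a → Essential f b →
      ¬ (diag f a b 0 ≠ diag f a b 1 ∧ coverSet f i j ⊂ coverSet f a b) :=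
    fun a b hab ha hb ⟨hd, hlt⟩ =>
      (hmax (a, b) ⟨hab, ha, hb, hd⟩).not_gt (Set.ncard_lt_ncard hlt)
  by_cases hcov : ∀ k, Essential f k → k ≠ i → k ≠ j → k ∈ coverSet f i j
  · exact Or.inl ⟨i, j, .of_mem_coverSet hij hi hj ⟨0, 1, hdiag_ij⟩ hcov⟩
  obtain ⟨k, hk, hki, hkj, hkc⟩ : ∃ k, Essential f k ∧ k ≠ i ∧ k ≠ j ∧ k ∉ coverSet f i j := by
    simpa using hcov
  have h₁ := fixVar₃_mixed_eq_diag hij hki.symm hkc (hmax' j k hkj.symm hj hk)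
  have h₂ := fixVar₃_mixed_eq_diag hij.symm hkj.symm (coverSet_comm hij ▸ hkc)
    (coverSet_comm hij ▸ hmax' i k hki.symm hi hk)
  rw [← diag_comm hij, fixVar₃_swap hij, fixVar₃_swap hij] at h₂
  obtain ⟨t, ht⟩ := exists_fixVar₃_eq_ite_maj hki.symm hkj.symm hk hkc h₁ h₂
  have h := majorityDecomposition_of_fixVar₃_eq_ite hdiag_ij ht
  have hAk : ¬ Essential (diag f i j 0) k := fun he => hkc ⟨0, he⟩
  have hDk := not_essential_add hAk fun he => hkc ⟨1, he⟩
  by_cases h4 : ∃ c, Essential f c ∧ c ≠ i ∧ c ≠ j ∧ c ≠ k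
  · obtain ⟨c, hc, hci, hcj, hck⟩ := h4
    exact Or.inl ⟨k, c, h.isGoodPair hij hki.symm hkj.symm hAk hDk hc hci hcj hck⟩
  · refine Or.inr (h.isSpecial hij hki.symm hkj.symm hAk hDk fun l hl => ?_)
    by_contra! hl'
    exact h4 ⟨l, hl, hl'⟩

theorem exists_isGoodPair_or_isSpecial (hf : 2 ≤ essArity f) :
    (∃ i j, IsGoodPair f i j) ∨ IsSpecial f := by
  by_cases hne : ∃ i j, i ≠ j ∧ Essential f i ∧ Essential f j ∧ diag f i j 0 ≠ diag f i j 1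
  · exact exists_isGoodPair_or_isSpecial_of_diag_ne hne
  · exact Or.inr (isSpecial_of_forall_diag_eq hf fun a b hab ha hb => by
      by_contra h
      exact hne ⟨a, b, hab, ha, hb, h⟩)

end Boolean

end ArityGap

/-- If a Boolean function with at least two essential variables is not of any of the four
special forms, then its arity gap is `1`: some identification of two essential variables
loses exactly one essential variable. -/
theorem stmt_7 {n : ℕ} (f : (Fin n → ZMod 2) → ZMod 2) (hf : 2 ≤ essArity f)
    (hspec :
      ¬ ((∃ (S : Finset (Fin n)) (c : ZMod 2), 2 ≤ S.card ∧
            ∀ x : Fin n → ZMod 2, f x = (∑ i ∈ S, x i) + c) ∨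
         (∃ (i j : Fin n) (c : ZMod 2), i ≠ j ∧
            ∀ x : Fin n → ZMod 2, f x = x i * x j + x i + c) ∨
         (∃ (i j k : Fin n) (c : ZMod 2), i ≠ j ∧ i ≠ k ∧ j ≠ k ∧
            ∀ x : Fin n → ZMod 2, f x = x i * x j + x i * x k + x j * x k + c) ∨
         (∃ (i j k : Fin n) (c : ZMod 2), i ≠ j ∧ i ≠ k ∧ j ≠ k ∧
            ∀ x : Fin n → ZMod 2,
              f x = x i * x j + x i * x k + x j * x k + x i + x j + c))) :
    arityGap f = 1 ∧
      ∃ i j : Fin n, i ≠ j ∧ Essential f i ∧ Essential f j ∧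
        essArity (idMinor f i j) = essArity f - 1 := by
  rcases ArityGap.exists_isGoodPair_or_isSpecial hf with ⟨i, j, h⟩ | h
  · exact ⟨h.arityGap_eq_one, i, j, h.ne, h.essential_left, h.essential_right,
      h.essArity_idMinor⟩
  · exact absurd h hspec
end

section
/- Every Boolean function f : (ZMod 2)^n → ZMod 2 with at least 2 essential variables has arity gap equal to 1 or 2. -/
namespace Stmt8
open Finset

variable {n : ℕ}

/-- basis vector -/
def e (i : Fin n) : Fin n → ZMod 2 := fun j => if j = i then 1 else 0

@[simp] lemma e_self (i : Fin n) : e i i = 1 := by simp [e]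

lemma e_ne {i j : Fin n} (h : j ≠ i) : e i j = 0 := by simp [e, h]

/-- dot product -/
def dot (u x : Fin n → ZMod 2) : ZMod 2 := ∑ c, u c * x c

lemma dot_comm (u x : Fin n → ZMod 2) : dot u x = dot x u := by
  unfold dot; exact Finset.sum_congr rfl fun c _ => mul_comm _ _

lemma dot_add_right (u x y : Fin n → ZMod 2) : dot u (x + y) = dot u x + dot u y := by
  unfold dot
  rw [← Finset.sum_add_distrib]
  exact Finset.sum_congr rfl fun c _ => by simp [mul_add]

lemma dot_add_left (u v x : Fin n → ZMod 2) : dot (u + v) x = dot u x + dot v x := by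
  rw [dot_comm, dot_add_right, dot_comm x u, dot_comm x v]

lemma dot_e_right (u : Fin n → ZMod 2) (k : Fin n) : dot u (e k) = u k := by
  unfold dot
  rw [Finset.sum_eq_single k]
  · simp
  · intro c _ hc
    rw [e_ne hc, mul_zero]
  · intro h; exact absurd (Finset.mem_univ k) h

lemma dot_e_left (k : Fin n) (x : Fin n → ZMod 2) : dot (e k) x = x k := by
  rw [dot_comm, dot_e_right]

/-- sign -/
def sgn : ZMod 2 → ℤ := fun a => if a = 0 then 1 else -1

@[simp] lemma sgn_zero : sgn 0 = 1 := rfl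
@[simp] lemma sgn_one : sgn (1 : ZMod 2) = -1 := rfl

lemma sgn_add (a b : ZMod 2) : sgn (a + b) = sgn a * sgn b := by revert a b; decide

lemma zmod2_ne_iff {a b : ZMod 2} (h : a ≠ b) : a + b = 1 := by revert h; revert a b; decide

lemma zmod2_add_self (a : ZMod 2) : a + a = 0 := by revert a; decide

lemma zmod2_ne_update {a b : ZMod 2} (h : b ≠ a) : b = a + 1 := by revert h; revert a b; decide

lemma sgn_ne {a b : ZMod 2} (h : a ≠ b) : sgn a ≠ sgn b := by revert h; revert a b; decide


lemma dot_zero_right (u : Fin n → ZMod 2) : dot u 0 = 0 := by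
  unfold dot; simp

lemma sum_translate (g : (Fin n → ZMod 2) → ℤ) (t : Fin n → ZMod 2) :
    ∑ x : Fin n → ZMod 2, g (x + t) = ∑ x : Fin n → ZMod 2, g x :=
  Fintype.sum_equiv (Equiv.addRight t) _ _ (fun _ => rfl)

lemma vec_add_self (v : Fin n → ZMod 2) : v + v = 0 := by
  funext c; exact zmod2_add_self (v c)

lemma add_add_cancel (w v : Fin n → ZMod 2) : w + v + v = w := by
  rw [add_assoc, vec_add_self, add_zero]

lemma vec_eq_of_add_eq_zero {x y : Fin n → ZMod 2} (h : x + y = 0) : x = y := by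
  have h2 : x + y + y = 0 + y := by rw [h]
  rwa [add_add_cancel, zero_add] at h2

lemma sum_sgn_dot_right {u : Fin n → ZMod 2} (hu : u ≠ 0) :
    ∑ x : Fin n → ZMod 2, sgn (dot u x) = 0 := by
  have hex : ∃ i, u i ≠ 0 := by
    by_contra h; push_neg at h; exact hu (funext h)
  obtain ⟨i, hi⟩ := hex
  have hi1 : u i = 1 := by
    have := zmod2_ne_iff hi; rwa [add_zero] at this
  have h1 : ∑ x : Fin n → ZMod 2, sgn (dot u (x + e i)) = ∑ x : Fin n → ZMod 2, sgn (dot u x) :=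
    sum_translate (fun x => sgn (dot u x)) (e i)
  have h2 : ∀ x : Fin n → ZMod 2, sgn (dot u (x + e i)) = - sgn (dot u x) := by
    intro x
    rw [dot_add_right, dot_e_right, hi1, sgn_add, sgn_one]
    ring
  rw [Finset.sum_congr rfl (fun x _ => h2 x), Finset.sum_neg_distrib] at h1
  linarith

lemma sum_sgn_dot_left {z : Fin n → ZMod 2} (hz : z ≠ 0) :
    ∑ u : Fin n → ZMod 2, sgn (dot u z) = 0 := by
  have hc : ∀ u : Fin n → ZMod 2, sgn (dot u z) = sgn (dot z u) := fun u => by rw [dot_comm]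
  rw [Finset.sum_congr rfl (fun u _ => hc u)]
  exact sum_sgn_dot_right hz

lemma inversion (g : (Fin n → ZMod 2) → ℤ)
    (h : ∀ u : Fin n → ZMod 2, ∑ x : Fin n → ZMod 2, g x * sgn (dot u x) = 0) :
    ∀ y, g y = 0 := by
  intro y
  have inner : ∀ x : Fin n → ZMod 2,
      ∑ u : Fin n → ZMod 2, sgn (dot u (x + y))
        = if x = y then (Fintype.card (Fin n → ZMod 2) : ℤ) else 0 := by
    intro x
    by_cases hxy : x = y
    · subst hxy
      rw [vec_add_self]
      simp [dot_zero_right, if_pos rfl]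
    · rw [if_neg hxy]
      apply sum_sgn_dot_left
      intro hz
      exact hxy (vec_eq_of_add_eq_zero hz)
  have key : ∑ u : Fin n → ZMod 2, (∑ x : Fin n → ZMod 2, g x * sgn (dot u x)) * sgn (dot u y)
      = (Fintype.card (Fin n → ZMod 2) : ℤ) * g y := by
    calc ∑ u : Fin n → ZMod 2, (∑ x : Fin n → ZMod 2, g x * sgn (dot u x)) * sgn (dot u y)
        = ∑ u : Fin n → ZMod 2, ∑ x : Fin n → ZMod 2, g x * (sgn (dot u x) * sgn (dot u y)) := by
          refine Finset.sum_congr rfl fun u _ => ?_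
          rw [Finset.sum_mul]
          exact Finset.sum_congr rfl fun x _ => by ring
      _ = ∑ x : Fin n → ZMod 2, ∑ u : Fin n → ZMod 2, g x * (sgn (dot u x) * sgn (dot u y)) :=
          Finset.sum_comm
      _ = ∑ x : Fin n → ZMod 2, g x * ∑ u : Fin n → ZMod 2, sgn (dot u (x + y)) := by
          refine Finset.sum_congr rfl fun x _ => ?_
          rw [Finset.mul_sum]
          refine Finset.sum_congr rfl fun u _ => ?_
          rw [dot_add_right, sgn_add]
      _ = ∑ x : Fin n → ZMod 2, g x *
            (if x = y then (Fintype.card (Fin n → ZMod 2) : ℤ) else 0) := by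
          exact Finset.sum_congr rfl fun x _ => by rw [inner x]
      _ = g y * (Fintype.card (Fin n → ZMod 2) : ℤ) := by
          rw [Finset.sum_eq_single y]
          · simp
          · intro b _ hb; rw [if_neg hb, mul_zero]
          · intro hy; exact absurd (Finset.mem_univ y) hy
      _ = (Fintype.card (Fin n → ZMod 2) : ℤ) * g y := mul_comm _ _
  have hz : ∑ u : Fin n → ZMod 2, (∑ x : Fin n → ZMod 2, g x * sgn (dot u x)) * sgn (dot u y) = 0 := by
    refine Finset.sum_eq_zero fun u _ => ?_
    rw [h u, zero_mul]
  rw [hz] at key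
  have hcard : (0:ℤ) < (Fintype.card (Fin n → ZMod 2) : ℤ) := by
    exact_mod_cast Fintype.card_pos
  have := key.symm
  rcases mul_eq_zero.mp this with h1 | h2
  · linarith
  · exact h2


variable (f : (Fin n → ZMod 2) → ZMod 2)

/-- (-1)^f -/
def FF : (Fin n → ZMod 2) → ℤ := fun x => sgn (f x)

/-- Fourier coefficient -/
def hat (u : Fin n → ZMod 2) : ℤ := ∑ x : Fin n → ZMod 2, FF f x * sgn (dot u x)

/-- difference in direction t -/
def Dd (t : Fin n → ZMod 2) : (Fin n → ZMod 2) → ℤ := fun x => FF f (x + t) - FF f x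

lemma Dd_hat (t : Fin n → ZMod 2) (v : Fin n → ZMod 2) :
    ∑ x : Fin n → ZMod 2, Dd f t x * sgn (dot v x)
      = (sgn (dot v t) - 1) * hat f v := by
  have h1 : ∑ x : Fin n → ZMod 2, Dd f t x * sgn (dot v x)
      = (∑ x : Fin n → ZMod 2, FF f (x + t) * sgn (dot v x)) - hat f v := by
    unfold Dd hat
    rw [← Finset.sum_sub_distrib]
    exact Finset.sum_congr rfl fun x _ => by ring
  have h2 : ∑ x : Fin n → ZMod 2, FF f (x + t) * sgn (dot v x)
      = sgn (dot v t) * hat f v := by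
    have reidx : ∑ x : Fin n → ZMod 2, FF f (x + t) * sgn (dot v x)
        = ∑ x : Fin n → ZMod 2, FF f (x + t) * sgn (dot v ((x + t) + t)) := by
      refine Finset.sum_congr rfl fun x _ => ?_
      rw [add_add_cancel]
    rw [reidx, sum_translate (fun y => FF f y * sgn (dot v (y + t))) t]
    unfold hat
    rw [Finset.mul_sum]
    refine Finset.sum_congr rfl fun y _ => ?_
    rw [dot_add_right, sgn_add]
    ring
  rw [h1, h2]; ring

lemma update_eq_add_e (x : Fin n → ZMod 2) (k : Fin n) :
    Function.update x k (x k + 1) = x + e k := by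
  funext c
  by_cases hc : c = k
  · subst hc; simp [e]
  · simp [Function.update_of_ne hc, e_ne hc, Pi.add_apply]

lemma essential_iff_flip (k : Fin n) :
    Essential f k ↔ ∃ x, f (x + e k) ≠ f x := by
  constructor
  · rintro ⟨a, b, hab⟩
    by_cases hb : b = a k
    · subst hb; simp at hab
    · refine ⟨a, ?_⟩
      have hb1 : b = a k + 1 := zmod2_ne_update hb
      rw [← update_eq_add_e, ← hb1]
      exact fun h => hab h.symm
  · rintro ⟨x, hx⟩
    exact ⟨x, x k + 1, fun h => hx (by rw [← update_eq_add_e]; exact h.symm)⟩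

lemma FF_ne {x y : Fin n → ZMod 2} (h : f x ≠ f y) : FF f x ≠ FF f y := sgn_ne h

lemma essential_fourier {k : Fin n} (h : Essential f k) :
    ∃ u : Fin n → ZMod 2, u k = 1 ∧ hat f u ≠ 0 := by
  by_contra hc
  push_neg at hc
  obtain ⟨x₀, hx₀⟩ := (essential_iff_flip f k).mp h
  have hzero : ∀ u : Fin n → ZMod 2,
      ∑ x : Fin n → ZMod 2, Dd f (e k) x * sgn (dot u x) = 0 := by
    intro u
    rw [Dd_hat, dot_e_right]
    by_cases hk : u k = 1
    · rw [hc u hk, mul_zero]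
    · have : u k = 0 := by
        rcases (by decide : ∀ a : ZMod 2, a = 0 ∨ a = 1) (u k) with h0 | h1
        · exact h0
        · exact absurd h1 hk
      rw [this, sgn_zero]; ring
  have := inversion (Dd f (e k)) hzero x₀
  unfold Dd at this
  have hne : FF f (x₀ + e k) ≠ FF f x₀ := FF_ne f hx₀
  omega

/-- separator Fourier pairing -/
lemma sep_fourier {i j k : Fin n} (hki : k ≠ i) (hkj : k ≠ j)
    (hsep : ∀ x : Fin n → ZMod 2, x i = x j → f (x + e k) = f x) :
    ∀ u : Fin n → ZMod 2, u k = 1 → hat f (u + (e i + e j)) = - hat f u := by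
  intro u huk
  -- T x := Dd (e k) x * (1 + sgn (x i + x j)) ≡ 0
  have hT : ∀ x : Fin n → ZMod 2, Dd f (e k) x * (1 + sgn (x i + x j)) = 0 := by
    intro x
    by_cases hx : x i = x j
    · have : Dd f (e k) x = 0 := by
        unfold Dd FF; rw [hsep x hx]; ring
      rw [this, zero_mul]
    · have : x i + x j = 1 := zmod2_ne_iff hx
      rw [this, sgn_one]; ring
  have hsum : ∑ x : Fin n → ZMod 2, (Dd f (e k) x * (1 + sgn (x i + x j))) * sgn (dot u x) = 0 :=
    Finset.sum_eq_zero fun x _ => by rw [hT x, zero_mul]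
  have hexpand : ∑ x : Fin n → ZMod 2, (Dd f (e k) x * (1 + sgn (x i + x j))) * sgn (dot u x)
      = (∑ x : Fin n → ZMod 2, Dd f (e k) x * sgn (dot u x))
        + (∑ x : Fin n → ZMod 2, Dd f (e k) x * sgn (dot (u + (e i + e j)) x)) := by
    rw [← Finset.sum_add_distrib]
    refine Finset.sum_congr rfl fun x _ => ?_
    have hdd : dot (u + (e i + e j)) x = dot u x + (x i + x j) := by
      rw [dot_add_left, dot_add_left, dot_e_left, dot_e_left]
    have hxij : sgn (x i + x j) * sgn (dot u x) = sgn (dot (u + (e i + e j)) x) := by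
      have hs : sgn (dot u x + (x i + x j)) = sgn (dot u x) * sgn (x i + x j) := sgn_add _ _
      rw [hdd, hs]; ring
    calc (Dd f (e k) x * (1 + sgn (x i + x j))) * sgn (dot u x)
        = Dd f (e k) x * sgn (dot u x)
          + Dd f (e k) x * (sgn (x i + x j) * sgn (dot u x)) := by ring
      _ = _ := by rw [hxij]
  rw [hexpand] at hsum
  rw [Dd_hat, Dd_hat, dot_e_right, dot_e_right] at hsum
  have hk2 : (u + (e i + e j)) k = 1 := by
    have h1 : (u + (e i + e j)) k = u k + (e i k + e j k) := rfl
    rw [h1, e_ne hki, e_ne hkj, huk]; ring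
  rw [huk, hk2, sgn_one] at hsum
  linarith

/-- self-direction Fourier pairing -/
lemma self_fourier {i j : Fin n} (hij : i ≠ j)
    (hself : ∀ x : Fin n → ZMod 2, x i = x j → f (x + (e i + e j)) = f x) :
    ∀ u : Fin n → ZMod 2, u i + u j = 1 → hat f (u + (e i + e j)) = - hat f u := by
  intro u hu
  have hT : ∀ x : Fin n → ZMod 2, Dd f (e i + e j) x * (1 + sgn (x i + x j)) = 0 := by
    intro x
    by_cases hx : x i = x j
    · have : Dd f (e i + e j) x = 0 := by
        unfold Dd FF; rw [hself x hx]; ring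
      rw [this, zero_mul]
    · have : x i + x j = 1 := zmod2_ne_iff hx
      rw [this, sgn_one]; ring
  have hsum : ∑ x : Fin n → ZMod 2, (Dd f (e i + e j) x * (1 + sgn (x i + x j))) * sgn (dot u x) = 0 :=
    Finset.sum_eq_zero fun x _ => by rw [hT x, zero_mul]
  have hexpand : ∑ x : Fin n → ZMod 2, (Dd f (e i + e j) x * (1 + sgn (x i + x j))) * sgn (dot u x)
      = (∑ x : Fin n → ZMod 2, Dd f (e i + e j) x * sgn (dot u x))
        + (∑ x : Fin n → ZMod 2, Dd f (e i + e j) x * sgn (dot (u + (e i + e j)) x)) := by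
    rw [← Finset.sum_add_distrib]
    refine Finset.sum_congr rfl fun x _ => ?_
    have hdd : dot (u + (e i + e j)) x = dot u x + (x i + x j) := by
      rw [dot_add_left, dot_add_left, dot_e_left, dot_e_left]
    have hxij : sgn (x i + x j) * sgn (dot u x) = sgn (dot (u + (e i + e j)) x) := by
      have hs : sgn (dot u x + (x i + x j)) = sgn (dot u x) * sgn (x i + x j) := sgn_add _ _
      rw [hdd, hs]; ring
    calc (Dd f (e i + e j) x * (1 + sgn (x i + x j))) * sgn (dot u x)
        = Dd f (e i + e j) x * sgn (dot u x)
          + Dd f (e i + e j) x * (sgn (x i + x j) * sgn (dot u x)) := by ring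
      _ = _ := by rw [hxij]
  rw [hexpand] at hsum
  rw [Dd_hat, Dd_hat] at hsum
  have hd1 : dot u (e i + e j) = 1 := by
    rw [dot_add_right, dot_e_right, dot_e_right, hu]
  have hd2 : dot (u + (e i + e j)) (e i + e j) = 1 := by
    rw [dot_add_left, hd1, dot_add_left, dot_e_left, dot_e_left]
    have h1 : (e i + e j) i = 1 := by
      have : (e i + e j) i = e i i + e j i := rfl
      rw [this, e_self, e_ne hij, add_zero]
    have h2 : (e i + e j) j = 1 := by
      have : (e i + e j) j = e i j + e j j := rfl
      rw [this, e_self, e_ne hij.symm, zero_add]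
    rw [h1, h2]
    decide
  rw [hd1, hd2, sgn_one] at hsum
  linarith


/-! ### abelian rearrangement helpers -/

lemma pp1 (w : Fin n → ZMod 2) (a b c : Fin n) :
    (w + (e a + e b)) + (e a + e c) = w + (e b + e c) := by
  have h : (w + (e a + e b)) + (e a + e c) = w + (e b + e c) + (e a + e a) := by abel
  rw [h, vec_add_self, add_zero]

lemma pp2 (w : Fin n → ZMod 2) (a b c : Fin n) :
    (w + (e a + e b)) + (e b + e c) = w + (e a + e c) := by
  have h : (w + (e a + e b)) + (e b + e c) = w + (e a + e c) + (e b + e b) := by abel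
  rw [h, vec_add_self, add_zero]

lemma ppcancel (w : Fin n → ZMod 2) (a b : Fin n) :
    (w + (e a + e b)) + (e b + e a) = w := by
  have h : (w + (e a + e b)) + (e b + e a) = w + ((e a + e a) + (e b + e b)) := by abel
  rw [h, vec_add_self, vec_add_self, add_zero, add_zero]

lemma addpair_apply (u : Fin n → ZMod 2) (a b c : Fin n) :
    (u + (e a + e b)) c = u c + e a c + e b c := by
  show u c + (e a c + e b c) = _
  ring

lemma zmod2_cases (a : ZMod 2) : a = 0 ∨ a = 1 := by revert a; decide

/-! ### separators and the main combinatorial lemma -/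

def IsSep (i j k : Fin n) : Prop :=
  k ≠ i ∧ k ≠ j ∧ Essential f k ∧ ∀ x : Fin n → ZMod 2, x i = x j → f (x + e k) = f x

def SelfD (i j : Fin n) : Prop :=
  ∀ x : Fin n → ZMod 2, x i = x j → f (x + (e i + e j)) = f x

lemma mu_flip_two {V : Finset (Fin n)} {u : Fin n → ZMod 2} {i j : Fin n}
    [DecidablePred (Essential f)]
    (hi : i ∈ V) (hj : j ∈ V) (hij : i ≠ j) (hui : u i = 0) (huj : u j = 0) :
    (V.filter (fun c => (u + (e i + e j)) c = 1)).card
      = (V.filter (fun c => u c = 1)).card + 2 := by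
  classical
  have hset : V.filter (fun c => (u + (e i + e j)) c = 1)
      = insert i (insert j (V.filter (fun c => u c = 1))) := by
    ext c
    simp only [Finset.mem_filter, Finset.mem_insert]
    constructor
    · rintro ⟨hcV, hc⟩
      by_cases hci : c = i
      · exact Or.inl hci
      by_cases hcj : c = j
      · exact Or.inr (Or.inl hcj)
      · refine Or.inr (Or.inr ⟨hcV, ?_⟩)
        rwa [addpair_apply, e_ne hci, e_ne hcj, add_zero, add_zero] at hc
    · intro hc
      rcases hc with hci | hcj | ⟨hcV, hc1⟩
      · subst hci
        refine ⟨hi, ?_⟩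
        rw [addpair_apply, e_self, e_ne hij, hui]
        decide
      · subst hcj
        refine ⟨hj, ?_⟩
        rw [addpair_apply, e_self, e_ne hij.symm, huj]
        decide
      · refine ⟨hcV, ?_⟩
        by_cases hci : c = i
        · subst hci; rw [hui] at hc1; exact absurd hc1 (by decide)
        by_cases hcj : c = j
        · subst hcj; rw [huj] at hc1; exact absurd hc1 (by decide)
        · rwa [addpair_apply, e_ne hci, e_ne hcj, add_zero, add_zero]
  rw [hset]
  rw [Finset.card_insert_of_notMem, Finset.card_insert_of_notMem]
  · intro hmem
    exact absurd (Finset.mem_filter.mp hmem).2 (by rw [huj]; decide)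
  · intro hmem
    rcases Finset.mem_insert.mp hmem with h1 | h2
    · exact hij h1
    · exact absurd (Finset.mem_filter.mp h2).2 (by rw [hui]; decide)


lemma addpair_other {u : Fin n → ZMod 2} {a b c : Fin n} (hca : c ≠ a) (hcb : c ≠ b) :
    (u + (e a + e b)) c = u c := by
  rw [addpair_apply, e_ne hca, e_ne hcb, add_zero, add_zero]

lemma addpair_fst {a b : Fin n} (hab : a ≠ b) (u : Fin n → ZMod 2) :
    (u + (e a + e b)) a = u a + 1 := by
  rw [addpair_apply, e_self, e_ne hab, add_zero]

lemma addpair_snd {a b : Fin n} (hab : a ≠ b) (u : Fin n → ZMod 2) :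
    (u + (e a + e b)) b = u b + 1 := by
  rw [addpair_apply, e_ne hab.symm, e_self, add_zero]

lemma walk_full {V : Finset (Fin n)}
    (H2 : ∀ i j : Fin n, i ≠ j → Essential f i → Essential f j →
      ∃ k, IsSep f i j k ∧ (SelfD f i j ∨ ∃ k', k' ≠ k ∧ IsSep f i j k'))
    (hess : ∀ k ∈ V, Essential f k)
    (hclosed : ∀ i ∈ V, ∀ j ∈ V, i ≠ j → ∀ k, IsSep f i j k → k ∈ V)
    (hV3 : 3 ≤ V.card) {u : Fin n → ZMod 2} (huhat : hat f u ≠ 0)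
    (hfull : ∀ c ∈ V, u c = 1) : False := by
  classical
  obtain ⟨i, hiV⟩ := Finset.card_pos.mp (by omega : 0 < V.card)
  have herase : 1 < (V.erase i).card := by
    rw [Finset.card_erase_of_mem hiV]; omega
  obtain ⟨j, hj, l, hl, hjl⟩ := Finset.one_lt_card.mp herase
  have hjV : j ∈ V := Finset.mem_of_mem_erase hj
  have hlV : l ∈ V := Finset.mem_of_mem_erase hl
  have hji : j ≠ i := Finset.ne_of_mem_erase hj
  have hli : l ≠ i := Finset.ne_of_mem_erase hl
  -- move 1 : pair (i,j)
  obtain ⟨k₁, hk₁, _⟩ := H2 i j hji.symm (hess i hiV) (hess j hjV)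
  have hk₁V : k₁ ∈ V := hclosed i hiV j hjV hji.symm k₁ hk₁
  have h1 : hat f (u + (e i + e j)) = - hat f u :=
    sep_fourier f hk₁.1 hk₁.2.1 hk₁.2.2.2 u (hfull k₁ hk₁V)
  -- move 2 : pair (j,l)
  obtain ⟨k, hk, hsnd⟩ := H2 j l hjl (hess j hjV) (hess l hlV)
  have hkV : k ∈ V := hclosed j hjV l hlV hjl k hk
  have h2 : hat f ((u + (e i + e j)) + (e j + e l)) = - hat f (u + (e i + e j)) := by
    by_cases hki : k = i
    · rcases hsnd with hself | ⟨k', hk'k, hk'⟩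
      · have hj0 : (u + (e i + e j)) j = 0 := by
          rw [addpair_snd hji.symm, hfull j hjV]; decide
        have hl1 : (u + (e i + e j)) l = 1 := by
          rw [addpair_other hli hjl.symm, hfull l hlV]
        exact self_fourier f hjl hself _ (by rw [hj0, hl1]; decide)
      · have hk'V : k' ∈ V := hclosed j hjV l hlV hjl k' hk'
        have hk'i : k' ≠ i := by rw [← hki]; exact hk'k
        have hu1 : (u + (e i + e j)) k' = 1 := by
          rw [addpair_other hk'i hk'.1, hfull k' hk'V]
        exact sep_fourier f hk'.1 hk'.2.1 hk'.2.2.2 _ hu1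
    · have hu1 : (u + (e i + e j)) k = 1 := by
        rw [addpair_other hki hk.1, hfull k hkV]
      exact sep_fourier f hk.1 hk.2.1 hk.2.2.2 _ hu1
  -- move 3 : pair (l,i)
  obtain ⟨k₃, hk₃, _⟩ := H2 l i hli (hess l hlV) (hess i hiV)
  have hk₃V : k₃ ∈ V := hclosed l hlV i hiV hli k₃ hk₃
  have hu2 : (u + (e i + e l)) k₃ = 1 := by
    rw [addpair_other hk₃.2.1 hk₃.1, hfull k₃ hk₃V]
  have h3 : hat f ((u + (e i + e l)) + (e l + e i)) = - hat f (u + (e i + e l)) :=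
    sep_fourier f hk₃.1 hk₃.2.1 hk₃.2.2.2 _ hu2
  rw [pp2] at h2
  rw [ppcancel] at h3
  have : hat f u = 0 := by linarith
  exact huhat this

lemma walk_hole {V : Finset (Fin n)}
    (H2 : ∀ i j : Fin n, i ≠ j → Essential f i → Essential f j →
      ∃ k, IsSep f i j k ∧ (SelfD f i j ∨ ∃ k', k' ≠ k ∧ IsSep f i j k'))
    (hess : ∀ k ∈ V, Essential f k)
    (hclosed : ∀ i ∈ V, ∀ j ∈ V, i ≠ j → ∀ k, IsSep f i j k → k ∈ V)
    (hV3 : 3 ≤ V.card) {u : Fin n → ZMod 2} (huhat : hat f u ≠ 0)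
    {ρ : Fin n} (hρV : ρ ∈ V) (hρ0 : u ρ = 0)
    (hother : ∀ c ∈ V, c ≠ ρ → u c = 1) : False := by
  classical
  have herase : 1 < (V.erase ρ).card := by
    rw [Finset.card_erase_of_mem hρV]; omega
  obtain ⟨i, hi, j, hj, hij⟩ := Finset.one_lt_card.mp herase
  have hiV : i ∈ V := Finset.mem_of_mem_erase hi
  have hjV : j ∈ V := Finset.mem_of_mem_erase hj
  have hiρ : i ≠ ρ := Finset.ne_of_mem_erase hi
  have hjρ : j ≠ ρ := Finset.ne_of_mem_erase hj
  -- move 1 : pair (i,ρ)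
  obtain ⟨k₁, hk₁, _⟩ := H2 i ρ hiρ (hess i hiV) (hess ρ hρV)
  have hk₁V : k₁ ∈ V := hclosed i hiV ρ hρV hiρ k₁ hk₁
  have h1 : hat f (u + (e i + e ρ)) = - hat f u :=
    sep_fourier f hk₁.1 hk₁.2.1 hk₁.2.2.2 u (hother k₁ hk₁V hk₁.2.1)
  -- move 2 : pair (i,j)
  obtain ⟨k₂, hk₂, _⟩ := H2 i j hij (hess i hiV) (hess j hjV)
  have hk₂V : k₂ ∈ V := hclosed i hiV j hjV hij k₂ hk₂
  have hu1 : (u + (e i + e ρ)) k₂ = 1 := by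
    by_cases hk₂ρ : k₂ = ρ
    · subst hk₂ρ
      rw [addpair_snd hiρ, hρ0]; decide
    · rw [addpair_other hk₂.1 hk₂ρ, hother k₂ hk₂V hk₂ρ]
  have h2 : hat f ((u + (e i + e ρ)) + (e i + e j)) = - hat f (u + (e i + e ρ)) :=
    sep_fourier f hk₂.1 hk₂.2.1 hk₂.2.2.2 _ hu1
  -- move 3 : pair (j,ρ)
  obtain ⟨k₃, hk₃, _⟩ := H2 j ρ hjρ (hess j hjV) (hess ρ hρV)
  have hk₃V : k₃ ∈ V := hclosed j hjV ρ hρV hjρ k₃ hk₃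
  have hu2 : (u + (e ρ + e j)) k₃ = 1 := by
    rw [addpair_other hk₃.2.1 hk₃.1, hother k₃ hk₃V hk₃.2.1]
  have h3 : hat f ((u + (e ρ + e j)) + (e j + e ρ)) = - hat f (u + (e ρ + e j)) :=
    sep_fourier f hk₃.1 hk₃.2.1 hk₃.2.2.2 _ hu2
  rw [pp1] at h2
  rw [ppcancel] at h3
  have : hat f u = 0 := by linarith
  exact huhat this

theorem no_closed_set
    (H2 : ∀ i j : Fin n, i ≠ j → Essential f i → Essential f j →
      ∃ k, IsSep f i j k ∧ (SelfD f i j ∨ ∃ k', k' ≠ k ∧ IsSep f i j k')) :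
    ∀ N (V : Finset (Fin n)), V.card ≤ N → (∀ k ∈ V, Essential f k) →
      (∀ i ∈ V, ∀ j ∈ V, i ≠ j → ∀ k, IsSep f i j k → k ∈ V) → 2 ≤ V.card → False := by
  classical
  intro N
  induction N with
  | zero => intro V h1 _ _ h4; omega
  | succ N ih =>
    intro V hcard hess hclosed hV2
    -- base: |V| = 2 impossible
    rcases Finset.one_lt_card.mp (by omega : 1 < V.card) with ⟨i0, hi0, j0, hj0, hij0⟩
    by_cases hVbig : 3 ≤ V.card
    · -- main case
      -- find u maximizing the number of ones on V among the Fourier support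
      obtain ⟨k₀, hk₀⟩ := Finset.card_pos.mp (by omega : 0 < V.card)
      obtain ⟨u₀, hu₀k, hu₀hat⟩ := essential_fourier f (hess k₀ hk₀)
      set S : Finset (Fin n → ZMod 2) := Finset.univ.filter (fun u => hat f u ≠ 0) with hS
      have hu₀S : u₀ ∈ S := by simp [hS, hu₀hat]
      obtain ⟨u, huS, humax⟩ := Finset.exists_max_image S
        (fun u => (V.filter (fun c => u c = 1)).card) ⟨u₀, hu₀S⟩
      have huhat : hat f u ≠ 0 := by
        have := Finset.mem_filter.mp huS; exact this.2
      have hmu : 1 ≤ (V.filter (fun c => u c = 1)).card := by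
        have h0 : 1 ≤ (V.filter (fun c => u₀ c = 1)).card := by
          refine Finset.card_pos.mpr ⟨k₀, ?_⟩
          exact Finset.mem_filter.mpr ⟨hk₀, hu₀k⟩
        exact le_trans h0 (humax u₀ hu₀S)
      set Z : Finset (Fin n) := V.filter (fun c => u c = 0) with hZ
      -- no separator of a Z-pair can have u k = 1
      have hZsep : ∀ i ∈ Z, ∀ j ∈ Z, i ≠ j → ∀ k, IsSep f i j k → k ∈ Z := by
        intro i hiZ j hjZ hij k hk
        have hiV : i ∈ V := (Finset.mem_filter.mp hiZ).1
        have hjV : j ∈ V := (Finset.mem_filter.mp hjZ).1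
        have hui : u i = 0 := (Finset.mem_filter.mp hiZ).2
        have huj : u j = 0 := (Finset.mem_filter.mp hjZ).2
        have hkV : k ∈ V := hclosed i hiV j hjV hij k hk
        rcases zmod2_cases (u k) with h0 | h1
        · exact Finset.mem_filter.mpr ⟨hkV, h0⟩
        · exfalso
          have hflip := sep_fourier f hk.1 hk.2.1 hk.2.2.2 u h1
          have hne : hat f (u + (e i + e j)) ≠ 0 := by
            rw [hflip]; intro hcon
            exact huhat (by linarith)
          have hmem : (u + (e i + e j)) ∈ S := by simp [hS, hne]
          have := humax _ hmem
          rw [mu_flip_two f hiV hjV hij hui huj] at this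
          omega
      rcases Nat.lt_or_ge Z.card 2 with hZsmall | hZbig
      case _ =>
        -- |Z| ≤ 1 : walks
        interval_cases hZc : Z.card
        · -- Z empty : u full on V
          have hfull : ∀ c ∈ V, u c = 1 := by
            intro c hc
            rcases zmod2_cases (u c) with h0 | h1
            · exfalso
              have : c ∈ Z := Finset.mem_filter.mpr ⟨hc, h0⟩
              have := Finset.card_pos.mpr ⟨c, this⟩
              omega
            · exact h1
          exact walk_full f H2 hess hclosed hVbig huhat hfull
        · -- Z = {ρ}
          obtain ⟨ρ, hZρ⟩ := Finset.card_eq_one.mp hZc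
          have hρZ : ρ ∈ Z := by rw [hZρ]; exact Finset.mem_singleton_self ρ
          have hρV : ρ ∈ V := (Finset.mem_filter.mp hρZ).1
          have hρ0 : u ρ = 0 := (Finset.mem_filter.mp hρZ).2
          have hother : ∀ c ∈ V, c ≠ ρ → u c = 1 := by
            intro c hc hcρ
            rcases zmod2_cases (u c) with h0 | h1
            · exfalso
              have hcZ : c ∈ Z := Finset.mem_filter.mpr ⟨hc, h0⟩
              rw [hZρ] at hcZ
              exact hcρ (Finset.mem_singleton.mp hcZ)
            · exact h1
          exact walk_hole f H2 hess hclosed hVbig huhat hρV hρ0 hother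
      case _ =>
        -- recurse on Z
        have hZssub : Z ⊆ V := Finset.filter_subset _ _
        have hZlt : Z.card < V.card := by
          have : ∃ c ∈ V, u c = 1 := by
            obtain ⟨c, hc⟩ := Finset.card_pos.mp (by omega : 0 < (V.filter (fun c => u c = 1)).card)
            exact ⟨c, (Finset.mem_filter.mp hc).1, (Finset.mem_filter.mp hc).2⟩
          obtain ⟨c, hcV, hc1⟩ := this
          refine Finset.card_lt_card ⟨hZssub, fun hsub => ?_⟩
          have := Finset.mem_filter.mp (hsub hcV)
          rw [hc1] at this
          exact absurd this.2 (by decide)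
        exact ih Z (by omega) (fun k hk => hess k (hZssub hk)) hZsep hZbig
    · -- |V| = 2
      have hVc : V.card = 2 := by omega
      obtain ⟨k, hk, _⟩ := H2 i0 j0 hij0 (hess _ hi0) (hess _ hj0)
      have hkV : k ∈ V := hclosed i0 hi0 j0 hj0 hij0 k hk
      have : 3 ≤ V.card := by
        have hsub : {i0, j0, k} ⊆ V := by
          intro c hc
          simp only [Finset.mem_insert, Finset.mem_singleton] at hc
          rcases hc with h | h | h
          · exact h ▸ hi0
          · exact h ▸ hj0
          · exact h ▸ hkV
        have hc3 : ({i0, j0, k} : Finset (Fin n)).card = 3 := by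
          rw [Finset.card_insert_of_notMem, Finset.card_insert_of_notMem,
              Finset.card_singleton]
          · simp [hk.2.1.symm]
          · simp only [Finset.mem_insert, Finset.mem_singleton]
            push_neg
            exact ⟨hij0, hk.1.symm⟩
        calc 3 = ({i0, j0, k} : Finset (Fin n)).card := hc3.symm
          _ ≤ V.card := Finset.card_le_card hsub
      omega


/-! ### bridge: essential variables of the identification minor -/

lemma essArity_eq_card [DecidablePred (Essential f)] :
    essArity f = (Finset.univ.filter (fun i => Essential f i)).card := by
  unfold essArity
  rw [show {i : Fin n | Essential f i}
      = ((Finset.univ.filter (fun i => Essential f i) : Finset (Fin n)) : Set (Fin n)) by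
    ext c; simp]
  exact Set.ncard_coe_finset _

lemma update_add_e {x : Fin n → ZMod 2} {i j k : Fin n} (hki : k ≠ i) (hkj : k ≠ j) :
    Function.update (x + e k) i ((x + e k) j) = Function.update x i (x j) + e k := by
  funext c
  by_cases hc : c = i
  · subst hc
    simp [Function.update_self, Pi.add_apply, e_ne hkj.symm, e_ne hki.symm]
  · rw [Function.update_of_ne hc, Pi.add_apply, Pi.add_apply, Function.update_of_ne hc]

lemma minor_diag {x : Fin n → ZMod 2} {i j : Fin n} (hx : x i = x j) :
    idMinor f i j x = f x := by
  unfold idMinor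
  rw [← hx, Function.update_eq_self]

lemma essential_minor_of_not_sep {i j k : Fin n} (hki : k ≠ i) (hkj : k ≠ j)
    (hnot : ¬ (∀ x : Fin n → ZMod 2, x i = x j → f (x + e k) = f x)) :
    Essential (idMinor f i j) k := by
  push_neg at hnot
  obtain ⟨x, hxij, hxne⟩ := hnot
  rw [essential_iff_flip]
  refine ⟨x, ?_⟩
  have h1 : idMinor f i j x = f x := minor_diag f hxij
  have h2 : idMinor f i j (x + e k) = f (x + e k) := by
    have : (x + e k) i = (x + e k) j := by
      rw [Pi.add_apply, Pi.add_apply, e_ne hki.symm, e_ne hkj.symm, add_zero, add_zero]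
      exact hxij
    exact minor_diag f this
  rw [h1, h2]
  exact hxne

lemma essential_minor_j {i j : Fin n} (hij : i ≠ j) (hnot : ¬ SelfD f i j) :
    Essential (idMinor f i j) j := by
  unfold SelfD at hnot
  push_neg at hnot
  obtain ⟨x, hxij, hxne⟩ := hnot
  rw [essential_iff_flip]
  refine ⟨x, ?_⟩
  have h1 : idMinor f i j x = f x := minor_diag f hxij
  have h2 : idMinor f i j (x + e j) = f (x + (e i + e j)) := by
    unfold idMinor
    congr 1
    funext c
    by_cases hc : c = i
    · subst hc
      rw [Function.update_self]
      simp only [Pi.add_apply, e_self, e_ne hij, e_ne hij.symm, hxij]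
      ring
    · rw [Function.update_of_ne hc]
      simp only [Pi.add_apply]
      rw [e_ne hc, zero_add]
  rw [h1, h2]
  exact hxne

lemma not_essential_minor_i {i j : Fin n} (hij : i ≠ j) :
    ¬ Essential (idMinor f i j) i := by
  rintro ⟨a, b, hab⟩
  apply hab
  unfold idMinor
  congr 1
  funext c
  by_cases hc : c = i
  · subst hc
    rw [Function.update_self, Function.update_self,
        Function.update_of_ne hij.symm]
  · rw [Function.update_of_ne hc, Function.update_of_ne hc,
        Function.update_of_ne hc]

lemma not_essential_minor_other {i j k : Fin n} (hki : k ≠ i) (hkj : k ≠ j)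
    (hk : ¬ Essential f k) : ¬ Essential (idMinor f i j) k := by
  have hconst : ∀ (a : Fin n → ZMod 2) (b : ZMod 2), f (Function.update a k b) = f a := by
    intro a b
    by_contra hcon
    exact hk ⟨a, b, fun h => hcon h.symm⟩
  rintro ⟨a, b, hab⟩
  apply hab
  unfold idMinor
  have hj : (Function.update a k b) j = a j := Function.update_of_ne hkj.symm _ _
  rw [hj]
  rw [show Function.update (Function.update a k b) i (a j)
      = Function.update (Function.update a i (a j)) k b from
    Function.update_comm hki _ _ _]
  rw [hconst]


/-! ### deriving the two-drops property and the key theorem -/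

theorem key_theorem (hf : 2 ≤ essArity f) :
    ∃ i j : Fin n, i ≠ j ∧ Essential f i ∧ Essential f j ∧
      essArity f ≤ essArity (idMinor f i j) + 2 := by
  classical
  by_contra hcon
  push_neg at hcon
  -- hcon : ∀ i j, i ≠ j → Essential f i → Essential f j → essArity (idMinor f i j) + 2 < essArity f
  set Wf : Finset (Fin n) := Finset.univ.filter (fun i => Essential f i) with hWf
  have hWm : essArity f = Wf.card := essArity_eq_card f
  have H2 : ∀ i j : Fin n, i ≠ j → Essential f i → Essential f j →
      ∃ k, IsSep f i j k ∧ (SelfD f i j ∨ ∃ k', k' ≠ k ∧ IsSep f i j k') := by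
    intro i j hij hi hj
    have hsmall : essArity (idMinor f i j) + 2 < essArity f := by
      have h := hcon i j hij hi hj
      omega
    set EM : Finset (Fin n) := Finset.univ.filter (fun k => Essential (idMinor f i j) k) with hEMd
    have hEM : essArity (idMinor f i j) = EM.card := essArity_eq_card _
    set SepF : Finset (Fin n) := Finset.univ.filter (fun k => IsSep f i j k) with hSepF
    set B : Finset (Fin n) := insert i (insert j SepF) with hB
    have hGood : Wf \ B ⊆ EM := by
      intro k hk
      rw [Finset.mem_sdiff] at hk
      obtain ⟨hkW, hkB⟩ := hk
      have hkEss : Essential f k := (Finset.mem_filter.mp hkW).2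
      have hki : k ≠ i := fun h => hkB (by rw [hB, h]; exact Finset.mem_insert_self _ _)
      have hkj : k ≠ j := fun h => hkB (by
        rw [hB, h]; exact Finset.mem_insert_of_mem (Finset.mem_insert_self _ _))
      have hkS : ¬ IsSep f i j k := fun h => hkB (by
        rw [hB]
        exact Finset.mem_insert_of_mem (Finset.mem_insert_of_mem
          (Finset.mem_filter.mpr ⟨Finset.mem_univ _, h⟩)))
      have hninv : ¬ (∀ x : Fin n → ZMod 2, x i = x j → f (x + e k) = f x) := by
        intro hinv
        exact hkS ⟨hki, hkj, hkEss, hinv⟩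
      exact Finset.mem_filter.mpr ⟨Finset.mem_univ _,
        essential_minor_of_not_sep f hki hkj hninv⟩
    have hBcard : B.card ≤ SepF.card + 2 := by
      rw [hB]
      have h1 := Finset.card_insert_le i (insert j SepF)
      have h2 := Finset.card_insert_le j SepF
      omega
    have hWB : Wf.card ≤ (Wf \ B).card + B.card := Finset.card_le_card_sdiff_add_card
    have hGc : (Wf \ B).card ≤ EM.card := Finset.card_le_card hGood
    by_cases hself : SelfD f i j
    · have hs1 : 1 ≤ SepF.card := by omega
      obtain ⟨k, hkmem⟩ := Finset.card_pos.mp hs1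
      exact ⟨k, (Finset.mem_filter.mp hkmem).2, Or.inl hself⟩
    · have hjEM : j ∈ EM := Finset.mem_filter.mpr
        ⟨Finset.mem_univ _, essential_minor_j f hij hself⟩
      have hjB : j ∈ B := by
        rw [hB]; exact Finset.mem_insert_of_mem (Finset.mem_insert_self _ _)
      have hjnG : j ∉ Wf \ B := fun h => (Finset.mem_sdiff.mp h).2 hjB
      have hins : insert j (Wf \ B) ⊆ EM := by
        intro c hc
        rcases Finset.mem_insert.mp hc with h | h
        · exact h ▸ hjEM
        · exact hGood h
      have hinsc : (Wf \ B).card + 1 ≤ EM.card := by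
        have := Finset.card_le_card hins
        rwa [Finset.card_insert_of_notMem hjnG] at this
      have hs2 : 2 ≤ SepF.card := by omega
      obtain ⟨k, hk, k', hk', hkk'⟩ := Finset.one_lt_card.mp (by omega : 1 < SepF.card)
      exact ⟨k, (Finset.mem_filter.mp hk).2,
        Or.inr ⟨k', hkk'.symm, (Finset.mem_filter.mp hk').2⟩⟩
  refine no_closed_set f H2 Wf.card Wf le_rfl ?_ ?_ ?_
  · intro k hk; exact (Finset.mem_filter.mp hk).2
  · intro i _ j _ _ k hk
    exact Finset.mem_filter.mpr ⟨Finset.mem_univ _, hk.2.2.1⟩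
  · omega

theorem upper_bound {i j : Fin n} (hij : i ≠ j) (hi : Essential f i) (hj : Essential f j) :
    essArity (idMinor f i j) + 1 ≤ essArity f := by
  classical
  set Wf : Finset (Fin n) := Finset.univ.filter (fun i => Essential f i) with hWf
  have hWm : essArity f = Wf.card := essArity_eq_card f
  set EM : Finset (Fin n) := Finset.univ.filter (fun k => Essential (idMinor f i j) k) with hEMd
  have hEM : essArity (idMinor f i j) = EM.card := essArity_eq_card _
  have hsub : EM ⊆ Wf.erase i := by
    intro k hk
    have hkE : Essential (idMinor f i j) k := (Finset.mem_filter.mp hk).2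
    have hki : k ≠ i := by
      intro h
      exact not_essential_minor_i f hij (h ▸ hkE)
    refine Finset.mem_erase.mpr ⟨hki, ?_⟩
    by_cases hkj : k = j
    · subst hkj
      exact Finset.mem_filter.mpr ⟨Finset.mem_univ _, hj⟩
    · refine Finset.mem_filter.mpr ⟨Finset.mem_univ _, ?_⟩
      by_contra hkf
      exact not_essential_minor_other f hki hkj hkf hkE
  have hiW : i ∈ Wf := Finset.mem_filter.mpr ⟨Finset.mem_univ _, hi⟩
  have h1 : EM.card ≤ (Wf.erase i).card := Finset.card_le_card hsub
  have h2 : (Wf.erase i).card = Wf.card - 1 := Finset.card_erase_of_mem hiW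
  have h3 : 1 ≤ Wf.card := Finset.card_pos.mpr ⟨i, hiW⟩
  omega

end Stmt8


/-- Every Boolean function with at least two essential variables has arity gap `1` or `2`. -/
theorem stmt_8 {n : ℕ} (f : (Fin n → ZMod 2) → ZMod 2) (hf : 2 ≤ essArity f) :
    arityGap f = 1 ∨ arityGap f = 2 := by
  classical
  obtain ⟨i, j, hij, hi, hj, hkey⟩ := Stmt8.key_theorem f hf
  set A : Set ℕ := {m : ℕ | ∃ i j : Fin n, i ≠ j ∧ Essential f i ∧ Essential f j ∧
      m = essArity (idMinor f i j)} with hA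
  have hmem : essArity (idMinor f i j) ∈ A := ⟨i, j, hij, hi, hj, rfl⟩
  have hub : ∀ a ∈ A, a + 1 ≤ essArity f := by
    rintro a ⟨i', j', hij', hi', hj', ha⟩
    rw [ha]
    exact Stmt8.upper_bound f hij' hi' hj'
  have hbdd : BddAbove A := ⟨essArity f, fun a ha => by have := hub a ha; omega⟩
  have h1 : essArity (idMinor f i j) ≤ sSup A := le_csSup hbdd hmem
  have h2 : sSup A + 1 ≤ essArity f := by
    have hne : A.Nonempty := ⟨_, hmem⟩
    have : sSup A ≤ essArity f - 1 := csSup_le hne (fun a ha => by have := hub a ha; omega)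
    omega
  have hgap : arityGap f = essArity f - sSup A := by rw [arityGap, hA]
  rw [hgap]
  omega
end

section
/- Let i ≠ j be indices in {1, …, n}, let c ∈ ZMod 2, and let f : (ZMod 2)^n → ZMod 2 be the Boolean function f(x_1, …, x_n) = x_i x_j + x_i + c over the two-element field. Then ess f = 2 and the arity gap of f is 2. -/
/-- The Boolean function `x i * x j + x i + c` (with `i ≠ j`) has essential arity `2`
and arity gap `2`. -/
theorem stmt_10 {n : ℕ} (i j : Fin n) (hij : i ≠ j) (c : ZMod 2)
    (f : (Fin n → ZMod 2) → ZMod 2)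
    (hf : ∀ x : Fin n → ZMod 2, f x = x i * x j + x i + c) :
    essArity f = 2 ∧ arityGap f = 2 := by
  have key : ∀ a d : ZMod 2, a * a + a + d = d := by decide
  have hne1 : ∀ d : ZMod 2, (0:ZMod 2) * 0 + 0 + d ≠ 1 * 0 + 1 + d := by decide
  have hne2 : ∀ d : ZMod 2, (1:ZMod 2) * 1 + 1 + d ≠ 1 * 0 + 1 + d := by decide
  have hEi : Essential f i := by
    refine ⟨fun _ => 0, 1, ?_⟩
    rw [hf, hf, Function.update_self, Function.update_of_ne hij.symm]
    exact hne1 c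
  have hEj : Essential f j := by
    refine ⟨fun _ => 1, 0, ?_⟩
    rw [hf, hf, Function.update_self, Function.update_of_ne hij]
    exact hne2 c
  have hset : {k : Fin n | Essential f k} = {i, j} := by
    ext k
    simp only [Set.mem_setOf_eq, Set.mem_insert_iff, Set.mem_singleton_iff]
    constructor
    · rintro ⟨a, b, hab⟩
      by_contra hk
      push_neg at hk
      exact hab (by
        rw [hf, hf, Function.update_of_ne (Ne.symm hk.1), Function.update_of_ne (Ne.symm hk.2)])
    · rintro (rfl | rfl)
      · exact hEi
      · exact hEj
  have hconst : ∀ g : (Fin n → ZMod 2) → ZMod 2, (∀ x, g x = c) → essArity g = 0 := by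
    intro g hg
    have : {k : Fin n | Essential g k} = ∅ := by
      ext k
      simp only [Set.mem_setOf_eq, Set.mem_empty_iff_false, iff_false]
      rintro ⟨a, b, hab⟩
      exact hab (by rw [hg, hg])
    rw [essArity, this, Set.ncard_empty]
  have hmij : ∀ x, idMinor f i j x = c := by
    intro x
    rw [idMinor, hf, Function.update_self, Function.update_of_ne hij.symm]
    exact key (x j) c
  have hmji : ∀ x, idMinor f j i x = c := by
    intro x
    rw [idMinor, hf, Function.update_self, Function.update_of_ne hij]
    exact key (x i) c
  have hS : {m : ℕ | ∃ p q : Fin n, p ≠ q ∧ Essential f p ∧ Essential f q ∧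
      m = essArity (idMinor f p q)} = {0} := by
    ext m
    simp only [Set.mem_setOf_eq, Set.mem_singleton_iff]
    constructor
    · rintro ⟨p, q, hpq, hp, hq, rfl⟩
      have hp' : p ∈ ({i, j} : Set (Fin n)) := hset ▸ hp
      have hq' : q ∈ ({i, j} : Set (Fin n)) := hset ▸ hq
      simp only [Set.mem_insert_iff, Set.mem_singleton_iff] at hp' hq'
      rcases hp' with rfl | rfl
      · rcases hq' with rfl | rfl
        · exact absurd rfl hpq
        · exact hconst _ hmij
      · rcases hq' with rfl | rfl
        · exact hconst _ hmji
        · exact absurd rfl hpq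
    · rintro rfl
      exact ⟨i, j, hij, hEi, hEj, (hconst _ hmij).symm⟩
  have hess : essArity f = 2 := by rw [essArity, hset, Set.ncard_pair hij]
  refine ⟨hess, ?_⟩
  rw [arityGap, hess, hS, csSup_singleton]
end

section
/- Let i, j, k be pairwise distinct indices in {1, …, n}, let c ∈ ZMod 2, and let f : (ZMod 2)^n → ZMod 2 be the Boolean function f(x_1, …, x_n) = x_i x_j + x_i x_k + x_j x_k + c over the two-element field. Then ess f = 3 and the arity gap of f is 2. -/
lemma alg1 : ∀ a b d : ZMod 2, a*a + a*b + a*b + d = a + d := by decide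
lemma alg2 : ∀ a b d : ZMod 2, a*b + a*a + b*a + d = a + d := by decide
lemma alg3 : ∀ a b d : ZMod 2, a*b + a*b + b*b + d = b + d := by decide

lemma essAux {n : ℕ} (q : Fin n) (c : ZMod 2) (g : (Fin n → ZMod 2) → ZMod 2)
    (hg : ∀ x, g x = x q + c) : essArity g = 1 := by
  have hset : {m : Fin n | Essential g m} = {q} := by
    ext m
    simp only [Set.mem_setOf_eq, Set.mem_singleton_iff]
    constructor
    · rintro ⟨a, b, hab⟩
      by_contra hmq
      apply hab
      rw [hg, hg, Function.update_of_ne (fun h : q = m => hmq h.symm)]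
    · rintro rfl
      refine ⟨fun _ => 0, 1, ?_⟩
      rw [hg, hg]
      simp
  rw [essArity, hset, Set.ncard_singleton]

/-- The Boolean function `x i * x j + x i * x k + x j * x k + c` (with `i, j, k`
pairwise distinct) has essential arity `3` and arity gap `2`. -/
theorem stmt_11 {n : ℕ} (i j k : Fin n) (hij : i ≠ j) (hik : i ≠ k) (hjk : j ≠ k)
    (c : ZMod 2) (f : (Fin n → ZMod 2) → ZMod 2)
    (hf : ∀ x : Fin n → ZMod 2, f x = x i * x j + x i * x k + x j * x k + c) :
    essArity f = 3 ∧ arityGap f = 2 := by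
  have hne : (c : ZMod 2) ≠ 1 + c := by simp
  have hEssSet : {m : Fin n | Essential f m} = {i, j, k} := by
    ext m
    simp only [Set.mem_setOf_eq, Set.mem_insert_iff, Set.mem_singleton_iff]
    constructor
    · rintro ⟨a, b, hab⟩
      by_contra hm
      push_neg at hm
      obtain ⟨hmi, hmj, hmk⟩ := hm
      apply hab
      rw [hf, hf,
        Function.update_of_ne (fun h : i = m => hmi h.symm),
        Function.update_of_ne (fun h : j = m => hmj h.symm),
        Function.update_of_ne (fun h : k = m => hmk h.symm)]
    · rintro (rfl | rfl | rfl)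
      · refine ⟨fun t => if t = j then 1 else 0, 1, ?_⟩
        rw [hf, hf]
        simp [Function.update, hij, hik, hjk, hij.symm, hik.symm, hjk.symm]
      · refine ⟨fun t => if t = i then 1 else 0, 1, ?_⟩
        rw [hf, hf]
        simp [Function.update, hij, hik, hjk, hij.symm, hik.symm, hjk.symm]
      · refine ⟨fun t => if t = i then 1 else 0, 1, ?_⟩
        rw [hf, hf]
        simp [Function.update, hij, hik, hjk, hij.symm, hik.symm, hjk.symm]
  have hEss : essArity f = 3 := by
    rw [essArity, hEssSet]
    exact Set.ncard_eq_three.mpr ⟨i, j, k, hij, hik, hjk, rfl⟩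
  have hEi : Essential f i := by rw [← Set.mem_setOf_eq (p := Essential f), hEssSet]; simp
  have hEj : Essential f j := by rw [← Set.mem_setOf_eq (p := Essential f), hEssSet]; simp
  have hEk : Essential f k := by rw [← Set.mem_setOf_eq (p := Essential f), hEssSet]; simp
  have hminor : ∀ p q : Fin n, (p = i ∨ p = j ∨ p = k) → (q = i ∨ q = j ∨ q = k) →
      p ≠ q → essArity (idMinor f p q) = 1 := by
    rintro p q (hp | hp | hp) (hq | hq | hq) hpq <;> rw [hp, hq] at hpq ⊢
    · exact absurd rfl hpq
    · refine essAux j c _ fun x => ?_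
      rw [idMinor, hf]
      simp only [Function.update_self, Function.update_of_ne hij, Function.update_of_ne hik,
        Function.update_of_ne hjk, Function.update_of_ne hij.symm,
        Function.update_of_ne hik.symm, Function.update_of_ne hjk.symm]
      exact alg1 _ _ _
    · refine essAux k c _ fun x => ?_
      rw [idMinor, hf]
      simp only [Function.update_self, Function.update_of_ne hij, Function.update_of_ne hik,
        Function.update_of_ne hjk, Function.update_of_ne hij.symm,
        Function.update_of_ne hik.symm, Function.update_of_ne hjk.symm]
      exact alg2 _ _ _
    · refine essAux i c _ fun x => ?_
      rw [idMinor, hf]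
      simp only [Function.update_self, Function.update_of_ne hij, Function.update_of_ne hik,
        Function.update_of_ne hjk, Function.update_of_ne hij.symm,
        Function.update_of_ne hik.symm, Function.update_of_ne hjk.symm]
      exact alg1 _ _ _
    · exact absurd rfl hpq
    · refine essAux k c _ fun x => ?_
      rw [idMinor, hf]
      simp only [Function.update_self, Function.update_of_ne hij, Function.update_of_ne hik,
        Function.update_of_ne hjk, Function.update_of_ne hij.symm,
        Function.update_of_ne hik.symm, Function.update_of_ne hjk.symm]
      exact alg3 _ _ _
    · refine essAux i c _ fun x => ?_
      rw [idMinor, hf]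
      simp only [Function.update_self, Function.update_of_ne hij, Function.update_of_ne hik,
        Function.update_of_ne hjk, Function.update_of_ne hij.symm,
        Function.update_of_ne hik.symm, Function.update_of_ne hjk.symm]
      exact alg2 _ _ _
    · refine essAux j c _ fun x => ?_
      rw [idMinor, hf]
      simp only [Function.update_self, Function.update_of_ne hij, Function.update_of_ne hik,
        Function.update_of_ne hjk, Function.update_of_ne hij.symm,
        Function.update_of_ne hik.symm, Function.update_of_ne hjk.symm]
      exact alg3 _ _ _
    · exact absurd rfl hpq
  have hSset : {m : ℕ | ∃ p q : Fin n, p ≠ q ∧ Essential f p ∧ Essential f q ∧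
      m = essArity (idMinor f p q)} = {1} := by
    ext m
    simp only [Set.mem_setOf_eq, Set.mem_singleton_iff]
    constructor
    · rintro ⟨p, q, hpq, hp, hq, rfl⟩
      have hp' : p = i ∨ p = j ∨ p = k := by
        have := hEssSet ▸ (Set.mem_setOf_eq (p := Essential f) ▸ hp)
        simpa using this
      have hq' : q = i ∨ q = j ∨ q = k := by
        have := hEssSet ▸ (Set.mem_setOf_eq (p := Essential f) ▸ hq)
        simpa using this
      exact hminor p q hp' hq' hpq
    · rintro rfl
      exact ⟨i, j, hij, hEi, hEj, (hminor i j (Or.inl rfl) (Or.inr (Or.inl rfl)) hij).symm⟩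
  refine ⟨hEss, ?_⟩
  rw [arityGap, hEss, hSset, csSup_singleton]
end

section
/- Let i, j, k be pairwise distinct indices in {1, …, n}, let c ∈ ZMod 2, and let f : (ZMod 2)^n → ZMod 2 be the Boolean function f(x_1, …, x_n) = x_i x_j + x_i x_k + x_j x_k + x_i + x_j + c over the two-element field. Then ess f = 3 and the arity gap of f is 2. -/
lemma essSet_linear {n : ℕ} (t : Fin n) (c : ZMod 2) (g : (Fin n → ZMod 2) → ZMod 2)
    (hg : ∀ x, g x = x t + c) : {l : Fin n | Essential g l} = {t} := by
  have hc : ∀ c : ZMod 2, (0 : ZMod 2) + c ≠ 1 + c := by decide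
  ext l
  simp only [Set.mem_setOf_eq, Set.mem_singleton_iff]
  constructor
  · rintro ⟨a, b, hab⟩
    by_contra hl
    exact hab (by rw [hg, hg, Function.update_of_ne (Ne.symm hl)])
  · rintro rfl
    refine ⟨fun _ => 0, 1, ?_⟩
    rw [hg, hg, Function.update_self]
    exact hc c

lemma essArity_linear {n : ℕ} (t : Fin n) (c : ZMod 2) (g : (Fin n → ZMod 2) → ZMod 2)
    (hg : ∀ x, g x = x t + c) : essArity g = 1 := by
  rw [essArity, essSet_linear t c g hg, Set.ncard_singleton]

/-- The Boolean function `x i * x j + x i * x k + x j * x k + x i + x j + c` (with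
`i, j, k` pairwise distinct) has essential arity `3` and arity gap `2`. -/
theorem stmt_12 {n : ℕ} (i j k : Fin n) (hij : i ≠ j) (hik : i ≠ k) (hjk : j ≠ k)
    (c : ZMod 2) (f : (Fin n → ZMod 2) → ZMod 2)
    (hf : ∀ x : Fin n → ZMod 2,
      f x = x i * x j + x i * x k + x j * x k + x i + x j + c) :
    essArity f = 3 ∧ arityGap f = 2 := by
  have h1c : ∀ c : ZMod 2, (1 : ZMod 2) + c ≠ c := by decide
  -- essential set of f is {i, j, k}
  have hessSet : {l : Fin n | Essential f l} = {i, j, k} := by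
    ext l
    simp only [Set.mem_setOf_eq, Set.mem_insert_iff, Set.mem_singleton_iff]
    constructor
    · rintro ⟨a, b, hab⟩
      by_contra hl
      push_neg at hl
      obtain ⟨hli, hlj, hlk⟩ := hl
      apply hab
      rw [hf, hf, Function.update_of_ne (Ne.symm hli),
        Function.update_of_ne (Ne.symm hlj), Function.update_of_ne (Ne.symm hlk)]
    · rintro (rfl | rfl | rfl)
      · refine ⟨fun _ => 0, 1, ?_⟩
        rw [hf, hf]
        simp only [Function.update_self, Function.update_of_ne (Ne.symm hij),
          Function.update_of_ne (Ne.symm hik)]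
        simpa using h1c c
      · refine ⟨fun _ => 0, 1, ?_⟩
        rw [hf, hf]
        simp only [Function.update_self, Function.update_of_ne hij,
          Function.update_of_ne (Ne.symm hjk)]
        simpa using h1c c
      · refine ⟨Function.update (fun _ => 0) i 1, 1, ?_⟩
        rw [hf, hf]
        simp only [Function.update_self, Function.update_of_ne hik,
          Function.update_of_ne hjk, Function.update_of_ne (Ne.symm hij),
          Function.update_of_ne (Ne.symm hik)]
        simpa using fun h => h1c c (by linarith)
  have hess : essArity f = 3 := by
    rw [essArity, hessSet]
    exact Set.ncard_eq_three.mpr ⟨i, j, k, hij, hik, hjk, rfl⟩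
  refine ⟨hess, ?_⟩
  -- every relevant minor has essential arity 1
  have hminor : ∀ a b : Fin n, a ≠ b → Essential f a → Essential f b →
      essArity (idMinor f a b) = 1 := by
    intro a b hab ha hb
    have ha' : a = i ∨ a = j ∨ a = k := by
      have := hessSet ▸ (Set.mem_setOf_eq ▸ ha : a ∈ {l : Fin n | Essential f l})
      simpa using this
    have hb' : b = i ∨ b = j ∨ b = k := by
      have := hessSet ▸ (Set.mem_setOf_eq ▸ hb : b ∈ {l : Fin n | Essential f l})
      simpa using this
    have F1 : ∀ u v c : ZMod 2, u*u + u*v + u*v + u + u + c = u + c := by decide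
    have F2 : ∀ u v c : ZMod 2, v*u + v*v + u*v + v + u + c = u + c := by decide
    have F3 : ∀ u w c : ZMod 2, u*w + u*u + w*u + u + w + c = w + c := by decide
    have F4 : ∀ u v c : ZMod 2, u*v + u*v + v*v + u + v + c = u + c := by decide
    rcases ha' with h | h | h <;> rcases hb' with h' | h' | h' <;>
      [skip; rw [h, h']; rw [h, h']; rw [h, h']; skip; rw [h, h']; rw [h, h'];
       rw [h, h']; skip]
    · exact absurd (h.trans h'.symm) hab
    · refine essArity_linear j c _ fun x => ?_
      simp only [idMinor, hf, Function.update_self,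
        Function.update_of_ne (Ne.symm hij), Function.update_of_ne (Ne.symm hik)]
      exact F1 (x j) (x k) c
    · refine essArity_linear j c _ fun x => ?_
      simp only [idMinor, hf, Function.update_self,
        Function.update_of_ne (Ne.symm hij), Function.update_of_ne (Ne.symm hik)]
      exact F2 (x j) (x k) c
    · refine essArity_linear i c _ fun x => ?_
      simp only [idMinor, hf, Function.update_self,
        Function.update_of_ne hij, Function.update_of_ne (Ne.symm hjk)]
      exact F1 (x i) (x k) c
    · exact absurd (h.trans h'.symm) hab
    · refine essArity_linear i c _ fun x => ?_
      simp only [idMinor, hf, Function.update_self,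
        Function.update_of_ne hij, Function.update_of_ne (Ne.symm hjk)]
      exact F4 (x i) (x k) c
    · refine essArity_linear j c _ fun x => ?_
      simp only [idMinor, hf, Function.update_self,
        Function.update_of_ne hik, Function.update_of_ne hjk]
      exact F3 (x i) (x j) c
    · refine essArity_linear i c _ fun x => ?_
      simp only [idMinor, hf, Function.update_self,
        Function.update_of_ne hik, Function.update_of_ne hjk]
      exact F4 (x i) (x j) c
    · exact absurd (h.trans h'.symm) hab
  have hS : {m : ℕ | ∃ a b : Fin n, a ≠ b ∧ Essential f a ∧ Essential f b ∧
      m = essArity (idMinor f a b)} = {1} := by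
    ext m
    simp only [Set.mem_setOf_eq, Set.mem_singleton_iff]
    constructor
    · rintro ⟨a, b, hab, ha, hb, rfl⟩
      exact hminor a b hab ha hb
    · rintro rfl
      have hi : Essential f i := by
        have : i ∈ {l : Fin n | Essential f l} := by rw [hessSet]; simp
        exact this
      have hj : Essential f j := by
        have : j ∈ {l : Fin n | Essential f l} := by rw [hessSet]; simp
        exact this
      exact ⟨i, j, hij, hi, hj, (hminor i j hij hi hj).symm⟩
  rw [arityGap, hess, hS, csSup_singleton]
end

section
/- Let A be a nonempty set, let n ≥ 2, let h : A → {0,1} be a nonconstant map, let g : {0,1} → A be a nonconstant map, and let f : A^n → A be the quasi-linear operation f(x_1, …, x_n) = g(h(x_1) ⊕ h(x_2) ⊕ ⋯ ⊕ h(x_n)), where ⊕ denotes addition modulo 2. Then all n variables of f are essential and the arity gap of f is 2. -/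
/-!
Changing an argument `x k` with `k ∈ s` from `a` to `b` turns `∑ i ∈ s, h (x i)` from
`h a + r` into `h b + r`, which `g` detects because a nonconstant map on `ZMod 2` is injective; so the
essential variables of `g (∑ i ∈ s, h (x i))` are exactly those in `s`. Identifying `x i` with
`x j` adds `h (x j) + h (x j) = 0`, so every identification minor of the `n`-ary operation is
an operation of the same shape in the `n - 2` variables outside `{i, j}`.
-/

open Finset Function

theorem arityGap_eq_of_essArity_idMinor {A B : Type*} {n : ℕ} {f : (Fin n → A) → B} {m : ℕ}
    (hminor : ∀ i j, i ≠ j → Essential f i → Essential f j → essArity (idMinor f i j) = m)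
    (hpair : ∃ i j, i ≠ j ∧ Essential f i ∧ Essential f j) :
    arityGap f = essArity f - m := by
  obtain ⟨i, j, hij, hi, hj⟩ := hpair
  have hset : {m' : ℕ | ∃ i j : Fin n, i ≠ j ∧ Essential f i ∧ Essential f j ∧
      m' = essArity (idMinor f i j)} = {m} :=
    Set.eq_singleton_iff_unique_mem.mpr
      ⟨⟨i, j, hij, hi, hj, (hminor i j hij hi hj).symm⟩,
        by rintro _ ⟨i, j, hij, hi, hj, rfl⟩; exact hminor i j hij hi hj⟩
  rw [arityGap, hset, csSup_singleton]

theorem ZMod.injective_two_of_exists_ne {B : Type*} {g : ZMod 2 → B}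
    (hg : ∃ u v, g u ≠ g v) : Injective g := by
  obtain ⟨u, v, huv⟩ := hg
  intro a b hab
  fin_cases a <;> fin_cases b <;> fin_cases u <;> fin_cases v <;> first | rfl | simp_all

def quasiLinear {A M B : Type*} [AddCommMonoid M] {n : ℕ} (h : A → M) (g : M → B)
    (s : Finset (Fin n)) (x : Fin n → A) : B :=
  g (∑ i ∈ s, h (x i))

section QuasiLinear

variable {A M B : Type*} {n : ℕ} {h : A → M} {g : M → B} {s : Finset (Fin n)}

theorem sum_comp_update [AddCommMonoid M] (h : A → M) (x : Fin n → A) {k : Fin n} (hk : k ∈ s)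
    (b : A) : ∑ i ∈ s, h (update x k b i) = h b + ∑ i ∈ s \ {k}, h (x i) := by
  simp only [← comp_apply (f := h), comp_update]
  exact sum_update_of_mem hk _ _

theorem essential_quasiLinear_iff [AddCancelCommMonoid M] (hh : ∃ a b, h a ≠ h b)
    (hg : Injective g) {k : Fin n} : Essential (quasiLinear h g s) k ↔ k ∈ s := by
  constructor
  · rintro ⟨x, b, hx⟩
    by_contra hk
    refine hx (congrArg g (sum_congr rfl fun i hi => ?_))
    rw [update_of_ne (ne_of_mem_of_not_mem hi hk)]
  · intro hk
    obtain ⟨a, b, hab⟩ := hh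
    refine ⟨fun _ => a, b, fun hfab => hab ?_⟩
    have hsum : g (h a + ∑ _ ∈ s \ {k}, h a) = g (h b + ∑ _ ∈ s \ {k}, h a) := by
      simpa only [quasiLinear, sum_comp_update h _ hk,
        sum_eq_add_sum_sdiff_singleton_of_mem hk] using hfab
    exact add_right_cancel (hg hsum)

theorem essArity_quasiLinear [AddCancelCommMonoid M] (hh : ∃ a b, h a ≠ h b)
    (hg : Injective g) : essArity (quasiLinear h g s) = #s := by
  have hset : {k | Essential (quasiLinear h g s) k} = ↑s := by
    ext k
    exact essential_quasiLinear_iff hh hg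
  rw [essArity, hset, Set.ncard_coe_finset]

theorem idMinor_quasiLinear [Semiring M] [CharP M 2] {i j : Fin n} (hij : i ≠ j)
    (hi : i ∈ s) (hj : j ∈ s) :
    idMinor (quasiLinear h g s) i j = quasiLinear h g (s \ {i, j}) := by
  funext x
  have hj' : j ∈ s \ {i} := mem_sdiff.mpr ⟨hj, by simpa using hij.symm⟩
  rw [idMinor, quasiLinear, quasiLinear, sum_comp_update h x hi,
    sum_eq_add_sum_sdiff_singleton_of_mem hj', ← add_assoc, CharTwo.add_self_eq_zero, zero_add,
    sdiff_sdiff_left, sup_eq_union, ← insert_eq]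

end QuasiLinear

theorem stmt_13_general (A : Type*) {n : ℕ} (hn : 2 ≤ n)
    (h : A → ZMod 2) (g : ZMod 2 → A)
    (hh : ∃ a b : A, h a ≠ h b) (hg : ∃ u v : ZMod 2, g u ≠ g v)
    (f : (Fin n → A) → A) (hf : ∀ x : Fin n → A, f x = g (∑ i, h (x i))) :
    (∀ i : Fin n, Essential f i) ∧ arityGap f = 2 := by
  have hginj := ZMod.injective_two_of_exists_ne hg
  obtain rfl : f = quasiLinear h g univ := funext hf
  have hess : ∀ i : Fin n, Essential (quasiLinear h g univ) i := fun i =>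
    (essential_quasiLinear_iff hh hginj).mpr (mem_univ i)
  have hminor : ∀ i j : Fin n, i ≠ j → essArity (idMinor (quasiLinear h g univ) i j) = n - 2 :=
    fun i j hij => by
      rw [idMinor_quasiLinear hij (mem_univ i) (mem_univ j), essArity_quasiLinear hh hginj,
        card_univ_sdiff, card_pair hij, Fintype.card_fin]
  refine ⟨hess, ?_⟩
  rw [arityGap_eq_of_essArity_idMinor (fun i j hij _ _ => hminor i j hij)
      ⟨⟨0, by omega⟩, ⟨1, by omega⟩, by simp [Fin.ext_iff], hess _, hess _⟩,
    essArity_quasiLinear hh hginj, card_univ, Fintype.card_fin]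
  omega

/-- A quasi-linear function `g (h x₁ ⊕ ⋯ ⊕ h xₙ)` with `h` and `g` nonconstant has all
`n` variables essential and arity gap `2`. -/
theorem stmt_13 (A : Type*) [Nonempty A] {n : ℕ} (hn : 2 ≤ n)
    (h : A → ZMod 2) (g : ZMod 2 → A)
    (hh : ∃ a b : A, h a ≠ h b) (hg : ∃ u v : ZMod 2, g u ≠ g v)
    (f : (Fin n → A) → A) (hf : ∀ x : Fin n → A, f x = g (∑ i, h (x i))) :
    (∀ i : Fin n, Essential f i) ∧ arityGap f = 2 :=
  stmt_13_general A hn h g hh hg f hf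
end

section
/- Let A and B be nonempty sets, let f : A^n → A be an operation with ess f ≥ 2, let γ : B → A be a surjective map, and let φ : A → B be an injective map. Define g : B^n → B by g(x_1, …, x_n) = φ(f(γ(x_1), γ(x_2), …, γ(x_n))). Then ess g = ess f and the arity gap of g equals the arity gap of f. -/
private lemma comp_update {A B : Type*} {n : ℕ} (γ : B → A) (x : Fin n → B)
    (i : Fin n) (b : B) :
    (fun k => γ (Function.update x i b k)) = Function.update (fun k => γ (x k)) i (γ b) := by
  funext k
  exact Function.apply_update (fun _ => γ) x i b k

private lemma ess_transfer {A B : Type*} {n : ℕ} (γ : B → A) (hγ : Function.Surjective γ)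
    (φ : A → B) (hφ : Function.Injective φ) (h : (Fin n → A) → A) (i : Fin n) :
    Essential (fun x => φ (h (fun k => γ (x k)))) i ↔ Essential h i := by
  constructor
  · rintro ⟨a, b, hab⟩
    refine ⟨fun k => γ (a k), γ b, fun H => hab ?_⟩
    show φ _ = φ _
    rw [comp_update]
    exact congrArg φ H
  · rintro ⟨a, b, hab⟩
    obtain ⟨s, hs⟩ := hγ.hasRightInverse
    obtain ⟨b', rfl⟩ := hγ b
    refine ⟨fun k => s (a k), b', fun H => hab ?_⟩
    apply hφ
    simp only [] at H
    rw [comp_update] at H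
    simpa [hs _, funext fun k => hs (a k)] using H

private lemma essArity_transfer {A B : Type*} {n : ℕ} (γ : B → A) (hγ : Function.Surjective γ)
    (φ : A → B) (hφ : Function.Injective φ) (h : (Fin n → A) → A) :
    essArity (fun x => φ (h (fun k => γ (x k)))) = essArity h := by
  unfold essArity
  congr 1
  ext i
  exact ess_transfer γ hγ φ hφ h i

/-- Transferring an operation along a surjection `γ : B → A` and an injection
`φ : A → B` preserves the essential arity and the arity gap. -/
theorem stmt_14 (A B : Type*) [Nonempty A] [Nonempty B] {n : ℕ}
    (f : (Fin n → A) → A) (hf : 2 ≤ essArity f)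
    (γ : B → A) (hγ : Function.Surjective γ)
    (φ : A → B) (hφ : Function.Injective φ)
    (g : (Fin n → B) → B) (hg : ∀ x : Fin n → B, g x = φ (f (fun i => γ (x i)))) :
    essArity g = essArity f ∧ arityGap g = arityGap f := by
  have hgeq : g = fun x => φ (f (fun k => γ (x k))) := funext hg
  subst hgeq
  have hminor : ∀ i j : Fin n,
      idMinor (fun x => φ (f (fun k => γ (x k)))) i j
        = fun x => φ (idMinor f i j (fun k => γ (x k))) := by
    intro i j
    funext x
    simp only [idMinor]
    congr 1
    rw [comp_update]
  have hess := essArity_transfer γ hγ φ hφ f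
  refine ⟨hess, ?_⟩
  unfold arityGap
  rw [hess]
  congr 2
  ext m
  constructor
  · rintro ⟨i, j, hij, hi, hj, hm⟩
    exact ⟨i, j, hij, (ess_transfer γ hγ φ hφ f i).1 hi, (ess_transfer γ hγ φ hφ f j).1 hj,
      by rw [hm, hminor i j, essArity_transfer γ hγ φ hφ]⟩
  · rintro ⟨i, j, hij, hi, hj, hm⟩
    exact ⟨i, j, hij, (ess_transfer γ hγ φ hφ f i).2 hi, (ess_transfer γ hγ φ hφ f j).2 hj,
      by rw [hm, hminor i j, essArity_transfer γ hγ φ hφ]⟩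
end
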